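/- arXiv:2107.01961 — 8 statements merged into one kernel-verified Lean document; each statement's English description precedes it below -/
import Mathlib

section
/- If f : ℝ → ℝ is regulated, bounded, and satisfies the no-jam condition (whenever f(y-)·f(y+) = 0 or f(y-) > 0 > f(y+), one has f(y) = 0), then the zero set f⁻¹(0) = {x : f(x) = 0} is closed. -/
open Filter Topology

/-- If `f : ℝ → ℝ` is regulated, bounded, and satisfies the no-jam condition
(whenever `f(y-)·f(y+) = 0` or `f(y-) > 0 > f(y+)` one has `f(y) = 0`),
then the zero set `f⁻¹(0)` is closed. -/
theorem zero_set_closed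
    (f fl fr : ℝ → ℝ) (M : ℝ)
    (hbd : ∀ x : ℝ, |f x| ≤ M)
    (hl : ∀ x : ℝ, Tendsto f (𝓝[<] x) (𝓝 (fl x)))
    (hr : ∀ x : ℝ, Tendsto f (𝓝[>] x) (𝓝 (fr x)))
    (hnj : ∀ y : ℝ, (fl y * fr y = 0 ∨ (0 < fl y ∧ fr y < 0)) → f y = 0) :
    IsClosed {x : ℝ | f x = 0} := by
  set S : Set ℝ := {x : ℝ | f x = 0} with hS
  have hzero : Tendsto f (𝓟 S) (𝓝 0) :=
    tendsto_const_nhds.congr' (eventually_principal.mpr fun x hx => (hx : f x = 0).symm)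
  rw [isClosed_iff_clusterPt]
  intro y hy
  have hcover : (𝓝 y : Filter ℝ) = 𝓝[<] y ⊔ (pure y ⊔ 𝓝[>] y) := by
    have h1 : Set.Iio y ∪ ({y} ∪ Set.Ioi y) = Set.univ := by
      ext x
      rcases lt_trichotomy x y with h | h | h <;> simp [h]
    rw [← nhdsWithin_univ, ← h1, nhdsWithin_union, nhdsWithin_union,
      nhdsWithin_singleton]
  rw [ClusterPt, hcover, inf_sup_right, inf_sup_right, sup_neBot, sup_neBot] at hy
  rcases hy with hleft | hy
  · -- cluster from the left: fl y = 0
    have hne : (𝓝[<] y ⊓ 𝓟 S).NeBot := hleft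
    have h0 : fl y = 0 :=
      tendsto_nhds_unique ((hl y).mono_left inf_le_left)
        (hzero.mono_left inf_le_right)
    exact hnj y (Or.inl (by rw [h0, zero_mul]))
  rcases hy with hpure | hright
  · -- y itself is in S
    have hne : (pure y ⊓ 𝓟 S : Filter ℝ).NeBot := hpure
    rw [← principal_singleton, inf_principal, principal_neBot_iff] at hne
    obtain ⟨x, hx1, hx2⟩ := hne
    simp only [Set.mem_singleton_iff] at hx1
    exact hx1 ▸ hx2
  · -- cluster from the right: fr y = 0
    have hne : (𝓝[>] y ⊓ 𝓟 S).NeBot := hright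
    have h0 : fr y = 0 :=
      tendsto_nhds_unique ((hr y).mono_left inf_le_left)
        (hzero.mono_left inf_le_right)
    exact hnj y (Or.inl (by rw [h0, mul_zero]))
end

section
/- Let f : ℝ → ℝ be bounded and regulated and satisfy the no-jam condition. Then every Carathéodory solution x : [0,∞) → ℝ of ẋ = f(x) is monotone: it is either nondecreasing on [0,∞) or nonincreasing on [0,∞). -/
open Filter Topology MeasureTheory intervalIntegral

section Aux

lemma countable_of_punctured {S : Set ℝ} (h : ∀ y : ℝ, ∀ᶠ z in 𝓝[≠] y, z ∉ S) :
    S.Countable := by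
  have key : ∀ k : ℕ, (S ∩ Set.Icc (-(k:ℝ)) k).Finite := by
    intro k
    by_contra hinf
    rw [← Set.not_infinite, not_not] at hinf
    obtain ⟨y, -, hy⟩ := hinf.exists_accPt_of_subset_isCompact isCompact_Icc
      Set.inter_subset_right
    have hy' : AccPt y (𝓟 S) := hy.mono (principal_mono.2 Set.inter_subset_left)
    rw [accPt_iff_frequently] at hy'
    have := h y
    rw [eventually_nhdsWithin_iff] at this
    exact (hy'.and_eventually this).exists.elim (fun z hz => hz.2 hz.1.1 hz.1.2)
  have : S = ⋃ k : ℕ, S ∩ Set.Icc (-(k:ℝ)) k := by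
    ext z
    simp only [Set.mem_iUnion, Set.mem_inter_iff, Set.mem_Icc]
    constructor
    · intro hz
      obtain ⟨k, hk⟩ := exists_nat_ge |z|
      exact ⟨k, hz, neg_le_of_abs_le hk, le_of_abs_le hk⟩
    · rintro ⟨k, hk, -⟩; exact hk
  rw [this]
  exact Set.countable_iUnion fun k => (key k).countable

variable {f fl fr : ℝ → ℝ}

lemma fr_tendsto_right (hr : ∀ x : ℝ, Tendsto f (𝓝[>] x) (𝓝 (fr x))) (y : ℝ) :
    Tendsto fr (𝓝[>] y) (𝓝 (fr y)) := by
  rw [Metric.tendsto_nhdsWithin_nhds]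
  intro ε hε
  obtain ⟨δ, hδ, hδP⟩ := Metric.tendsto_nhdsWithin_nhds.1 (hr y) (ε/2) (by linarith)
  refine ⟨δ, hδ, ?_⟩
  intro z hz hzd
  have hz' : z < y + δ := by
    rw [Real.dist_eq, abs_lt] at hzd; linarith [hzd.1, hzd.2]
  have h1 : Tendsto (fun w => dist (f w) (fr y)) (𝓝[>] z) (𝓝 (dist (fr z) (fr y))) :=
    (hr z).dist tendsto_const_nhds
  have h2 : ∀ᶠ w in 𝓝[>] z, dist (f w) (fr y) ≤ ε/2 := by
    filter_upwards [Ioo_mem_nhdsGT hz'] with w hw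
    refine (hδP (Set.mem_Ioi.2 (lt_trans hz hw.1)) ?_).le
    rw [Real.dist_eq, abs_lt]
    constructor <;> [linarith [Set.mem_Ioi.1 hz, hw.1]; linarith [hw.2]]
  have := le_of_tendsto h1 h2
  linarith

lemma fr_tendsto_left (hl : ∀ x : ℝ, Tendsto f (𝓝[<] x) (𝓝 (fl x)))
    (hr : ∀ x : ℝ, Tendsto f (𝓝[>] x) (𝓝 (fr x))) (y : ℝ) :
    Tendsto fr (𝓝[<] y) (𝓝 (fl y)) := by
  rw [Metric.tendsto_nhdsWithin_nhds]
  intro ε hε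
  obtain ⟨δ, hδ, hδP⟩ := Metric.tendsto_nhdsWithin_nhds.1 (hl y) (ε/2) (by linarith)
  refine ⟨δ, hδ, ?_⟩
  intro z hz hzd
  have hz' : y - δ < z := by
    rw [Real.dist_eq, abs_lt] at hzd; linarith [hzd.1, hzd.2]
  have h1 : Tendsto (fun w => dist (f w) (fl y)) (𝓝[>] z) (𝓝 (dist (fr z) (fl y))) :=
    (hr z).dist tendsto_const_nhds
  have h2 : ∀ᶠ w in 𝓝[>] z, dist (f w) (fl y) ≤ ε/2 := by
    filter_upwards [Ioo_mem_nhdsGT (hz : z < y)] with w hw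
    refine (hδP (Set.mem_Iio.2 hw.2) ?_).le
    rw [Real.dist_eq, abs_lt]
    constructor <;> [linarith [hz', hw.1]; linarith [hw.2]]
  have := le_of_tendsto h1 h2
  linarith
lemma countable_ne (hl : ∀ x : ℝ, Tendsto f (𝓝[<] x) (𝓝 (fl x)))
    (hr : ∀ x : ℝ, Tendsto f (𝓝[>] x) (𝓝 (fr x))) :
    Set.Countable {y : ℝ | f y ≠ fr y} := by
  have : {y : ℝ | f y ≠ fr y} = ⋃ n : ℕ, {y : ℝ | 1/(n+1 : ℝ) ≤ |f y - fr y|} := by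
    ext z
    simp only [Set.mem_setOf_eq, Set.mem_iUnion]
    constructor
    · intro hz
      have h0 : 0 < |f z - fr z| := abs_pos.2 (sub_ne_zero.2 hz)
      obtain ⟨n, hn⟩ := exists_nat_one_div_lt h0
      exact ⟨n, hn.le⟩
    · rintro ⟨n, hn⟩
      intro hc
      rw [hc, sub_self, abs_zero] at hn
      have : (0:ℝ) < 1/(n+1 : ℝ) := by positivity
      linarith
  rw [this]
  refine Set.countable_iUnion fun n => countable_of_punctured fun y => ?_
  -- show eventually in punctured nbhd, |f z - fr z| < 1/(n+1)
  have hpos : (0:ℝ) < 1/(n+1 : ℝ) := by positivity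
  have hR : Tendsto (fun z => |f z - fr z|) (𝓝[>] y) (𝓝 0) := by
    have := ((hr y).sub (fr_tendsto_right hr y)).abs
    simpa using this
  have hL : Tendsto (fun z => |f z - fr z|) (𝓝[<] y) (𝓝 0) := by
    have := ((hl y).sub (fr_tendsto_left hl hr y)).abs
    simpa using this
  have hsup : Tendsto (fun z => |f z - fr z|) (𝓝[≠] y) (𝓝 0) := by
    rw [← nhdsLT_sup_nhdsGT y]
    exact Tendsto.sup_sup hL hR |>.mono_right (by simp)
  filter_upwards [Filter.Tendsto.eventually_lt_const hpos hsup] with z hz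
  simp only [Set.mem_setOf_eq, not_le]
  exact hz

lemma measurable_f (hl : ∀ x : ℝ, Tendsto f (𝓝[<] x) (𝓝 (fl x)))
    (hr : ∀ x : ℝ, Tendsto f (𝓝[>] x) (𝓝 (fr x))) : Measurable f := by
  have hfr : Measurable fr := by
    have key : ∀ z : ℝ, Tendsto (fun n : ℕ => fr ((⌊z * (n+1)⌋ + 1) / (n+1))) atTop (𝓝 (fr z)) := by
      intro z
      refine (fr_tendsto_right hr z).comp ?_
      rw [tendsto_nhdsWithin_iff]
      constructor
      · have h1 : Tendsto (fun n : ℕ => (1:ℝ)/(n+1)) atTop (𝓝 0) := tendsto_one_div_add_atTop_nhds_zero_nat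
        rw [Metric.tendsto_atTop]
        intro ε hε
        obtain ⟨N, hN⟩ := Metric.tendsto_atTop.1 h1 ε hε
        refine ⟨N, fun n hn => ?_⟩
        have hn1 : (0:ℝ) < n + 1 := by positivity
        have hfl : z * (n+1) < ⌊z * (n+1)⌋ + 1 := Int.lt_floor_add_one _
        have hfl2 : (⌊z * (n+1)⌋ : ℝ) ≤ z * (n+1) := Int.floor_le _
        have hd : |(⌊z * (n+1)⌋ + 1) / (n+1) - z| ≤ 1/(n+1) := by
          have e : ((⌊z * (n+1)⌋ : ℝ) + 1) / (n+1) - z = ((⌊z * (n+1)⌋ : ℝ) + 1 - z*(n+1))/(n+1) := by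
            field_simp
          rw [e, abs_div, abs_of_pos hn1]
          gcongr
          rw [abs_le]
          constructor <;> linarith
        have := hN n hn
        rw [Real.dist_eq] at *
        simp only [sub_zero] at this
        calc |(⌊z * (n+1)⌋ + 1) / (n+1) - z| ≤ 1/(n+1) := hd
          _ ≤ |1/((n:ℝ)+1)| := le_abs_self _
          _ < ε := this
      · refine Eventually.of_forall fun n => ?_
        have hn1 : (0:ℝ) < n + 1 := by positivity
        have hfl2 : z * (n+1) < ⌊z * (n+1)⌋ + 1 := Int.lt_floor_add_one _
        rw [Set.mem_Ioi, lt_div_iff₀ hn1]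
        linarith
    refine measurable_of_tendsto_metrizable (fun n => ?_) (tendsto_pi_nhds.2 key)
    exact (measurable_of_countable (fun k : ℤ => fr ((k + 1)/(n+1)))).comp
      (Int.measurable_floor.comp (measurable_id.mul_const _))
  exact hfr.measurable_of_countable_ne (by simpa [ne_comm] using countable_ne hl hr)
lemma basic (hf : Measurable f) (M : ℝ) (hbd : ∀ z : ℝ, |f z| ≤ M) (x : ℝ → ℝ)
    (hx : ∀ t : ℝ, 0 ≤ t → x t = x 0 + ∫ s in (0:ℝ)..t, f (x s)) :
    ∀ T : ℝ, 0 ≤ T → IntervalIntegrable (fun u => f (x u)) volume 0 T := by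
  by_contra hC
  push_neg at hC
  obtain ⟨T₀, hT₀, hT₀bad⟩ := hC
  set P : ℝ → Prop := fun T => IntervalIntegrable (fun u => f (x u)) volume 0 T with hP
  have Pmono : ∀ s t : ℝ, 0 ≤ s → s ≤ t → P t → P s := by
    intro s t hs hst h
    refine h.mono_set ?_
    rw [Set.uIcc_of_le hs, Set.uIcc_of_le (hs.trans hst)]
    exact Set.Icc_subset_Icc le_rfl hst
  set Bad : Set ℝ := {T | 0 ≤ T ∧ ¬ P T} with hBad
  have hne : Bad.Nonempty := ⟨T₀, hT₀, hT₀bad⟩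
  have hbdd : BddBelow Bad := ⟨0, fun T hT => hT.1⟩
  set b := sInf Bad with hb
  have hb0 : 0 ≤ b := le_csInf hne fun T hT => hT.1
  have hgood : ∀ t : ℝ, 0 ≤ t → t < b → P t := by
    intro t ht htb
    by_contra h
    exact absurd (csInf_le hbdd ⟨ht, h⟩) (not_le.2 htb)
  have hbadafter : ∀ t : ℝ, b < t → ¬ P t := by
    intro t htb hPt
    obtain ⟨T, hT, hTt⟩ := (csInf_lt_iff hbdd hne).1 htb
    exact hT.2 (Pmono T t hT.1 hTt.le hPt)
  have hconst : ∀ t : ℝ, b < t → x t = x 0 := by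
    intro t htb
    rw [hx t (hb0.trans htb.le), integral_undef (hbadafter t htb), add_zero]
  -- x is continuous on Ico 0 b
  have hxsub : ∀ s t : ℝ, 0 ≤ s → s ≤ t → P t → x t - x s = ∫ u in s..t, f (x u) := by
    intro s t hs hst hPt
    rw [hx t (hs.trans hst), hx s hs]
    have := integral_interval_sub_left hPt (Pmono s t hs hst hPt)
    linarith [this]
  have hcont : ContinuousOn x (Set.Ico 0 b) := by
    rcases le_or_gt b 0 with h|h
    · have : Set.Ico 0 b = ∅ := Set.Ico_eq_empty (by intro hh; linarith)
      rw [this]; exact continuousOn_empty _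
    have hM0 : 0 ≤ M := le_trans (abs_nonneg _) (hbd 0)
    have : LipschitzOnWith (Real.toNNReal M) x (Set.Ico 0 b) := by
      rw [lipschitzOnWith_iff_dist_le_mul]
      intro s hs t ht
      wlog hst : t ≤ s generalizing s t
      · rw [dist_comm (x s) (x t), dist_comm s t]
        exact this t ht s hs (le_of_not_ge hst)
      have key := hxsub t s ht.1 hst (hgood s hs.1 hs.2)
      have hbound : ‖∫ u in t..s, f (x u)‖ ≤ M * |s - t| := by
        apply intervalIntegral.norm_integral_le_of_norm_le_const
        intro u hu
        simpa using hbd (x u)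
      rw [Real.dist_eq, Real.dist_eq, Real.coe_toNNReal M hM0, key]
      simpa using hbound
    exact this.continuousOn
  -- f ∘ x is a.e. strongly measurable on Icc 0 (b+1)
  have hxm : AEMeasurable x (volume.restrict (Set.Ico 0 b)) :=
    hcont.aemeasurable measurableSet_Ico
  have h1 : AEMeasurable (fun u => f (x u)) (volume.restrict (Set.Ico 0 b)) :=
    hf.comp_aemeasurable hxm
  have h2 : AEMeasurable (fun u => f (x u)) (volume.restrict (Set.Ici b)) := by
    have hsub : {u : ℝ | ¬ f (x u) = f (x 0)} ⊆ Set.Iic b := by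
      intro u hu
      by_contra h
      exact hu (by rw [hconst u (not_le.1 h)])
    have hnull : (volume.restrict (Set.Ici b)) (Set.Iic b) = 0 := by
      rw [Measure.restrict_apply measurableSet_Iic]
      have he : Set.Iic b ∩ Set.Ici b = {b} := by
        ext u
        simp only [Set.mem_inter_iff, Set.mem_Iic, Set.mem_Ici, Set.mem_singleton_iff]
        constructor
        · exact fun h => le_antisymm h.1 h.2
        · rintro rfl; exact ⟨le_rfl, le_rfl⟩
      rw [he]
      exact Real.volume_singleton
    refine (aemeasurable_const (b := f (x 0))).congr ?_
    rw [Filter.EventuallyEq, ae_iff]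
    exact measure_mono_null (fun u hu => hsub (by simpa [eq_comm] using hu)) hnull
  have h3 : AEMeasurable (fun u => f (x u)) (volume.restrict (Set.Ico 0 b ∪ Set.Ici b)) :=
    aemeasurable_union_iff.2 ⟨h1, h2⟩
  have h4 : AEMeasurable (fun u => f (x u)) (volume.restrict (Set.Ioc 0 (b+1))) := by
    apply h3.mono_measure
    apply Measure.restrict_mono _ le_rfl
    intro u hu
    rcases lt_or_ge u b with h|h
    · exact Or.inl ⟨hu.1.le, h⟩
    · exact Or.inr h
  have hPb1 : P (b+1) := by
    show IntervalIntegrable (fun u => f (x u)) volume 0 (b+1)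
    rw [intervalIntegrable_iff, Set.uIoc_of_le (by linarith : (0:ℝ) ≤ b+1)]
    refine ⟨h4.aestronglyMeasurable, ?_⟩
    apply HasFiniteIntegral.restrict_of_bounded (C := M)
      (by simp [Real.volume_Ioc] : volume (Set.Ioc 0 (b+1)) < ⊤)
    exact ae_of_all _ fun u => (Real.norm_eq_abs _) ▸ hbd (x u)
  exact hbadafter (b+1) (by linarith) hPb1
lemma crossing {g : ℝ → ℝ} {p q u v : ℝ} (hpq : p ≤ q) (hg : ContinuousOn g (Set.Icc p q))
    (hu : g p ≤ u) (huv : u < v) (hv : v ≤ g q) :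
    ∃ a b : ℝ, p ≤ a ∧ a < b ∧ b ≤ q ∧ g a = u ∧ g b = v ∧
      ∀ s ∈ Set.Ioo a b, g s ∈ Set.Ioo u v := by
  -- first hitting time of v
  set Sv : Set ℝ := {t | t ∈ Set.Icc p q ∧ g t = v} with hSv
  have hSvne : Sv.Nonempty := by
    obtain ⟨t, ht, hgt⟩ := intermediate_value_Icc hpq hg ⟨hu.trans huv.le, hv⟩
    exact ⟨t, ht, hgt⟩
  have hSvcl : IsClosed Sv :=
    hg.preimage_isClosed_of_isClosed isClosed_Icc isClosed_singleton
  have hSvbdd : BddBelow Sv := ⟨p, fun t ht => ht.1.1⟩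
  set b := sInf Sv with hbdef
  have hbmem : b ∈ Sv := hSvcl.csInf_mem hSvne hSvbdd
  have hbq : b ≤ q := hbmem.1.2
  have hpb : p ≤ b := hbmem.1.1
  have hgb : g b = v := hbmem.2
  have hlt : ∀ t, p ≤ t → t < b → g t < v := by
    intro t ht htb
    by_contra hge
    push_neg at hge
    obtain ⟨w, hw, hgw⟩ := intermediate_value_Icc ht
      (hg.mono (Set.Icc_subset_Icc le_rfl (htb.le.trans hbq))) ⟨hu.trans huv.le, hge⟩
    have : b ≤ w := csInf_le hSvbdd ⟨⟨hw.1, (hw.2.trans htb.le).trans hbq⟩, hgw⟩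
    linarith [hw.2]
  -- last hitting time of u before b
  set Su : Set ℝ := {t | t ∈ Set.Icc p b ∧ g t = u} with hSu
  have hSune : Su.Nonempty := by
    obtain ⟨t, ht, hgt⟩ := intermediate_value_Icc hpb
      (hg.mono (Set.Icc_subset_Icc le_rfl hbq)) ⟨hu, by rw [hgb]; exact huv.le⟩
    exact ⟨t, ht, hgt⟩
  have hSucl : IsClosed Su :=
    (hg.mono (Set.Icc_subset_Icc le_rfl hbq)).preimage_isClosed_of_isClosed
      isClosed_Icc isClosed_singleton
  have hSubdd : BddAbove Su := ⟨b, fun t ht => ht.1.2⟩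
  set a := sSup Su with hadef
  have hamem : a ∈ Su := hSucl.csSup_mem hSune hSubdd
  have hga : g a = u := hamem.2
  have hpa : p ≤ a := hamem.1.1
  have hab : a < b := lt_of_le_of_ne hamem.1.2 (fun h => by rw [h, hgb] at hga; linarith)
  refine ⟨a, b, hpa, hab, hbq, hga, hgb, fun s hs => ?_⟩
  constructor
  · -- u < g s
    by_contra hle
    push_neg at hle
    obtain ⟨w, hw, hgw⟩ := intermediate_value_Icc hs.2.le
      (hg.mono (Set.Icc_subset_Icc (hpa.trans hs.1.le) hbq)) ⟨hle, by rw [hgb]; exact huv.le⟩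
    have : w ≤ a := le_csSup hSubdd ⟨⟨(hpa.trans hs.1.le).trans hw.1, hw.2⟩, hgw⟩
    linarith [hw.1, hs.1]
  · -- g s < v
    exact hlt s (hpa.trans hs.1.le) hs.2

lemma int_ub {f x : ℝ → ℝ} {a b c : ℝ} (hab : a ≤ b)
    (hint : IntervalIntegrable (fun u => f (x u)) volume a b)
    (hxsub : x b - x a = ∫ u in a..b, f (x u))
    (hc : ∀ s ∈ Set.Ioo a b, f (x s) ≤ c) :
    x b - x a ≤ c * (b - a) := by
  rw [hxsub]
  have hae : (fun u => f (x u)) ≤ᵐ[volume.restrict (Set.Icc a b)] (fun _ => c) := by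
    rw [EventuallyLE, ae_restrict_iff' measurableSet_Icc, ae_iff]
    refine measure_mono_null (fun u hu => ?_) (Set.Finite.measure_zero
      ((Set.finite_singleton b).insert a) volume)
    simp only [Set.mem_setOf_eq, not_forall] at hu
    obtain ⟨hu1, hu2⟩ := hu
    rcases eq_or_lt_of_le hu1.1 with h|h
    · exact Set.mem_insert_iff.2 (Or.inl h.symm)
    rcases eq_or_lt_of_le hu1.2 with h'|h'
    · exact Set.mem_insert_iff.2 (Or.inr (by simp [h']))
    exact absurd (hc u ⟨h, h'⟩) hu2
  have h := integral_mono_ae_restrict hab hint (_root_.intervalIntegrable_const (c := c)) hae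
  rw [intervalIntegral.integral_const, smul_eq_mul] at h
  linarith
lemma int_lb {f x : ℝ → ℝ} {a b c : ℝ} (hab : a ≤ b)
    (hint : IntervalIntegrable (fun u => f (x u)) volume a b)
    (hxsub : x b - x a = ∫ u in a..b, f (x u))
    (hc : ∀ s ∈ Set.Ioo a b, c ≤ f (x s)) :
    c * (b - a) ≤ x b - x a := by
  rw [hxsub]
  have hae : (fun _ : ℝ => c) ≤ᵐ[volume.restrict (Set.Icc a b)] (fun u => f (x u)) := by
    rw [EventuallyLE, ae_restrict_iff' measurableSet_Icc, ae_iff]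
    refine measure_mono_null (fun u hu => ?_) (Set.Finite.measure_zero
      ((Set.finite_singleton b).insert a) volume)
    simp only [Set.mem_setOf_eq, not_forall] at hu
    obtain ⟨hu1, hu2⟩ := hu
    rcases eq_or_lt_of_le hu1.1 with h|h
    · exact Set.mem_insert_iff.2 (Or.inl h.symm)
    rcases eq_or_lt_of_le hu1.2 with h'|h'
    · exact Set.mem_insert_iff.2 (Or.inr (by simp [h']))
    exact absurd (hc u ⟨h, h'⟩) hu2
  have h := integral_mono_ae_restrict hab (_root_.intervalIntegrable_const (c := c)) hint hae
  rw [intervalIntegral.integral_const, smul_eq_mul] at h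
  linarith

lemma no_hill (f fl fr : ℝ → ℝ)
    (hl : ∀ y : ℝ, Tendsto f (𝓝[<] y) (𝓝 (fl y)))
    (hnj : ∀ y : ℝ, (fl y * fr y = 0 ∨ (0 < fl y ∧ fr y < 0)) → f y = 0)
    (x : ℝ → ℝ)
    (hcont : ContinuousOn x (Set.Ici 0))
    (hint : ∀ s t : ℝ, 0 ≤ s → s ≤ t → IntervalIntegrable (fun u => f (x u)) volume s t)
    (hxsub : ∀ s t : ℝ, 0 ≤ s → s ≤ t → x t - x s = ∫ u in s..t, f (x u))
    (p q r : ℝ) (h0p : 0 ≤ p) (hpq : p < q) (hqr : q < r)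
    (hxp : x p < x q) (hxr : x r < x q) : False := by
  have h0q : 0 ≤ q := h0p.trans hpq.le
  set w := max (x p) (x r) with hw
  have hwq : w < x q := max_lt hxp hxr
  have hcpq : ContinuousOn x (Set.Icc p q) :=
    hcont.mono (fun t ht => h0p.trans ht.1)
  have hcqr : ContinuousOn x (Set.Icc q r) :=
    hcont.mono (fun t ht => h0q.trans ht.1)
  have hfzero : ∀ y ∈ Set.Ioo w (x q), f y = 0 := by
    intro y hy
    have hge : 0 ≤ fl y := by
      by_contra hneg
      push_neg at hneg
      have hev : ∀ᶠ z in 𝓝[<] y, f z < fl y / 2 :=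
        (hl y).eventually_lt_const (by linarith)
      obtain ⟨l, hl', hsub⟩ := mem_nhdsLT_iff_exists_Ioo_subset.1 hev
      set u := max l w with hu
      have huy : u < y := max_lt hl' hy.1
      set u2 := (u + y)/2 with hu2
      have hu2y : u2 < y := by rw [hu2]; linarith
      have huu2 : u < u2 := by rw [hu2]; linarith
      obtain ⟨a, b, hpa, hab, hbq, hxa, hxb, hmid⟩ :=
        crossing hpq.le hcpq
          (show x p ≤ u2 from ((le_max_left _ _).trans (le_max_right l w)).trans huu2.le)
          hu2y hy.2.le
      have ha0 : 0 ≤ a := h0p.trans hpa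
      have hbound : ∀ s ∈ Set.Ioo a b, f (x s) ≤ fl y / 2 := by
        intro s hs
        have := hmid s hs
        exact (hsub ⟨lt_trans ((le_max_left l w).trans_lt huu2) this.1 |>.trans_le le_rfl |>.trans_le le_rfl, this.2⟩).le
      have hkey := int_ub hab.le (hint a b ha0 hab.le) (hxsub a b ha0 hab.le) hbound
      rw [hxa, hxb] at hkey
      nlinarith [sub_pos.2 hab]
    have hle : fl y ≤ 0 := by
      by_contra hpos
      push_neg at hpos
      have hev : ∀ᶠ z in 𝓝[<] y, fl y / 2 < f z :=
        (hl y).eventually_const_lt (by linarith)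
      obtain ⟨l, hl', hsub⟩ := mem_nhdsLT_iff_exists_Ioo_subset.1 hev
      set u := max l w with hu
      have huy : u < y := max_lt hl' hy.1
      set u2 := (u + y)/2 with hu2
      have hu2y : u2 < y := by rw [hu2]; linarith
      have huu2 : u < u2 := by rw [hu2]; linarith
      obtain ⟨a, b, hqa, hab, hbr, hxa, hxb, hmid⟩ :=
        crossing (g := fun t => -x t) hqr.le hcqr.neg
          (show -x q ≤ -y from neg_le_neg hy.2.le)
          (show -y < -u2 from neg_lt_neg hu2y)
          (show -u2 ≤ -x r from neg_le_neg (((le_max_right (x p) (x r)).trans (le_max_right l w)).trans huu2.le))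
      have ha0 : 0 ≤ a := h0q.trans hqa
      have hxa' : x a = y := by have := neg_inj.1 hxa; linarith [this]
      have hxb' : x b = u2 := by
        have : -x b = -u2 := hxb
        linarith [this]
      have hbound : ∀ s ∈ Set.Ioo a b, fl y / 2 ≤ f (x s) := by
        intro s hs
        have h2 := hmid s hs
        have hxs1 : u2 < x s := by have := h2.2; simp only [Set.mem_Ioo] at h2; linarith [h2.2]
        have hxs2 : x s < y := by simp only [Set.mem_Ioo] at h2; linarith [h2.1]
        exact (hsub ⟨lt_trans ((le_max_left l w).trans_lt huu2) hxs1, hxs2⟩).le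
      have hkey := int_lb hab.le (hint a b ha0 hab.le) (hxsub a b ha0 hab.le) hbound
      rw [hxa', hxb'] at hkey
      nlinarith [sub_pos.2 hab]
    have hfl0 : fl y = 0 := le_antisymm hle hge
    exact hnj y (Or.inl (by rw [hfl0, zero_mul]))
  -- final contradiction
  set u2 := w + (x q - w)/3 with hu2
  set v2 := w + 2*(x q - w)/3 with hv2
  have h1 : w < u2 := by rw [hu2]; linarith
  have h2 : u2 < v2 := by rw [hu2, hv2]; linarith
  have h3 : v2 < x q := by rw [hv2]; linarith
  obtain ⟨a, b, hpa, hab, hbq, hxa, hxb, hmid⟩ :=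
    crossing hpq.le hcpq (show x p ≤ u2 from (le_max_left _ _).trans h1.le) h2 h3.le
  have ha0 : 0 ≤ a := h0p.trans hpa
  have hbound : ∀ s ∈ Set.Ioo a b, f (x s) ≤ 0 := by
    intro s hs
    have h4 := hmid s hs
    exact (hfzero (x s) ⟨h1.trans h4.1, h4.2.trans h3⟩).le
  have hkey := int_ub hab.le (hint a b ha0 hab.le) (hxsub a b ha0 hab.le) hbound
  rw [hxa, hxb, zero_mul] at hkey
  linarith
lemma hill_or_valley {g : ℝ → ℝ} (hg : ContinuousOn g (Set.Ici 0))
    (hnm : ¬ MonotoneOn g (Set.Ici 0)) (hna : ¬ AntitoneOn g (Set.Ici 0)) :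
    ∃ p q r : ℝ, 0 ≤ p ∧ p < q ∧ q < r ∧
      ((g p < g q ∧ g r < g q) ∨ (g q < g p ∧ g q < g r)) := by
  rw [MonotoneOn] at hnm
  rw [AntitoneOn] at hna
  push_neg at hnm hna
  obtain ⟨a, (ha : 0 ≤ a), b, (hb : 0 ≤ b), hab, hgab⟩ := hnm
  obtain ⟨c, (hc : 0 ≤ c), d, (hd : 0 ≤ d), hcd, hgcd⟩ := hna
  have hab' : a < b := lt_of_le_of_ne hab (fun h => by rw [h] at hgab; exact lt_irrefl _ hgab)
  have hcd' : c < d := lt_of_le_of_ne hcd (fun h => by rw [h] at hgcd; exact lt_irrefl _ hgcd)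
  set m := min a c with hm
  set Mx := max b d with hMx
  have hm0 : 0 ≤ m := le_min ha hc
  have hmM : ∀ t u : ℝ, m ≤ t → t ≤ u → u ≤ Mx → ContinuousOn g (Set.Icc t u) :=
    fun t u h1 h2 h3 => hg.mono (fun s hs => Set.mem_Ici.2 ((hm0.trans h1).trans hs.1))
  rcases le_or_gt (g m) (g Mx) with hcase | hcase
  · -- use decreasing pair a < b on [m, b]
    have hmb : m ≤ b := (min_le_left a c).trans hab
    obtain ⟨q, hq, hqmax⟩ := isCompact_Icc.exists_isMaxOn (Set.nonempty_Icc.2 hmb)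
      (hmM m b le_rfl hmb (le_max_left b d))
    have hqa : g a ≤ g q := hqmax ⟨min_le_left a c, hab⟩
    have hqb : g b < g q := lt_of_lt_of_le hgab hqa
    rcases lt_or_ge (g m) (g q) with hsub | hsub
    · -- hill (m, q, b)
      have hmq : m < q := lt_of_le_of_ne hq.1 (fun h => by rw [← h] at hsub; exact lt_irrefl _ hsub)
      have hqb' : q < b := lt_of_le_of_ne hq.2 (fun h => by rw [h] at hqb; exact lt_irrefl _ hqb)
      exact ⟨m, q, b, hm0, hmq, hqb', Or.inl ⟨hsub, hqb⟩⟩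
    · -- g q ≤ g m : valley (m, b, Mx)
      have hgm_b : g b < g m := lt_of_lt_of_le hqb hsub
      have hbM : g b < g Mx := lt_of_lt_of_le hgm_b hcase
      have hmb' : m < b := lt_of_le_of_ne hmb (fun h => by rw [h] at hgm_b; exact lt_irrefl _ hgm_b)
      have hbMx : b < Mx := by
        rcases lt_or_ge b Mx with h | h
        · exact h
        · exfalso
          have : Mx = b := le_antisymm h (le_max_left b d)
          rw [this] at hbM
          exact lt_irrefl _ hbM
      exact ⟨m, b, Mx, hm0, hmb', hbMx, Or.inr ⟨hgm_b, hbM⟩⟩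
  · -- g Mx < g m : use increasing pair c < d on [c, Mx]
    have hcM : c ≤ Mx := hcd.trans (le_max_right b d)
    obtain ⟨q, hq, hqmax⟩ := isCompact_Icc.exists_isMaxOn (Set.nonempty_Icc.2 hcM)
      (hmM c Mx (min_le_right a c) hcM le_rfl)
    have hqd : g d ≤ g q := hqmax ⟨hcd, le_max_right b d⟩
    have hqc : g c < g q := lt_of_lt_of_le hgcd hqd
    rcases lt_or_ge (g Mx) (g q) with hsub | hsub
    · -- hill (c, q, Mx)
      have hcq : c < q := lt_of_le_of_ne hq.1 (fun h => by rw [← h] at hqc; exact lt_irrefl _ hqc)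
      have hqM : q < Mx := lt_of_le_of_ne hq.2 (fun h => by rw [h] at hsub; exact lt_irrefl _ hsub)
      exact ⟨c, q, Mx, hc, hcq, hqM, Or.inl ⟨hqc, hsub⟩⟩
    · -- g q ≤ g Mx : valley (m, c, d)
      have hgc_m : g c < g m := by
        have : g c < g Mx := lt_of_lt_of_le hqc hsub
        exact this.trans hcase
      have hmc : m < c := by
        rcases lt_or_ge m c with h | h
        · exact h
        · exfalso
          have : m = c := le_antisymm (min_le_right a c) h
          rw [this] at hgc_m
          exact lt_irrefl _ hgc_m
      exact ⟨m, c, d, hm0, hmc, hcd', Or.inr ⟨hgc_m, hgcd⟩⟩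
end Aux

/-- Under the assumptions (A1)-(A2), every Carathéodory solution of `ẋ = f(x)` on `[0,∞)`
is monotone: either nondecreasing on `[0,∞)` or nonincreasing on `[0,∞)`. -/
theorem caratheodory_solution_monotone
    (f fl fr : ℝ → ℝ) (M : ℝ)
    (hbd : ∀ x : ℝ, |f x| ≤ M)
    (hl : ∀ x : ℝ, Tendsto f (𝓝[<] x) (𝓝 (fl x)))
    (hr : ∀ x : ℝ, Tendsto f (𝓝[>] x) (𝓝 (fr x)))
    (hnj : ∀ y : ℝ, (fl y * fr y = 0 ∨ (0 < fl y ∧ fr y < 0)) → f y = 0)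
    (x : ℝ → ℝ)
    (hx : ∀ t : ℝ, 0 ≤ t → x t = x 0 + ∫ s in (0:ℝ)..t, f (x s)) :
    MonotoneOn x (Set.Ici (0:ℝ)) ∨ AntitoneOn x (Set.Ici (0:ℝ)) := by
  have hfmeas : Measurable f := measurable_f hl hr
  have hP : ∀ T : ℝ, 0 ≤ T → IntervalIntegrable (fun u => f (x u)) volume 0 T :=
    basic hfmeas M hbd x hx
  have hint : ∀ s t : ℝ, 0 ≤ s → s ≤ t →
      IntervalIntegrable (fun u => f (x u)) volume s t := by
    intro s t hs hst
    refine (hP t (hs.trans hst)).mono_set ?_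
    rw [Set.uIcc_of_le hst, Set.uIcc_of_le (hs.trans hst)]
    exact Set.Icc_subset_Icc hs le_rfl
  have hxsub : ∀ s t : ℝ, 0 ≤ s → s ≤ t → x t - x s = ∫ u in s..t, f (x u) := by
    intro s t hs hst
    rw [hx t (hs.trans hst), hx s hs]
    have := integral_interval_sub_left (hP t (hs.trans hst)) (hP s hs)
    linarith [this]
  have hcont : ContinuousOn x (Set.Ici (0:ℝ)) := by
    have hM0 : 0 ≤ M := le_trans (abs_nonneg _) (hbd 0)
    have hlip : LipschitzOnWith (Real.toNNReal M) x (Set.Ici (0:ℝ)) := by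
      rw [lipschitzOnWith_iff_dist_le_mul]
      intro s hs t ht
      wlog hst : t ≤ s generalizing s t
      · rw [dist_comm (x s) (x t), dist_comm s t]
        exact this t ht s hs (le_of_not_ge hst)
      have key := hxsub t s ht hst
      have hbound : ‖∫ u in t..s, f (x u)‖ ≤ M * |s - t| := by
        apply intervalIntegral.norm_integral_le_of_norm_le_const
        intro u hu
        simpa using hbd (x u)
      rw [Real.dist_eq, Real.dist_eq, Real.coe_toNNReal M hM0, key]
      simpa using hbound
    exact hlip.continuousOn
  by_contra hcon
  push_neg at hcon
  obtain ⟨hnm, hna⟩ := hcon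
  obtain ⟨p, q, r, h0p, hpq, hqr, hcase⟩ := hill_or_valley hcont hnm hna
  rcases hcase with ⟨h1, h2⟩ | ⟨h1, h2⟩
  · exact no_hill f fl fr hl hnj x hcont hint hxsub p q r h0p hpq hqr h1 h2
  · -- valley : apply no_hill to the reflected system
    have hnegmap : ∀ y : ℝ, Tendsto (fun z : ℝ => -z) (𝓝[<] y) (𝓝[>] (-y)) := by
      intro y
      rw [tendsto_nhdsWithin_iff]
      constructor
      · exact (continuous_neg.tendsto y).mono_left nhdsWithin_le_nhds
      · filter_upwards [eventually_mem_nhdsWithin] with z hz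
        simpa using neg_lt_neg (Set.mem_Iio.1 hz)
    have hl' : ∀ y : ℝ, Tendsto (fun z => -f (-z)) (𝓝[<] y) (𝓝 (-fr (-y))) :=
      fun y => ((hr (-y)).comp (hnegmap y)).neg
    have hnj' : ∀ y : ℝ,
        ((-fr (-y)) * (-fl (-y)) = 0 ∨ (0 < -fr (-y) ∧ -fl (-y) < 0)) → -f (-y) = 0 := by
      intro y hy
      rw [neg_eq_zero]
      apply hnj (-y)
      rcases hy with h | h
      · exact Or.inl (by nlinarith [h])
      · exact Or.inr ⟨by linarith [h.2], by linarith [h.1]⟩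
    have hfeq : ∀ u : ℝ, (fun z => -f (-z)) ((fun t => -x t) u) = -(f (x u)) := by
      intro u; simp
    have hint' : ∀ s t : ℝ, 0 ≤ s → s ≤ t →
        IntervalIntegrable (fun u => (fun z => -f (-z)) ((fun t => -x t) u)) volume s t := by
      intro s t hs hst
      have : (fun u => (fun z => -f (-z)) ((fun t => -x t) u)) = fun u => -(f (x u)) := by
        funext u; exact hfeq u
      rw [this]
      exact (hint s t hs hst).neg
    have hxsub' : ∀ s t : ℝ, 0 ≤ s → s ≤ t →
        (fun t => -x t) t - (fun t => -x t) s
          = ∫ u in s..t, (fun z => -f (-z)) ((fun t => -x t) u) := by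
      intro s t hs hst
      have he : (fun u => (fun z => -f (-z)) ((fun t => -x t) u)) = fun u => -(f (x u)) := by
        funext u; exact hfeq u
      show -x t - -x s = ∫ u in s..t, (fun z => -f (-z)) ((fun t => -x t) u)
      rw [he, intervalIntegral.integral_neg]
      have := hxsub s t hs hst
      linarith [this]
    exact no_hill (fun z => -f (-z)) (fun z => -fr (-z)) (fun z => -fl (-z)) hl' hnj'
      (fun t => -x t) hcont.neg hint' hxsub' p q r h0p hpq hqr
      (neg_lt_neg h1) (neg_lt_neg h2)
end

section
/- Let f : ℝ → ℝ be bounded and regulated and satisfy the no-jam condition. If xₙ : [0,τ] → ℝ is a sequence of Carathéodory solutions of ẋ = f(x) converging pointwise to a function x : [0,τ] → ℝ, then x is also a Carathéodory solution of ẋ = f(x). -/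
open Filter Topology MeasureTheory Set Metric


lemma countable_of_right_isolated {S : Set ℝ}
    (h : ∀ y ∈ S, ∃ b, y < b ∧ ∀ z ∈ Set.Ioo y b, z ∉ S) : S.Countable := by
  have hsub : S ⊆ ⋃ q : ℚ, {y | y ∈ S ∧ y < (q : ℝ) ∧ ∀ z ∈ Set.Ioo y (q : ℝ), z ∉ S} := by
    intro y hy
    obtain ⟨b, hb, hb2⟩ := h y hy
    obtain ⟨q, hq1, hq2⟩ := exists_rat_btwn hb
    exact Set.mem_iUnion.2 ⟨q, hy, hq1, fun z hz => hb2 z ⟨hz.1, hz.2.trans hq2⟩⟩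
  refine Set.Countable.mono hsub (Set.countable_iUnion fun q => ?_)
  apply Set.Subsingleton.countable
  intro a ha b hb
  by_contra hab
  rcases lt_or_gt_of_ne hab with h1 | h1
  · exact ha.2.2 b ⟨h1, hb.2.1⟩ hb.1
  · exact hb.2.2 a ⟨h1, ha.2.1⟩ ha.1

lemma levelset_deriv_countable (u : ℝ → ℝ) (y : ℝ) :
    {s : ℝ | u s = y ∧ ∃ d, d ≠ 0 ∧ HasDerivAt u d s}.Countable := by
  apply countable_of_right_isolated
  rintro s ⟨hs, d, hd0, hd⟩
  have h1 : ∀ᶠ t in 𝓝 s, ‖u t - u s - (t - s) • d‖ ≤ |d| / 2 * ‖t - s‖ := by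
    have := (hasDerivAt_iff_isLittleO.1 hd).def (by positivity : (0:ℝ) < |d| / 2)
    simpa using this
  obtain ⟨ε, hε, hball⟩ := Metric.eventually_nhds_iff.1 h1
  refine ⟨s + ε, by linarith, fun z hz hzS => ?_⟩
  have hdist : dist z s < ε := by
    rw [Real.dist_eq, abs_of_pos (by linarith [hz.1] : (0:ℝ) < z - s)]
    linarith [hz.2]
  have h2 := hball hdist
  have hzs : 0 < z - s := by linarith [hz.1]
  have huz : u z = y := hzS.1
  rw [huz, hs] at h2
  simp only [smul_eq_mul, Real.norm_eq_abs, sub_self, zero_sub, abs_neg] at h2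
  have : |(z - s) * d| ≤ |d| / 2 * |z - s| := h2
  rw [abs_mul] at this
  have hd' : 0 < |d| := abs_pos.2 hd0
  nlinarith [abs_of_pos hzs]

lemma lipschitz_ftc {g : ℝ → ℝ} {L : NNReal} (hg : LipschitzWith L g) (a b : ℝ) (hab : a ≤ b) :
    IntegrableOn (deriv g) (Set.Ioc a b) volume ∧
      ∫ t in Set.Ioc a b, deriv g t = g b - g a := by
  have hgle : ∀ s t : ℝ, |g s - g t| ≤ L * |s - t| := by
    intro s t
    have := hg.dist_le_mul s t
    rwa [Real.dist_eq, Real.dist_eq] at this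
  set h : ℝ → ℝ := fun t => g t + L * t with hh
  have hmono : Monotone h := by
    intro s t hst
    have := abs_le.1 (hgle s t)
    simp only [hh]
    have : g s - g t ≤ L * |s - t| := (abs_le.1 (hgle s t)).2
    rw [abs_of_nonpos (by linarith : s - t ≤ 0)] at this
    simp only [neg_sub] at this
    nlinarith
  set k : ℝ → ℝ := fun t => L * t - g t with hk
  have hkmono : Monotone k := by
    intro s t hst
    have : g t - g s ≤ L * |t - s| := (abs_le.1 (hgle t s)).2
    rw [abs_of_nonneg (by linarith : (0:ℝ) ≤ t - s)] at this
    simp only [hk]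
    nlinarith
  have hcont : Continuous h := (hg.continuous).add (continuous_const.mul continuous_id)
  have hkcont : Continuous k := (continuous_const.mul continuous_id).sub hg.continuous
  have hSF : ∀ x, hmono.stieltjesFunction x = h x := fun x =>
    (hmono.stieltjesFunction_eq x).trans
      (rightLim_eq_of_tendsto
        ((hcont.tendsto x).mono_left nhdsWithin_le_nhds))
  have hSFk : ∀ x, hkmono.stieltjesFunction x = k x := fun x =>
    (hkmono.stieltjesFunction_eq x).trans
      (rightLim_eq_of_tendsto
        ((hkcont.tendsto x).mono_left nhdsWithin_le_nhds))
  set μ := hmono.stieltjesFunction.measure with hμ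
  set ν := hkmono.stieltjesFunction.measure with hν
  have hμIoc : ∀ a' b' : ℝ, a' ≤ b' → μ (Set.Ioc a' b') = ENNReal.ofReal (h b' - h a') := by
    intro a' b' _
    rw [hμ, StieltjesFunction.measure_Ioc, hSF, hSF]
  haveI hlf : IsLocallyFiniteMeasure (μ + ν) := by
    constructor
    intro x
    obtain ⟨s, hs, h1⟩ := (inferInstance : IsLocallyFiniteMeasure μ).finiteAtNhds x
    obtain ⟨t, ht, h2⟩ := (inferInstance : IsLocallyFiniteMeasure ν).finiteAtNhds x
    refine ⟨s ∩ t, inter_mem hs ht, ?_⟩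
    refine lt_of_le_of_lt ?_ (ENNReal.add_lt_top.2 ⟨h1, h2⟩)
    rw [Measure.add_apply]
    exact add_le_add (measure_mono inter_subset_left) (measure_mono inter_subset_right)
  have hsum : μ + ν = (ENNReal.ofReal (2 * L)) • volume := by
    refine MeasureTheory.Measure.ext_of_Ioc _ _ (fun a' b' hab' => ?_)
    have h1 : (0:ℝ) ≤ h b' - h a' := sub_nonneg.2 (hmono hab'.le)
    have h2 : (0:ℝ) ≤ k b' - k a' := sub_nonneg.2 (hkmono hab'.le)
    rw [Measure.add_apply, hμIoc a' b' hab'.le, hν, StieltjesFunction.measure_Ioc, hSFk, hSFk,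
      ← ENNReal.ofReal_add h1 h2, Measure.smul_apply, Real.volume_Ioc, smul_eq_mul,
      ← ENNReal.ofReal_mul (by positivity)]
    congr 1
    simp only [hh, hk]
    ring
  have hac : μ ≪ volume := by
    refine Measure.absolutelyContinuous_of_le_smul (μ' := μ) (c := ENNReal.ofReal (2 * L)) ?_
    rw [← hsum]
    exact Measure.le_add_right le_rfl
  set ρ : ℝ → ℝ := fun x => (μ.rnDeriv volume x).toReal with hρ
  have hlint : ∀ a' b' : ℝ, a' ≤ b' → ∫⁻ x in Set.Ioc a' b', μ.rnDeriv volume x = μ (Set.Ioc a' b') := by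
    intro a' b' hab'
    rw [← withDensity_apply _ measurableSet_Ioc, Measure.withDensity_rnDeriv_eq _ _ hac]
  have hint1 : IntegrableOn ρ (Set.Ioc a b) volume := by
    apply integrable_toReal_of_lintegral_ne_top
      ((Measure.measurable_rnDeriv _ _).aemeasurable.restrict)
    rw [hlint a b hab]
    exact measure_Ioc_lt_top.ne
  have hfin : ∀ᵐ x ∂(volume.restrict (Set.Ioc a b)), μ.rnDeriv volume x < ⊤ :=
    ae_restrict_of_ae (Measure.rnDeriv_lt_top μ volume)
  have hρint : ∫ x in Set.Ioc a b, ρ x = (μ (Set.Ioc a b)).toReal := by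
    rw [hρ, MeasureTheory.integral_toReal ((Measure.measurable_rnDeriv _ _).aemeasurable.restrict)
      hfin, hlint a b hab]
  have hgeq : (fun t => h t - (L : ℝ) * t) = g := by
    funext t; simp [hh]
  have haeg : ∀ᵐ x ∂volume, deriv g x = ρ x - L := by
    filter_upwards [hmono.ae_hasDerivAt] with x hx
    have h2 : HasDerivAt g ((μ.rnDeriv volume x).toReal - (L : ℝ)) x := by
      have h3 := hx.sub ((hasDerivAt_id x).const_mul (L : ℝ))
      simp only [mul_one] at h3
      rw [← hgeq]
      exact h3
    rw [h2.deriv, hρ]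
  have haeg' : deriv g =ᵐ[volume.restrict (Set.Ioc a b)] fun x => ρ x - L :=
    ae_restrict_of_ae haeg
  have hint2 : IntegrableOn (fun x => ρ x - (L : ℝ)) (Set.Ioc a b) volume :=
    hint1.sub (integrableOn_const measure_Ioc_lt_top.ne)
  have hintg : IntegrableOn (deriv g) (Set.Ioc a b) volume := hint2.congr haeg'.symm
  refine ⟨hintg, ?_⟩
  rw [integral_congr_ae haeg']
  rw [integral_sub hint1 (integrableOn_const measure_Ioc_lt_top.ne)]
  rw [hρint, setIntegral_const, hμIoc a b hab, ENNReal.toReal_ofReal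
    (sub_nonneg.2 (hmono hab)), measureReal_def, Real.volume_Ioc, ENNReal.toReal_ofReal (sub_nonneg.2 hab)]
  simp only [hh, smul_eq_mul]
  ring


lemma bdd_meas_integrableOn {G : ℝ → ℝ} (hG : Measurable G) {M : ℝ} (hb : ∀ z, |G z| ≤ M)
    {s : Set ℝ} (hs : volume s ≠ ⊤) : IntegrableOn G s volume := by
  refine Integrable.mono' (integrableOn_const hs)
    hG.aestronglyMeasurable.restrict (ae_of_all _ fun z => by simpa using hb z)

lemma bdd_meas_locallyIntegrable {G : ℝ → ℝ} (hG : Measurable G) {M : ℝ} (hb : ∀ z, |G z| ≤ M) :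
    LocallyIntegrable G volume := fun x =>
  ⟨ball x 1, ball_mem_nhds x one_pos, bdd_meas_integrableOn hG hb measure_ball_lt_top.ne⟩

lemma bdd_meas_intervalIntegrable {G : ℝ → ℝ} (hG : Measurable G) {M : ℝ} (hb : ∀ z, |G z| ≤ M)
    (a b : ℝ) : IntervalIntegrable G volume a b := by
  rw [intervalIntegrable_iff]
  exact bdd_meas_integrableOn hG hb measure_Ioc_lt_top.ne

lemma primitive_hasDerivAt {G : ℝ → ℝ} (hG : Measurable G) {M : ℝ} (hb : ∀ z, |G z| ≤ M) :
    ∀ᵐ s : ℝ, HasDerivAt (fun t => ∫ u in (0:ℝ)..t, G u) (G s) s := by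
  filter_upwards [IsUnifLocDoublingMeasure.ae_tendsto_average_norm_sub volume
    (bdd_meas_locallyIntegrable hG hb) 1] with x hx
  rw [hasDerivAt_iff_tendsto_slope_zero]
  have hδ : Tendsto (fun h : ℝ => |h| / 2) (𝓝[≠] 0) (𝓝[>] 0) := by
    rw [tendsto_nhdsWithin_iff]
    constructor
    · have : Tendsto (fun h : ℝ => |h| / 2) (𝓝 0) (𝓝 (|(0:ℝ)| / 2)) :=
        (continuous_abs.div_const 2).tendsto 0
      simpa using this.mono_left nhdsWithin_le_nhds
    · filter_upwards [self_mem_nhdsWithin] with h hh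
      have : h ≠ 0 := hh
      simp only [Set.mem_Ioi]
      positivity
  have hball : ∀ᶠ h : ℝ in 𝓝[≠] 0, x ∈ closedBall (x + h / 2) (1 * (|h| / 2)) := by
    refine Eventually.of_forall fun h => ?_
    rw [mem_closedBall, Real.dist_eq, one_mul]
    rw [show x - (x + h / 2) = -(h / 2) by ring, abs_neg, abs_div]
    simp
  have key := hx (fun h : ℝ => x + h / 2) (fun h : ℝ => |h| / 2) hδ hball
  refine tendsto_sub_nhds_zero_iff.1 ?_
  apply squeeze_zero_norm' _ key
  filter_upwards [self_mem_nhdsWithin] with h (hh : h ≠ 0)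
  have habs : (0:ℝ) < |h| := abs_pos.2 hh
  have hII : ∀ a b : ℝ, IntervalIntegrable G volume a b := bdd_meas_intervalIntegrable hG hb
  have hsub : (∫ u in (0:ℝ)..(x + h), G u) - ∫ u in (0:ℝ)..x, G u = ∫ u in x..(x + h), G u :=
    intervalIntegral.integral_interval_sub_left (hII 0 (x + h)) (hII 0 x)
  have hconst : ∫ u in x..(x + h), G x = h * G x := by
    simp [intervalIntegral.integral_const]
  have hIsub : Set.uIoc x (x + h) ⊆ closedBall (x + h / 2) (|h| / 2) := by
    intro u hu
    rw [mem_closedBall, Real.dist_eq]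
    rcases le_total x (x + h) with hc | hc
    · rw [Set.uIoc_of_le hc] at hu
      rw [abs_le]
      have h0 : 0 ≤ h := by linarith
      rw [abs_of_nonneg h0]
      constructor <;> [linarith [hu.1]; linarith [hu.2]]
    · rw [Set.uIoc_of_ge hc] at hu
      rw [abs_le]
      have h0 : h ≤ 0 := by linarith
      rw [abs_of_nonpos h0]
      constructor <;> [linarith [hu.1]; linarith [hu.2]]
  have hvol : (volume (closedBall (x + h / 2) (|h| / 2))).toReal = |h| := by
    rw [Real.volume_closedBall, ENNReal.toReal_ofReal (by positivity)]
    ring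
  have hintball : IntegrableOn (fun u => ‖G u - G x‖) (closedBall (x + h / 2) (|h| / 2)) volume := by
    have h1 : IntegrableOn (fun u => G u - G x) (closedBall (x + h / 2) (|h| / 2)) volume :=
      (bdd_meas_integrableOn hG hb measure_closedBall_lt_top.ne).sub
        (integrableOn_const measure_closedBall_lt_top.ne)
    exact h1.norm
  have step1 : ‖h⁻¹ • ((∫ u in (0:ℝ)..(x + h), G u) - ∫ u in (0:ℝ)..x, G u) - G x‖
      ≤ ⨍ y in closedBall (x + h / 2) (|h| / 2), ‖G y - G x‖ := by
    rw [hsub]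
    have : h⁻¹ • (∫ u in x..(x + h), G u) - G x = h⁻¹ • (∫ u in x..(x + h), (G u - G x)) := by
      rw [intervalIntegral.integral_sub (hII x (x + h))
        (intervalIntegrable_const), hconst, smul_eq_mul, smul_eq_mul]
      field_simp
    have hb1 : ‖∫ u in x..(x + h), (G u - G x)‖ ≤ ∫ u in Set.uIoc x (x + h), ‖G u - G x‖ :=
      intervalIntegral.norm_integral_le_integral_norm_uIoc
    have hb2 : ∫ u in Set.uIoc x (x + h), ‖G u - G x‖
        ≤ ∫ u in closedBall (x + h / 2) (|h| / 2), ‖G u - G x‖ :=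
      setIntegral_mono_set hintball (ae_of_all _ fun u => norm_nonneg _)
        (HasSubset.Subset.eventuallyLE hIsub)
    rw [this, smul_eq_mul, norm_mul, average_eq, measureReal_def, Measure.restrict_apply_univ, hvol]
    rw [smul_eq_mul, Real.norm_eq_abs, abs_inv]
    exact mul_le_mul_of_nonneg_left (hb1.trans hb2) (by positivity)
  exact step1

lemma clamp_lipschitz {u : ℝ → ℝ} {L : NNReal} (hu : LipschitzWith L u) (y m : ℝ) :
    LipschitzWith L (fun t => min (max (u t) y) m) := by
  have h1 : ∀ z w : ℝ, |min (max (u z) y) m - min (max (u w) y) m| ≤ |u z - u w| := by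
    intro z w
    calc |min (max (u z) y) m - min (max (u w) y) m|
        ≤ max |max (u z) y - max (u w) y| |m - m| := abs_min_sub_min_le_max _ _ _ _
      _ ≤ |u z - u w| := by
          rw [sub_self, abs_zero]
          refine max_le ?_ (abs_nonneg _)
          calc |max (u z) y - max (u w) y| ≤ max |u z - u w| |y - y| :=
                abs_max_sub_max_le_max _ _ _ _
            _ ≤ |u z - u w| := by rw [sub_self, abs_zero]; exact max_le le_rfl (abs_nonneg _)
  refine LipschitzWith.of_dist_le_mul fun z w => ?_
  rw [Real.dist_eq, Real.dist_eq]
  exact (h1 z w).trans (by simpa [Real.dist_eq] using hu.dist_le_mul z w)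

lemma hasDerivAt_zero_of_abs_le {u H : ℝ → ℝ} {s : ℝ} (hu : HasDerivAt u 0 s)
    (hle : ∀ z, |H z - H s| ≤ |u z - u s|) : HasDerivAt H 0 s := by
  rw [hasDerivAt_iff_isLittleO]
  have h1 : (fun z => u z - u s) =o[𝓝 s] fun z => z - s := by
    simpa using hasDerivAt_iff_isLittleO.1 hu
  have h2 : (fun z => H z - H s) =O[𝓝 s] fun z => u z - u s :=
    Asymptotics.isBigO_of_le _ fun z => by simpa [Real.norm_eq_abs] using hle z
  simpa using h2.trans_isLittleO h1

lemma strip_time {u : ℝ → ℝ} {L : NNReal} (hu : LipschitzWith L u) {τ y δ c : ℝ}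
    (hδ : 0 < δ) (hc : 0 < c)
    (hd : ∀ᵐ s : ℝ, s ∈ Set.Ioo 0 τ → u s ∈ Set.Ioo y (y + δ) →
      ∃ d, HasDerivAt u d s ∧ c ≤ d) :
    volume {s | s ∈ Set.Ioo 0 τ ∧ u s ∈ Set.Ioo y (y + δ)} ≤ ENNReal.ofReal (δ / c) := by
  rcases le_or_gt τ 0 with hτ | hτ
  · have : {s | s ∈ Set.Ioo 0 τ ∧ u s ∈ Set.Ioo y (y + δ)} = ∅ := by
      ext s; simp only [Set.mem_setOf_eq, Set.mem_empty_iff_false, iff_false]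
      rintro ⟨⟨h1, h2⟩, -⟩; linarith
    rw [this, measure_empty]
    exact zero_le
  set H : ℝ → ℝ := fun t => min (max (u t) y) (y + δ) with hH
  have hHlip : LipschitzWith L H := clamp_lipschitz hu y (y + δ)
  have hHub : ∀ t, H t ≤ y + δ := fun t => min_le_right _ _
  have hHlb : ∀ t, y ≤ H t := fun t => le_min (le_max_right _ _) (by linarith)
  have hcu : Continuous u := hu.continuous
  have hclamp1lip : ∀ z w : ℝ, |H z - H w| ≤ |u z - u w| := by
    intro z w
    calc |min (max (u z) y) (y + δ) - min (max (u w) y) (y + δ)|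
        ≤ max |max (u z) y - max (u w) y| |(y+δ) - (y+δ)| := abs_min_sub_min_le_max _ _ _ _
      _ ≤ |u z - u w| := by
          rw [sub_self, abs_zero]
          refine max_le ?_ (abs_nonneg _)
          calc |max (u z) y - max (u w) y| ≤ max |u z - u w| |y - y| :=
                abs_max_sub_max_le_max _ _ _ _
            _ ≤ |u z - u w| := by rw [sub_self, abs_zero]; exact max_le le_rfl (abs_nonneg _)
  have key : ∀ᵐ s : ℝ, s ∈ Set.Ioo 0 τ →
      0 ≤ deriv H s ∧ (u s ∈ Set.Ioo y (y + δ) → c ≤ deriv H s) := by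
    filter_upwards [hu.ae_differentiableAt,
      (levelset_deriv_countable u y).ae_notMem volume,
      (levelset_deriv_countable u (y + δ)).ae_notMem volume, hd] with s hdiff h1 h2 hds hsIoo
    have hzero_of_level : ∀ v : ℝ, u s = v →
        s ∉ {s : ℝ | u s = v ∧ ∃ d, d ≠ 0 ∧ HasDerivAt u d s} → HasDerivAt H 0 s := by
      intro v hv hnot
      have hu0 : HasDerivAt u 0 s := by
        have hder := hdiff.hasDerivAt
        by_cases hd0 : deriv u s = 0
        · rwa [hd0] at hder
        · exact absurd ⟨hv, deriv u s, hd0, hder⟩ hnot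
      exact hasDerivAt_zero_of_abs_le hu0 (fun z => hclamp1lip z s)
    rcases lt_trichotomy (u s) y with hlt | heq | hgt
    · -- below the strip : H locally constant y
      have hev : H =ᶠ[𝓝 s] fun _ => y := by
        filter_upwards [hcu.continuousAt.preimage_mem_nhds (Iio_mem_nhds hlt)] with z hz
        have : u z < y := hz
        simp only [hH]
        rw [max_eq_right this.le, min_eq_left (by linarith)]
      have hder : HasDerivAt H 0 s := (hasDerivAt_const s y).congr_of_eventuallyEq hev
      rw [hder.deriv]
      exact ⟨le_rfl, fun hin => absurd hin.1 (by linarith)⟩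
    · -- at level y
      have hder := hzero_of_level y heq h1
      rw [hder.deriv]
      exact ⟨le_rfl, fun hin => absurd hin.1 (by rw [heq]; exact lt_irrefl y)⟩
    · rcases lt_trichotomy (u s) (y + δ) with hlt2 | heq2 | hgt2
      · -- inside the strip
        have hin : u s ∈ Set.Ioo y (y + δ) := ⟨hgt, hlt2⟩
        obtain ⟨d, hd1, hd2⟩ := hds hsIoo hin
        have hev : H =ᶠ[𝓝 s] u := by
          filter_upwards [hcu.continuousAt.preimage_mem_nhds (Ioo_mem_nhds hgt hlt2)] with z hz
          have hz' : u z ∈ Set.Ioo y (y + δ) := hz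
          simp only [hH]
          rw [max_eq_left hz'.1.le, min_eq_left hz'.2.le]
        have hder : HasDerivAt H d s := hd1.congr_of_eventuallyEq hev
        rw [hder.deriv]
        exact ⟨by linarith, fun _ => hd2⟩
      · -- at level y + δ
        have hder := hzero_of_level (y + δ) heq2 h2
        rw [hder.deriv]
        exact ⟨le_rfl, fun hin => absurd hin.2 (by rw [heq2]; exact lt_irrefl _)⟩
      · -- above the strip
        have hev : H =ᶠ[𝓝 s] fun _ => y + δ := by
          filter_upwards [hcu.continuousAt.preimage_mem_nhds (Ioi_mem_nhds hgt2)] with z hz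
          have : y + δ < u z := hz
          simp only [hH]
          rw [max_eq_left (by linarith), min_eq_right (by linarith)]
        have hder : HasDerivAt H 0 s := (hasDerivAt_const s (y + δ)).congr_of_eventuallyEq hev
        rw [hder.deriv]
        exact ⟨le_rfl, fun hin => absurd hin.2 (by linarith)⟩
  obtain ⟨hint, heq⟩ := lipschitz_ftc hHlip 0 τ hτ.le
  set S := {s | s ∈ Set.Ioo 0 τ ∧ u s ∈ Set.Ioo y (y + δ)} with hS
  have hSsub : S ⊆ Set.Ioo 0 τ := fun s hs => hs.1
  have hSmeas : MeasurableSet S := by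
    have : S = Set.Ioo 0 τ ∩ u ⁻¹' (Set.Ioo y (y + δ)) := rfl
    rw [this]
    exact measurableSet_Ioo.inter (measurableSet_Ioo.preimage hcu.measurable)
  have hint' : IntegrableOn (deriv H) (Set.Ioo 0 τ) volume :=
    hint.mono_set Set.Ioo_subset_Ioc_self
  have heq' : ∫ t in Set.Ioo 0 τ, deriv H t = H τ - H 0 := by
    rw [setIntegral_congr_set Ioo_ae_eq_Ioc, heq]
  have h0 : 0 ≤ᵐ[volume.restrict (Set.Ioo 0 τ)] deriv H := by
    rw [EventuallyLE, ae_restrict_iff' measurableSet_Ioo]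
    filter_upwards [key] with s hs hsIoo
    exact (hs hsIoo).1
  have hSfin : volume S < ⊤ :=
    lt_of_le_of_lt (measure_mono hSsub) (by rw [Real.volume_Ioo]; exact ENNReal.ofReal_lt_top)
  have hconst_int : IntegrableOn (fun _ => c) S volume :=
    integrableOn_const hSfin.ne
  have hstep1 : c * (volume S).toReal ≤ ∫ s in S, deriv H s := by
    have h3 : ∫ s in S, (fun _ => c) s ≤ ∫ s in S, deriv H s := by
      refine setIntegral_mono_ae_restrict hconst_int (hint'.mono_set hSsub) ?_
      rw [EventuallyLE, ae_restrict_iff' hSmeas]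
      filter_upwards [key] with s hs hsS
      exact (hs hsS.1).2 hsS.2
    rwa [setIntegral_const, smul_eq_mul, mul_comm] at h3
  have hstep2 : ∫ s in S, deriv H s ≤ ∫ s in Set.Ioo 0 τ, deriv H s :=
    setIntegral_mono_set hint' h0 (HasSubset.Subset.eventuallyLE hSsub)
  have hstep3 : H τ - H 0 ≤ δ := by
    have := hHub τ; have := hHlb 0; linarith
  have hfinal : (volume S).toReal ≤ δ / c := by
    rw [le_div_iff₀ hc, mul_comm]
    calc c * (volume S).toReal ≤ ∫ s in S, deriv H s := hstep1
      _ ≤ ∫ s in Set.Ioo 0 τ, deriv H s := hstep2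
      _ = H τ - H 0 := heq'
      _ ≤ δ := hstep3
  rwa [← ENNReal.le_ofReal_iff_toReal_le hSfin.ne (by positivity)] at hfinal

lemma countable_ne_rightlim (f fr : ℝ → ℝ) (hr : ∀ x, Tendsto f (𝓝[>] x) (𝓝 (fr x))) :
    {y : ℝ | f y ≠ fr y}.Countable := by
  have hsub : {y : ℝ | f y ≠ fr y} ⊆ ⋃ n : ℕ, {y | 1/(n+1 : ℝ) ≤ |f y - fr y|} := by
    intro y hy
    have h : 0 < |f y - fr y| := abs_pos.2 (sub_ne_zero.2 hy)
    obtain ⟨n, hn⟩ := exists_nat_one_div_lt h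
    exact Set.mem_iUnion.2 ⟨n, hn.le⟩
  refine Set.Countable.mono hsub (Set.countable_iUnion fun n => ?_)
  apply countable_of_right_isolated
  intro y hy
  set ε : ℝ := 1/(3*(n+1) : ℝ) with hε'
  have hε : 0 < ε := by positivity
  have hev : {z | |f z - fr y| < ε} ∈ 𝓝[>] y := by
    have h2 : Metric.ball (fr y) ε ∈ 𝓝 (fr y) := Metric.ball_mem_nhds _ hε
    have := (hr y) h2
    refine mem_of_superset this ?_
    intro z hz
    simpa [Real.dist_eq] using hz
  obtain ⟨b, hb, hball⟩ := mem_nhdsGT_iff_exists_Ioo_subset.1 hev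
  refine ⟨b, hb, fun z hz hzS => ?_⟩
  have h1 : |f z - fr y| < ε := hball hz
  have h2 : |fr z - fr y| ≤ ε := by
    have htend : Tendsto (fun w => |f w - fr y|) (𝓝[>] z) (𝓝 (|fr z - fr y|)) :=
      ((hr z).sub_const _).abs
    refine le_of_tendsto htend ?_
    have hmem : Set.Ioo z b ∈ 𝓝[>] z := Ioo_mem_nhdsGT hz.2
    filter_upwards [hmem] with w hw
    exact (hball ⟨hz.1.trans hw.1, hw.2⟩).le
  have h3 : |f z - fr z| < 1/(n+1 : ℝ) := by
    calc |f z - fr z| ≤ |f z - fr y| + |fr z - fr y| := by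
          rw [show f z - fr z = (f z - fr y) - (fr z - fr y) by ring]
          exact abs_sub _ _
      _ < ε + ε := by linarith
      _ ≤ 1/(n+1 : ℝ) := by
          rw [hε']
          rw [← add_div, div_le_div_iff₀ (by positivity) (by positivity)]
          ring_nf
          nlinarith [Nat.cast_nonneg (α := ℝ) n]
  exact absurd hzS (not_le.2 h3)

lemma neg_tendsto_Ioi_Iio (x : ℝ) : Tendsto (fun y : ℝ => -y) (𝓝[>] x) (𝓝[<] (-x)) := by
  rw [tendsto_nhdsWithin_iff]
  constructor
  · exact (continuous_neg.tendsto x).mono_left nhdsWithin_le_nhds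
  · filter_upwards [self_mem_nhdsWithin] with z (hz : x < z)
    simpa using hz

lemma countable_ne_leftlim (f fl : ℝ → ℝ) (hl : ∀ x, Tendsto f (𝓝[<] x) (𝓝 (fl x))) :
    {y : ℝ | f y ≠ fl y}.Countable := by
  have h1 : {y : ℝ | (f ∘ Neg.neg) y ≠ (fl ∘ Neg.neg) y}.Countable :=
    countable_ne_rightlim (f ∘ Neg.neg) (fl ∘ Neg.neg)
      (fun x => (hl (-x)).comp (neg_tendsto_Ioi_Iio x))
  have h2 : {y : ℝ | f y ≠ fl y} = Neg.neg '' {y : ℝ | (f ∘ Neg.neg) y ≠ (fl ∘ Neg.neg) y} := by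
    ext y
    simp only [Set.mem_image, Set.mem_setOf_eq, Function.comp_apply]
    constructor
    · intro hy; exact ⟨-y, by simpa using hy, by simp⟩
    · rintro ⟨z, hz, rfl⟩; simpa using hz
  rw [h2]
  exact h1.image _

lemma rightlim_measurable (f fr : ℝ → ℝ) (hr : ∀ x, Tendsto f (𝓝[>] x) (𝓝 (fr x))) :
    Measurable fr := by
  set g : ℕ → ℝ → ℝ := fun n y => f ((⌈((n:ℝ)+1) * y⌉ : ℝ)/((n:ℝ)+1) + 1/((n:ℝ)+1)) with hg
  have hgmeas : ∀ n, Measurable (g n) := by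
    intro n
    have h1 : Measurable (fun y : ℝ => (⌈((n:ℝ)+1) * y⌉ : ℤ)) :=
      Int.measurable_ceil.comp (measurable_const_mul _)
    exact (measurable_of_countable
      (fun k : ℤ => f ((k : ℝ)/((n:ℝ)+1) + 1/((n:ℝ)+1)))).comp h1
  apply measurable_of_tendsto_metrizable hgmeas
  rw [tendsto_pi_nhds]
  intro y
  have hpos : ∀ n : ℕ, (0:ℝ) < (n:ℝ)+1 := fun n => by positivity
  have harg : Tendsto (fun n : ℕ => (⌈((n:ℝ)+1) * y⌉ : ℝ)/((n:ℝ)+1) + 1/((n:ℝ)+1))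
      atTop (𝓝[>] y) := by
    rw [tendsto_nhdsWithin_iff]
    constructor
    · have hub : ∀ n : ℕ, (⌈((n:ℝ)+1) * y⌉ : ℝ)/((n:ℝ)+1) + 1/((n:ℝ)+1) ≤ y + 2/((n:ℝ)+1) := by
        intro n
        have h2 : (⌈((n:ℝ)+1) * y⌉ : ℝ) < ((n:ℝ)+1) * y + 1 := Int.ceil_lt_add_one _
        rw [← add_div, show y + 2/((n:ℝ)+1) = (((n:ℝ)+1) * y + 2)/((n:ℝ)+1) by
          field_simp, div_le_div_iff₀ (hpos n) (hpos n)]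
        nlinarith [hpos n]
      have hlb : ∀ n : ℕ, y ≤ (⌈((n:ℝ)+1) * y⌉ : ℝ)/((n:ℝ)+1) + 1/((n:ℝ)+1) := by
        intro n
        have h2 : ((n:ℝ)+1) * y ≤ (⌈((n:ℝ)+1) * y⌉ : ℝ) := Int.le_ceil _
        rw [← add_div, le_div_iff₀ (hpos n)]
        nlinarith [hpos n]
      have htwo : Tendsto (fun n : ℕ => y + 2/((n:ℝ)+1)) atTop (𝓝 (y + 0)) := by
        apply Tendsto.const_add
        have := tendsto_one_div_add_atTop_nhds_zero_nat (𝕜 := ℝ)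
        have h2 : Tendsto (fun n : ℕ => 2 * (1/((n:ℝ)+1))) atTop (𝓝 (2 * 0)) :=
          this.const_mul 2
        simpa [mul_one_div, div_eq_mul_inv] using h2
      rw [show 𝓝 y = 𝓝 (y + 0) by rw [add_zero]]
      exact tendsto_of_tendsto_of_tendsto_of_le_of_le (tendsto_const_nhds.const_add y |>.congr
        (by simp)) htwo hlb hub
    · refine Eventually.of_forall fun n => ?_
      have h2 : ((n:ℝ)+1) * y ≤ (⌈((n:ℝ)+1) * y⌉ : ℝ) := Int.le_ceil _
      have : y < (⌈((n:ℝ)+1) * y⌉ : ℝ)/((n:ℝ)+1) + 1/((n:ℝ)+1) := by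
        rw [← add_div, lt_div_iff₀ (hpos n)]
        nlinarith [hpos n]
      exact this
  exact (hr y).comp harg

lemma f_measurable (f fl fr : ℝ → ℝ)
    (hl : ∀ x, Tendsto f (𝓝[<] x) (𝓝 (fl x)))
    (hr : ∀ x, Tendsto f (𝓝[>] x) (𝓝 (fr x))) : Measurable f := by
  refine Measurable.measurable_of_countable_ne (rightlim_measurable f fr hr) ?_
  have h1 := countable_ne_rightlim f fr hr
  refine h1.mono fun y hy => ?_
  exact fun h => hy h.symm


lemma sol_lipschitz {f : ℝ → ℝ} (hf : Measurable f) {M : ℝ} (hbd : ∀ z, |f z| ≤ M)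
    {τ : ℝ} (hτ : 0 ≤ τ) {φ : ℝ → ℝ}
    (hsol : ∀ t ∈ Set.Icc (0:ℝ) τ, φ t = φ 0 + ∫ s in (0:ℝ)..t, f (φ s)) :
    (∀ t ∈ Set.Icc (0:ℝ) τ, IntervalIntegrable (f ∘ φ) volume 0 t) ∧
      ∀ s ∈ Set.Icc (0:ℝ) τ, ∀ t ∈ Set.Icc (0:ℝ) τ, |φ t - φ s| ≤ M * |t - s| := by
  have hM : 0 ≤ M := le_trans (abs_nonneg _) (hbd 0)
  set g : ℝ → ℝ := f ∘ φ with hg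
  have hgbd : ∀ z, |g z| ≤ M := fun z => hbd _
  set F : ℝ → ℝ := fun t => ∫ s in (0:ℝ)..t, g s with hF
  set I : Set ℝ := {t | IntegrableOn g (Set.Ioc 0 t) volume} with hI
  have hIdown : ∀ t ∈ I, ∀ t', t' ≤ t → t' ∈ I := fun t ht t' htt' =>
    ht.mono_set (Set.Ioc_subset_Ioc_right htt')
  have hIord : I.OrdConnected := ⟨fun x _ y hy => fun z hz => hIdown y hy z hz.2⟩
  have hImeas : MeasurableSet I := hIord.measurableSet
  have hF0 : ∀ t, t ∉ I → 0 ≤ t → F t = 0 := by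
    intro t ht h0
    show (∫ s in (0:ℝ)..t, g s) = 0
    rw [intervalIntegral.integral_of_le h0]
    exact integral_undef ht
  have hII : ∀ t ∈ I, 0 ≤ t → IntervalIntegrable g volume 0 t := by
    intro t ht h0
    rw [intervalIntegrable_iff_integrableOn_Ioc_of_le h0]
    exact ht
  have hFlip0 : ∀ s t, s ∈ I → t ∈ I → 0 ≤ s → s ≤ t → |F t - F s| ≤ M * |t - s| := by
    intro s t hs ht h0s hst
    have h1 : F t - F s = ∫ u in s..t, g u :=
      intervalIntegral.integral_interval_sub_left (hII t ht (h0s.trans hst)) (hII s hs h0s)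
    rw [h1, ← Real.norm_eq_abs]
    have := intervalIntegral.norm_integral_le_of_norm_le_const
      (f := g) (a := s) (b := t) (C := M) (fun x _ => by simpa [Real.norm_eq_abs] using hgbd x)
    simpa [Real.norm_eq_abs, abs_sub_comm t s] using this
  have hFlip : ∀ s t, s ∈ I ∩ Set.Ici 0 → t ∈ I ∩ Set.Ici 0 → |F t - F s| ≤ M * |t - s| := by
    intro s t hs ht
    rcases le_total s t with h | h
    · exact hFlip0 s t hs.1 ht.1 hs.2 h
    · rw [abs_sub_comm (F t), abs_sub_comm t]
      exact hFlip0 t s ht.1 hs.1 ht.2 h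
  have hFcont : ContinuousOn F (I ∩ Set.Ici 0) := by
    have : LipschitzOnWith (Real.toNNReal M) F (I ∩ Set.Ici 0) := by
      refine LipschitzOnWith.of_dist_le_mul fun x hx y hy => ?_
      rw [Real.dist_eq, Real.dist_eq, Real.coe_toNNReal M hM]
      exact hFlip y x hy hx
    exact this.continuousOn
  set A : Set ℝ := I ∩ Set.Icc 0 τ with hA
  set B : Set ℝ := Set.Icc 0 τ \ I with hB
  have hAmeas : MeasurableSet A := hImeas.inter measurableSet_Icc
  have hBmeas : MeasurableSet B := measurableSet_Icc.diff hImeas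
  have hFA : AEMeasurable F (volume.restrict A) :=
    (hFcont.mono (fun z hz => ⟨hz.1, hz.2.1⟩)).aemeasurable hAmeas
  have hFB : AEMeasurable F (volume.restrict B) := by
    refine aemeasurable_const (b := (0:ℝ)) |>.congr ?_
    rw [Filter.EventuallyEq, ae_restrict_iff' hBmeas]
    exact ae_of_all _ fun t ht => (hF0 t ht.2 ht.1.1).symm
  have hsplit : Set.Icc (0:ℝ) τ = A ∪ B := by
    rw [hA, hB]
    ext z
    simp only [Set.mem_union, Set.mem_inter_iff, Set.mem_diff]
    tauto
  have hFae : AEMeasurable F (volume.restrict (Set.Icc 0 τ)) := by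
    rw [hsplit, Measure.restrict_union (by
      rw [hA, hB]
      exact Set.disjoint_left.2 fun z hz hz2 => hz2.2 hz.1) hBmeas]
    exact hFA.add_measure hFB
  have hφae : AEMeasurable φ (volume.restrict (Set.Icc 0 τ)) := by
    refine (aemeasurable_const (b := φ 0) |>.add hFae).congr ?_
    rw [Filter.EventuallyEq, ae_restrict_iff' measurableSet_Icc]
    exact ae_of_all _ fun t ht => (hsol t ht).symm
  have hkey : ∀ t ∈ Set.Icc (0:ℝ) τ, IntegrableOn g (Set.Ioc 0 t) volume := by
    intro t ht
    have h1 : AEMeasurable φ (volume.restrict (Set.Ioc 0 t)) :=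
      hφae.mono_measure (Measure.restrict_mono (Set.Ioc_subset_Icc_self.trans
        (Set.Icc_subset_Icc_right ht.2)) le_rfl)
    have h2 : AEMeasurable g (volume.restrict (Set.Ioc 0 t)) := hf.comp_aemeasurable h1
    refine Integrable.mono' (integrableOn_const measure_Ioc_lt_top.ne)
      h2.aestronglyMeasurable (ae_of_all _ fun z => by simpa using hgbd z)
  have hIcc : ∀ t ∈ Set.Icc (0:ℝ) τ, t ∈ I := fun t ht => hkey t ht
  constructor
  · intro t ht
    exact hII t (hIcc t ht) ht.1
  · intro s hs t ht
    have h1 : φ t - φ s = F t - F s := by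
      have e1 : φ t = φ 0 + F t := hsol t ht
      have e2 : φ s = φ 0 + F s := hsol s hs
      rw [e1, e2]; ring
    rw [h1]
    exact hFlip s t ⟨hIcc s hs, hs.1⟩ ⟨hIcc t ht, ht.1⟩




lemma strip_time_signed {u : ℝ → ℝ} {L : NNReal} (hu : LipschitzWith L u) {τ a b c : ℝ}
    (hab : a < b) (hc : 0 < c)
    (hsign : (∀ᵐ s : ℝ, s ∈ Set.Ioo 0 τ → u s ∈ Set.Ioo a b → ∃ d, HasDerivAt u d s ∧ c ≤ d)
      ∨ (∀ᵐ s : ℝ, s ∈ Set.Ioo 0 τ → u s ∈ Set.Ioo a b → ∃ d, HasDerivAt u d s ∧ d ≤ -c)) :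
    volume {s | s ∈ Set.Ioo 0 τ ∧ u s ∈ Set.Ioo a b} ≤ ENNReal.ofReal ((b - a) / c) := by
  rcases hsign with hs | hs
  · have := strip_time hu (τ := τ) (y := a) (δ := b - a) (by linarith) hc ?_
    · convert this using 4 <;> rw [show a + (b - a) = b by ring]
    · convert hs using 5
      rw [show a + (b - a) = b by ring]
  · have hneg : LipschitzWith L (fun s => -u s) := LipschitzWith.of_dist_le_mul fun z w => by
      simpa [Real.dist_eq, abs_sub_comm, neg_sub_neg, abs_sub_comm (u w) (u z)]
        using hu.dist_le_mul z w
    have := strip_time hneg (τ := τ) (y := -b) (δ := b - a) (by linarith) hc ?_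
    · have hseteq : {s | s ∈ Set.Ioo 0 τ ∧ u s ∈ Set.Ioo a b}
          = {s | s ∈ Set.Ioo 0 τ ∧ (fun s => -u s) s ∈ Set.Ioo (-b) (-b + (b - a))} := by
        ext s
        simp only [Set.mem_setOf_eq, Set.mem_Ioo]
        constructor
        · rintro ⟨h1, h2, h3⟩; exact ⟨h1, by linarith, by linarith⟩
        · rintro ⟨h1, h2, h3⟩; exact ⟨h1, by linarith, by linarith⟩
      rw [hseteq]
      exact this
    · filter_upwards [hs] with s h1 h2 h3
      have h4 : u s ∈ Set.Ioo a b := by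
        simp only [Set.mem_Ioo] at h3 ⊢
        constructor <;> [linarith [h3.2]; linarith [h3.1]]
      obtain ⟨d, hd1, hd2⟩ := h1 h2 h4
      exact ⟨-d, hd1.neg, by linarith⟩

/-- Under the assumptions (A1)-(A2), the pointwise limit of a sequence of Carathéodory
solutions of `ẋ = f(x)` on `[0,τ]` is again a Carathéodory solution. -/
theorem caratheodory_solution_closed_under_pointwise_limits
    (f fl fr : ℝ → ℝ) (M : ℝ)
    (hbd : ∀ x : ℝ, |f x| ≤ M)
    (hl : ∀ x : ℝ, Tendsto f (𝓝[<] x) (𝓝 (fl x)))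
    (hr : ∀ x : ℝ, Tendsto f (𝓝[>] x) (𝓝 (fr x)))
    (hnj : ∀ y : ℝ, (fl y * fr y = 0 ∨ (0 < fl y ∧ fr y < 0)) → f y = 0)
    (τ : ℝ) (hτ : 0 ≤ τ)
    (xs : ℕ → ℝ → ℝ)
    (hsol : ∀ n : ℕ, ∀ t ∈ Set.Icc (0:ℝ) τ,
      xs n t = xs n 0 + ∫ s in (0:ℝ)..t, f (xs n s))
    (x : ℝ → ℝ)
    (hconv : ∀ t ∈ Set.Icc (0:ℝ) τ, Tendsto (fun n => xs n t) atTop (𝓝 (x t))) :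
    ∀ t ∈ Set.Icc (0:ℝ) τ, x t = x 0 + ∫ s in (0:ℝ)..t, f (x s) := by
  have hM : 0 ≤ M := le_trans (abs_nonneg _) (hbd 0)
  have hfm : Measurable f := f_measurable f fl fr hl hr
  -- the 1-Lipschitz projection onto [0, τ]
  set π : ℝ → ℝ := fun s => min (max s 0) τ with hπdef
  have hπlip : LipschitzWith 1 π := clamp_lipschitz LipschitzWith.id 0 τ
  have hπmem : ∀ s, π s ∈ Set.Icc 0 τ :=
    fun s => ⟨le_min (le_max_right _ _) hτ, min_le_right _ _⟩
  have hπid : ∀ s ∈ Set.Icc (0:ℝ) τ, π s = s := fun s hs => by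
    rw [hπdef]; simp only; rw [max_eq_left hs.1, min_eq_left hs.2]
  -- clamped approximating solutions
  set Φ : ℕ → ℝ → ℝ := fun n s => xs n (π s) with hΦdef
  have hsl : ∀ n, (∀ t ∈ Set.Icc (0:ℝ) τ, IntervalIntegrable (f ∘ xs n) volume 0 t) ∧
      ∀ s ∈ Set.Icc (0:ℝ) τ, ∀ t ∈ Set.Icc (0:ℝ) τ, |xs n t - xs n s| ≤ M * |t - s| :=
    fun n => sol_lipschitz hfm hbd hτ (hsol n)
  have hΦeq : ∀ n, ∀ s ∈ Set.Icc (0:ℝ) τ, Φ n s = xs n s := fun n s hs => by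
    rw [hΦdef]; simp only; rw [hπid s hs]
  have hΦlip : ∀ n, LipschitzWith M.toNNReal (Φ n) := by
    intro n
    refine LipschitzWith.of_dist_le_mul fun z w => ?_
    have h1 := (hsl n).2 (π w) (hπmem w) (π z) (hπmem z)
    have h2 := hπlip.dist_le_mul z w
    rw [Real.dist_eq, Real.dist_eq] at h2 ⊢
    rw [Real.coe_toNNReal M hM]
    simp only [NNReal.coe_one, one_mul] at h2
    calc |Φ n z - Φ n w| = |xs n (π z) - xs n (π w)| := rfl
      _ ≤ M * |π z - π w| := h1
      _ ≤ M * |z - w| := by nlinarith [abs_nonneg (π z - π w), abs_nonneg (z - w)]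
  have hΦcont : ∀ n, Continuous (Φ n) := fun n => (hΦlip n).continuous
  set G : ℕ → ℝ → ℝ := fun n s => f (Φ n s) with hGdef
  have hGmeas : ∀ n, Measurable (G n) := fun n => hfm.comp (hΦcont n).measurable
  have hGbd : ∀ n z, |G n z| ≤ M := fun n z => hbd _
  -- representation of Φ n as a primitive on [0, τ]
  have hrepr : ∀ n, ∀ t ∈ Set.Icc (0:ℝ) τ, Φ n t = xs n 0 + ∫ u in (0:ℝ)..t, G n u := by
    intro n t ht
    rw [hΦeq n t ht, hsol n t ht]
    congr 1
    apply intervalIntegral.integral_congr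
    intro u hu
    have hu' : u ∈ Set.Icc (0:ℝ) τ := by
      rw [Set.uIcc_of_le ht.1] at hu
      exact ⟨hu.1, hu.2.trans ht.2⟩
    rw [hGdef]; simp only
    rw [hΦeq n u hu']
  have hΦII : ∀ n (a b : ℝ), IntervalIntegrable (G n) volume a b :=
    fun n => bdd_meas_intervalIntegrable (hGmeas n) (hGbd n)
  -- a.e. differentiability of the approximations with the right derivative
  have hΦderiv : ∀ n, ∀ᵐ s : ℝ, s ∈ Set.Ioo 0 τ → HasDerivAt (Φ n) (f (Φ n s)) s := by
    intro n
    filter_upwards [primitive_hasDerivAt (hGmeas n) (hGbd n)] with s hs hsIoo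
    have hnb : Set.Icc (0:ℝ) τ ∈ 𝓝 s := Icc_mem_nhds hsIoo.1 hsIoo.2
    have hev : Φ n =ᶠ[𝓝 s] fun t => xs n 0 + ∫ u in (0:ℝ)..t, G n u := by
      filter_upwards [hnb] with z hz
      exact hrepr n z hz
    exact ((hs.const_add (xs n 0)).congr_of_eventuallyEq hev)
  -- the clamped limit function
  set X : ℝ → ℝ := fun s => x (π s) with hXdef
  have hXeq : ∀ s ∈ Set.Icc (0:ℝ) τ, X s = x s := fun s hs => by
    rw [hXdef]; simp only; rw [hπid s hs]
  have hXconv : ∀ s, Tendsto (fun n => Φ n s) atTop (𝓝 (X s)) :=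
    fun s => hconv (π s) (hπmem s)
  have hXlip : LipschitzWith M.toNNReal X := by
    refine LipschitzWith.of_dist_le_mul fun z w => ?_
    have h2 : dist (X z) (X w) ≤ M.toNNReal * dist z w := by
      have h3 : Tendsto (fun n => dist (Φ n z) (Φ n w)) atTop (𝓝 (dist (X z) (X w))) :=
        (hXconv z).dist (hXconv w)
      exact le_of_tendsto h3 (Eventually.of_forall fun n => (hΦlip n).dist_le_mul z w)
    exact h2
  have hXcont : Continuous X := hXlip.continuous
  -- level sets of X at points where f ≠ 0 are null
  have hlevel : ∀ y : ℝ, f y ≠ 0 → volume {s | s ∈ Set.Ioo 0 τ ∧ X s = y} = 0 := by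
    intro y hfy
    by_contra hpos
    have hfl : fl y ≠ 0 := fun h => hfy (hnj y (Or.inl (by rw [h, zero_mul])))
    have hfr : fr y ≠ 0 := fun h => hfy (hnj y (Or.inl (by rw [h, mul_zero])))
    have hflpos := abs_pos.2 hfl
    have hfrpos := abs_pos.2 hfr
    set c : ℝ := min |fl y| |fr y| / 2 with hcdef
    have hc : 0 < c := by
      have := lt_min hflpos hfrpos
      rw [hcdef]; linarith
    have hcr : c ≤ |fr y| / 2 := by
      rw [hcdef]; have := min_le_right |fl y| |fr y|; linarith
    have hcl : c ≤ |fl y| / 2 := by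
      rw [hcdef]; have := min_le_left |fl y| |fr y|; linarith
    obtain ⟨br, hbr, hbrsub⟩ : ∃ br ∈ Set.Ioi y, Set.Ioo y br ⊆ {z | |f z - fr y| < |fr y| / 2} := by
      refine mem_nhdsGT_iff_exists_Ioo_subset.1 ?_
      have h2 := (hr y) (Metric.ball_mem_nhds (fr y) (by linarith : (0:ℝ) < |fr y| / 2))
      refine mem_of_superset h2 fun z hz => ?_
      simpa [Real.dist_eq] using hz
    obtain ⟨bl, hbl, hblsub⟩ : ∃ bl ∈ Set.Iio y, Set.Ioo bl y ⊆ {z | |f z - fl y| < |fl y| / 2} := by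
      refine mem_nhdsLT_iff_exists_Ioo_subset.1 ?_
      have h2 := (hl y) (Metric.ball_mem_nhds (fl y) (by linarith : (0:ℝ) < |fl y| / 2))
      refine mem_of_superset h2 fun z hz => ?_
      simpa [Real.dist_eq] using hz
    set S := {s | s ∈ Set.Ioo 0 τ ∧ X s = y} with hSdef
    have hSfin : volume S < ⊤ := lt_of_le_of_lt (measure_mono fun s hs => hs.1)
      (by rw [Real.volume_Ioo]; exact ENNReal.ofReal_lt_top)
    set ρ : ℝ := (volume S).toReal with hρdef
    have hρpos : 0 < ρ := ENNReal.toReal_pos hpos hSfin.ne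
    set ε : ℝ := min (min (br - y) (y - bl)) (c * ρ / 8) with hεdef
    have hε : 0 < ε := by
      have h1 : (0:ℝ) < br - y := by have : y < br := hbr; linarith
      have h2 : (0:ℝ) < y - bl := by have : bl < y := hbl; linarith
      have h3 : (0:ℝ) < c * ρ / 8 := by positivity
      rw [hεdef]
      exact lt_min (lt_min h1 h2) h3
    have hεr : ε ≤ br - y := (min_le_left _ _).trans (min_le_left _ _)
    have hεl : ε ≤ y - bl := (min_le_left _ _).trans (min_le_right _ _)
    have hεc : ε ≤ c * ρ / 8 := min_le_right _ _
    set A : ℕ → Set ℝ := fun n => {s | s ∈ Set.Ioo 0 τ ∧ Φ n s ∈ Set.Ioo (y - ε) (y + ε)}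
      with hAdef
    have hAbound : ∀ n, volume (A n) ≤ ENNReal.ofReal (2 * (ε / c)) := by
      intro n
      set P := {s | s ∈ Set.Ioo 0 τ ∧ Φ n s ∈ Set.Ioo y (y + ε)} with hPdef
      set Z := {s | s ∈ Set.Ioo 0 τ ∧ Φ n s = y} with hZdef
      set Q := {s | s ∈ Set.Ioo 0 τ ∧ Φ n s ∈ Set.Ioo (y - ε) y} with hQdef
      have hsplit : A n ⊆ P ∪ Z ∪ Q := by
        rintro s ⟨hs1, hs2, hs3⟩
        rcases lt_trichotomy (Φ n s) y with h | h | h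
        · exact Or.inr ⟨hs1, hs2, h⟩
        · exact Or.inl (Or.inr ⟨hs1, h⟩)
        · exact Or.inl (Or.inl ⟨hs1, h, hs3⟩)
      have hZ : volume Z = 0 := by
        set C := {s : ℝ | Φ n s = y ∧ ∃ d, d ≠ 0 ∧ HasDerivAt (Φ n) d s} with hCdef
        have hC : volume C = 0 := ((levelset_deriv_countable (Φ n) y)).measure_zero volume
        have hbad : volume {s : ℝ | ¬(s ∈ Set.Ioo 0 τ → HasDerivAt (Φ n) (f (Φ n s)) s)} = 0 :=
          ae_iff.1 (hΦderiv n)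
        refine measure_mono_null ?_ (measure_union_null hC hbad)
        rintro s ⟨hs1, hs2⟩
        by_cases hgood : s ∈ Set.Ioo 0 τ → HasDerivAt (Φ n) (f (Φ n s)) s
        · left
          refine ⟨hs2, f (Φ n s), ?_, hgood hs1⟩
          rw [hs2]; exact hfy
        · right; exact hgood
      have hP : volume P ≤ ENNReal.ofReal (ε / c) := by
        have := strip_time_signed (hΦlip n) (τ := τ) (a := y) (b := y + ε)
          (by linarith) hc ?_
        · rw [show y + ε - y = ε by ring] at this
          exact this
        rcases lt_or_gt_of_ne hfr with hfrneg | hfrpos'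
        · right
          filter_upwards [hΦderiv n] with s h1 h2 h3
          refine ⟨f (Φ n s), h1 h2, ?_⟩
          have hmem : Φ n s ∈ Set.Ioo y br := ⟨h3.1, lt_of_lt_of_le h3.2 (by linarith)⟩
          have h4 := hbrsub hmem
          simp only [Set.mem_setOf_eq] at h4
          rw [abs_of_neg hfrneg] at hcr h4
          cases abs_lt.1 h4 with
          | intro h5 h6 => linarith
        · left
          filter_upwards [hΦderiv n] with s h1 h2 h3
          refine ⟨f (Φ n s), h1 h2, ?_⟩
          have hmem : Φ n s ∈ Set.Ioo y br := ⟨h3.1, lt_of_lt_of_le h3.2 (by linarith)⟩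
          have h4 := hbrsub hmem
          simp only [Set.mem_setOf_eq] at h4
          rw [abs_of_pos hfrpos'] at hcr h4
          cases abs_lt.1 h4 with
          | intro h5 h6 => linarith
      have hQ : volume Q ≤ ENNReal.ofReal (ε / c) := by
        have := strip_time_signed (hΦlip n) (τ := τ) (a := y - ε) (b := y)
          (by linarith) hc ?_
        · rw [show y - (y - ε) = ε by ring] at this
          exact this
        rcases lt_or_gt_of_ne hfl with hflneg | hflpos'
        · right
          filter_upwards [hΦderiv n] with s h1 h2 h3
          refine ⟨f (Φ n s), h1 h2, ?_⟩
          have hmem : Φ n s ∈ Set.Ioo bl y := ⟨lt_of_le_of_lt (by linarith) h3.1, h3.2⟩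
          have h4 := hblsub hmem
          simp only [Set.mem_setOf_eq] at h4
          rw [abs_of_neg hflneg] at hcl h4
          cases abs_lt.1 h4 with
          | intro h5 h6 => linarith
        · left
          filter_upwards [hΦderiv n] with s h1 h2 h3
          refine ⟨f (Φ n s), h1 h2, ?_⟩
          have hmem : Φ n s ∈ Set.Ioo bl y := ⟨lt_of_le_of_lt (by linarith) h3.1, h3.2⟩
          have h4 := hblsub hmem
          simp only [Set.mem_setOf_eq] at h4
          rw [abs_of_pos hflpos'] at hcl h4
          cases abs_lt.1 h4 with
          | intro h5 h6 => linarith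
      calc volume (A n) ≤ volume (P ∪ Z ∪ Q) := measure_mono hsplit
        _ ≤ volume (P ∪ Z) + volume Q := measure_union_le _ _
        _ ≤ volume P + volume Z + volume Q := by
            exact add_le_add (measure_union_le _ _) le_rfl
        _ = volume P + volume Q := by rw [hZ, add_zero]
        _ ≤ ENNReal.ofReal (ε / c) + ENNReal.ofReal (ε / c) := add_le_add hP hQ
        _ = ENNReal.ofReal (2 * (ε / c)) := by
            rw [← ENNReal.ofReal_add (by positivity) (by positivity)]
            ring_nf
    -- Fatou-type argument
    set B : ℕ → Set ℝ := fun N => ⋂ n, ⋂ (_ : N ≤ n), A n with hBdef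
    have hBmono : Monotone B := by
      intro N N' hNN' s hs
      refine Set.mem_iInter.2 fun n => Set.mem_iInter.2 fun hn => ?_
      exact Set.mem_iInter.1 (Set.mem_iInter.1 hs n) (hNN'.trans hn)
    have hSsub : S ⊆ ⋃ N, B N := by
      rintro s ⟨hs1, hs2⟩
      have h5 : ∀ᶠ n in atTop, Φ n s ∈ Set.Ioo (y - ε) (y + ε) := by
        have hy : X s ∈ Set.Ioo (y - ε) (y + ε) := by
          rw [hs2]; exact ⟨by linarith, by linarith⟩
        exact (hXconv s).eventually (isOpen_Ioo.eventually_mem hy)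
      obtain ⟨N, hN⟩ := eventually_atTop.1 h5
      exact Set.mem_iUnion.2 ⟨N, Set.mem_iInter.2 fun n => Set.mem_iInter.2 fun hn =>
        ⟨hs1, hN n hn⟩⟩
    have hchain : volume S ≤ ENNReal.ofReal (2 * (ε / c)) := by
      calc volume S ≤ volume (⋃ N, B N) := measure_mono hSsub
        _ = ⨆ N, volume (B N) := hBmono.directed_le.measure_iUnion
        _ ≤ ENNReal.ofReal (2 * (ε / c)) := by
            refine iSup_le fun N => ?_
            refine le_trans (measure_mono ?_) (hAbound N)
            intro s hs
            exact Set.mem_iInter.1 (Set.mem_iInter.1 hs N) (le_refl N)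
    have hlt : ENNReal.ofReal (2 * (ε / c)) < volume S := by
      have h1 : 2 * (ε / c) ≤ ρ / 4 := by
        rw [show 2 * (ε / c) = (2 * ε) / c by ring, div_le_iff₀ hc]
        nlinarith
      calc ENNReal.ofReal (2 * (ε / c)) ≤ ENNReal.ofReal (ρ / 4) :=
            ENNReal.ofReal_le_ofReal h1
        _ < ENNReal.ofReal ρ := (ENNReal.ofReal_lt_ofReal_iff hρpos).2 (by linarith)
        _ = volume S := by rw [hρdef, ENNReal.ofReal_toReal hSfin.ne]
    exact lt_irrefl _ (lt_of_le_of_lt hchain hlt)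
  -- Case A: derivative at continuity points of f
  have hcaseA : ∀ s ∈ Set.Ioo (0:ℝ) τ, ContinuousAt f (X s) → HasDerivAt X (f (X s)) s := by
    intro s hs hfc
    rw [hasDerivAt_iff_tendsto_slope, Metric.tendsto_nhdsWithin_nhds]
    intro ε hε
    obtain ⟨δ, hδ, hδf⟩ := Metric.continuousAt_iff.1 hfc (ε/2) (by positivity)
    obtain ⟨N, hN⟩ := eventually_atTop.1 ((hXconv s).eventually
      (Metric.ball_mem_nhds (X s) (by positivity : (0:ℝ) < δ/2)))
    have hsmem : s ∈ Set.Icc (0:ℝ) τ := ⟨hs.1.le, hs.2.le⟩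
    refine ⟨min (min s (τ - s)) (δ/(2*(M+1))), by
      have := hs.1; have := hs.2
      refine lt_min (lt_min (by linarith) (by linarith)) (by positivity), ?_⟩
    intro t hts hdist
    have htne : t ≠ s := hts
    rw [Real.dist_eq] at hdist
    have hd1 : |t - s| < s := lt_of_lt_of_le hdist ((min_le_left _ _).trans (min_le_left _ _))
    have hd2 : |t - s| < τ - s := lt_of_lt_of_le hdist ((min_le_left _ _).trans (min_le_right _ _))
    have hd3 : |t - s| < δ/(2*(M+1)) := lt_of_lt_of_le hdist (min_le_right _ _)
    have habs := abs_lt.1 hd1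
    have habs2 := abs_lt.1 hd2
    have htmem : t ∈ Set.Icc (0:ℝ) τ := ⟨by linarith [habs.1], by linarith [habs2.2]⟩
    have key : ∀ n, N ≤ n → |Φ n t - Φ n s - (t - s) * f (X s)| ≤ ε/2 * |t - s| := by
      intro n hn
      have hint : Φ n t - Φ n s = ∫ u in s..t, G n u := by
        rw [hrepr n t htmem, hrepr n s hsmem, add_sub_add_left_eq_sub]
        exact intervalIntegral.integral_interval_sub_left (hΦII n 0 t) (hΦII n 0 s)
      have hsub : Φ n t - Φ n s - (t - s) * f (X s) = ∫ u in s..t, (G n u - f (X s)) := by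
        rw [hint, intervalIntegral.integral_sub (hΦII n s t) intervalIntegrable_const,
          intervalIntegral.integral_const, smul_eq_mul]
      rw [hsub, ← Real.norm_eq_abs]
      have hbound : ∀ u ∈ Set.uIoc s t, ‖G n u - f (X s)‖ ≤ ε/2 := by
        intro u hu
        have hu1 : |u - s| ≤ |t - s| := by
          rcases le_total s t with h | h
          · rw [Set.uIoc_of_le h] at hu
            rw [abs_of_nonneg (by linarith [hu.1.le] : (0:ℝ) ≤ u - s),
              abs_of_nonneg (by linarith : (0:ℝ) ≤ t - s)]
            linarith [hu.2]
          · rw [Set.uIoc_of_ge h] at hu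
            rw [abs_of_nonpos (by linarith [hu.2] : u - s ≤ 0),
              abs_of_nonpos (by linarith : t - s ≤ 0)]
            linarith [hu.1]
        have hΦus : |Φ n u - Φ n s| ≤ M * |u - s| := by
          have := (hΦlip n).dist_le_mul u s
          rwa [Real.dist_eq, Real.dist_eq, Real.coe_toNNReal M hM] at this
        have hΦsX : |Φ n s - X s| < δ/2 := by
          have h9 := hN n hn
          rwa [Real.dist_eq] at h9
        have hclose : dist (Φ n u) (X s) < δ := by
          rw [Real.dist_eq]
          calc |Φ n u - X s| ≤ |Φ n u - Φ n s| + |Φ n s - X s| := by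
                rw [show Φ n u - X s = (Φ n u - Φ n s) + (Φ n s - X s) by ring]
                exact abs_add_le _ _
            _ < M * |t - s| + δ/2 := by
                have := hΦus.trans (mul_le_mul_of_nonneg_left hu1 hM)
                linarith
            _ ≤ δ := by
                have h1 : M * |t - s| ≤ M * (δ/(2*(M+1))) :=
                  mul_le_mul_of_nonneg_left hd3.le hM
                have h2 : M * (δ/(2*(M+1))) ≤ δ/2 := by
                  rw [mul_div_assoc', div_le_div_iff₀ (by positivity) two_pos]
                  nlinarith
                linarith
        have := hδf hclose
        rw [Real.dist_eq] at this
        simpa [Real.norm_eq_abs] using this.le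
      exact intervalIntegral.norm_integral_le_of_norm_le_const hbound
    have hlim : Tendsto (fun n => |Φ n t - Φ n s - (t - s) * f (X s)|) atTop
        (𝓝 (|X t - X s - (t - s) * f (X s)|)) :=
      (((hXconv t).sub (hXconv s)).sub_const _).abs
    have hXbnd : |X t - X s - (t - s) * f (X s)| ≤ ε/2 * |t - s| := by
      refine le_of_tendsto hlim ?_
      filter_upwards [eventually_ge_atTop N] with n hn
      exact key n hn
    have htsne : t - s ≠ 0 := sub_ne_zero.2 htne
    have htspos : 0 < |t - s| := abs_pos.2 htsne
    rw [Real.dist_eq, slope_def_field]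
    calc |(X t - X s) / (t - s) - f (X s)|
        = |X t - X s - (t - s) * f (X s)| / |t - s| := by
          rw [← abs_div]
          congr 1
          field_simp
      _ ≤ (ε/2 * |t - s|) / |t - s| := by gcongr
      _ = ε/2 := by field_simp
      _ < ε := by linarith
  -- the countable set of discontinuities of f
  set D : Set ℝ := {y | f y ≠ fl y} ∪ {y | f y ≠ fr y} with hDdef
  have hDcnt : D.Countable :=
    (countable_ne_leftlim f fl hl).union (countable_ne_rightlim f fr hr)
  have hcont_of : ∀ y : ℝ, y ∉ D → ContinuousAt f y := by
    intro y hy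
    simp only [hDdef, Set.mem_union, Set.mem_setOf_eq, not_or, not_not] at hy
    rw [ContinuousAt, ← nhdsNE_sup_pure y, tendsto_sup]
    constructor
    · rw [← nhdsLT_sup_nhdsGT, tendsto_sup]
      exact ⟨hy.1 ▸ hl y, hy.2 ▸ hr y⟩
    · exact tendsto_pure_nhds f y
  set E2 : Set ℝ := ⋃ y ∈ {y : ℝ | y ∈ D ∧ f y ≠ 0}, {s | s ∈ Set.Ioo 0 τ ∧ X s = y} with hE2def
  have hE2 : volume E2 = 0 := by
    refine (measure_biUnion_null_iff (hDcnt.mono fun y hy => hy.1)).2 fun y hy => hlevel y hy.2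
  set E3 : Set ℝ := ⋃ y ∈ D, {s : ℝ | X s = y ∧ ∃ d, d ≠ 0 ∧ HasDerivAt X d s} with hE3def
  have hE3 : volume E3 = 0 :=
    Set.Countable.measure_zero (hDcnt.biUnion fun y _ => levelset_deriv_countable X y) _
  have hE2' : ∀ᵐ s : ℝ, s ∉ E2 := by
    rw [ae_iff]; simpa using hE2
  have hE3' : ∀ᵐ s : ℝ, s ∉ E3 := by
    rw [ae_iff]; simpa using hE3
  have hXderiv : ∀ᵐ s : ℝ, s ∈ Set.Ioo 0 τ → HasDerivAt X (f (X s)) s := by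
    filter_upwards [hXlip.ae_differentiableAt (μ := volume), hE2', hE3'] with s h1 h2 h3 hIoo
    by_cases hD : X s ∈ D
    · by_cases hf0 : f (X s) = 0
      · have hder : deriv X s = 0 := by
          by_contra hne
          exact h3 (Set.mem_biUnion hD ⟨rfl, deriv X s, hne, h1.hasDerivAt⟩)
        rw [hf0, ← hder]
        exact h1.hasDerivAt
      · have hm1 : X s ∈ {y : ℝ | y ∈ D ∧ f y ≠ 0} := ⟨hD, hf0⟩
        have hm2 : s ∈ {s' | s' ∈ Set.Ioo 0 τ ∧ X s' = X s} := ⟨hIoo, rfl⟩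
        exact absurd (Set.mem_biUnion hm1 hm2) h2
    · exact hcaseA s hIoo (hcont_of _ hD)
  -- conclusion by the fundamental theorem of calculus for the Lipschitz limit
  intro t ht
  obtain ⟨hintX, heqX⟩ := lipschitz_ftc hXlip 0 t ht.1
  have hτae : ∀ᵐ s : ℝ, s ≠ τ := by
    have h0 := (Set.countable_singleton τ).measure_zero (μ := volume)
    rw [ae_iff]
    simpa using h0
  have hae : deriv X =ᵐ[volume.restrict (Set.Ioc 0 t)] fun s => f (X s) := by
    rw [Filter.EventuallyEq, ae_restrict_iff' measurableSet_Ioc]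
    filter_upwards [hXderiv, hτae] with s h1 h2 hmem
    have hmem' : s ∈ Set.Ioo 0 τ := ⟨hmem.1, lt_of_le_of_ne (hmem.2.trans ht.2) h2⟩
    exact (h1 hmem').deriv
  have h5 : ∫ s in Set.Ioc 0 t, deriv X s = ∫ s in Set.Ioc 0 t, f (X s) :=
    integral_congr_ae hae
  have h6 : (∫ s in (0:ℝ)..t, f (x s)) = ∫ s in Set.Ioc 0 t, f (X s) := by
    rw [intervalIntegral.integral_of_le ht.1]
    refine integral_congr_ae ?_
    rw [Filter.EventuallyEq, ae_restrict_iff' measurableSet_Ioc]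
    exact ae_of_all _ fun s hs => by rw [hXeq s ⟨hs.1.le, hs.2.trans ht.2⟩]
  have h7 : X t = x t := hXeq t ht
  have h8 : X 0 = x 0 := hXeq 0 ⟨le_refl 0, hτ⟩
  rw [h6, ← h5, heqX, ← h7, ← h8]
  ring
end

section
/- Let f : ℝ → ℝ be bounded, regulated and satisfy the no-jam condition. Then for every x₀ ∈ ℝ there exists at least one Carathéodory solution x : [0,∞) → ℝ of ẋ = f(x) with x(0) = x₀. -/
open Filter Topology MeasureTheory Set

namespace Cara
variable {f fl fr : ℝ → ℝ}

lemma le_fr (hry : Tendsto f (𝓝[>] y) (𝓝 v)) (hyb : y < b)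
    (h : ∀ w ∈ Ioo y b, c ≤ f w) : c ≤ v :=
  ge_of_tendsto hry (eventually_of_mem (Ioo_mem_nhdsGT_of_mem ⟨le_refl y, hyb⟩) h)

lemma fr_le (hry : Tendsto f (𝓝[>] y) (𝓝 v)) (hyb : y < b)
    (h : ∀ w ∈ Ioo y b, f w ≤ c) : v ≤ c :=
  le_of_tendsto hry (eventually_of_mem (Ioo_mem_nhdsGT_of_mem ⟨le_refl y, hyb⟩) h)

lemma le_fl (hly : Tendsto f (𝓝[<] y) (𝓝 v)) (hay : a < y)
    (h : ∀ w ∈ Ioo a y, c ≤ f w) : c ≤ v :=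
  ge_of_tendsto hly (eventually_of_mem (Ioo_mem_nhdsLT_of_mem ⟨hay, le_refl y⟩) h)

lemma fl_le (hly : Tendsto f (𝓝[<] y) (𝓝 v)) (hay : a < y)
    (h : ∀ w ∈ Ioo a y, f w ≤ c) : v ≤ c :=
  le_of_tendsto hly (eventually_of_mem (Ioo_mem_nhdsLT_of_mem ⟨hay, le_refl y⟩) h)

lemma band_right (hry : Tendsto f (𝓝[>] y) (𝓝 v)) {ε : ℝ} (hε : 0 < ε) :
    ∃ b > y, ∀ w ∈ Ioo y b, |f w - v| < ε := by
  have h : f ⁻¹' Metric.ball v ε ∈ 𝓝[>] y := hry (Metric.ball_mem_nhds v hε)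
  rw [mem_nhdsGT_iff_exists_Ioo_subset] at h
  obtain ⟨u, hu, hsub⟩ := h
  exact ⟨u, hu, fun w hw => by simpa [Real.dist_eq] using hsub hw⟩

lemma band_left (hly : Tendsto f (𝓝[<] y) (𝓝 v)) {ε : ℝ} (hε : 0 < ε) :
    ∃ a < y, ∀ w ∈ Ioo a y, |f w - v| < ε := by
  have h : f ⁻¹' Metric.ball v ε ∈ 𝓝[<] y := hly (Metric.ball_mem_nhds v hε)
  rw [mem_nhdsLT_iff_exists_Ioo_subset] at h
  obtain ⟨u, hu, hsub⟩ := h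
  exact ⟨u, hu, fun w hw => by simpa [Real.dist_eq] using hsub hw⟩

/-- `fr` is right-continuous (within `Ici`). -/
lemma fr_rightCont (hr : ∀ x : ℝ, Tendsto f (𝓝[>] x) (𝓝 (fr x))) (y : ℝ) :
    Tendsto fr (𝓝[≥] y) (𝓝 (fr y)) := by
  rw [Metric.tendsto_nhdsWithin_nhds]
  intro ε hε
  obtain ⟨b, hby, hband⟩ := band_right (hr y) (half_pos hε)
  refine ⟨b - y, by linarith, fun z hz hdz => ?_⟩
  rw [Real.dist_eq] at hdz ⊢
  rcases eq_or_lt_of_le (Set.mem_Ici.1 hz : y ≤ z) with h | h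
  · simpa [← h] using hε
  · have hzb : z < b := by
      have := abs_lt.1 hdz; linarith [this.1, this.2]
    have h1 : fr z ≤ fr y + ε / 2 := by
      refine fr_le (hr z) hzb fun w hw => ?_
      have := hband w ⟨h.trans hw.1, hw.2⟩
      linarith [abs_lt.1 this |>.2]
    have h2 : fr y - ε / 2 ≤ fr z := by
      refine le_fr (hr z) hzb fun w hw => ?_
      have := hband w ⟨h.trans hw.1, hw.2⟩
      linarith [abs_lt.1 this |>.1]
    rw [abs_lt]; constructor <;> linarith

lemma fr_measurable (hr : ∀ x : ℝ, Tendsto f (𝓝[>] x) (𝓝 (fr x))) :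
    Measurable fr := by
  have hmeas : ∀ n : ℕ, Measurable (fun y : ℝ => fr ((⌈y * (n + 1)⌉ : ℤ) / (n + 1))) := by
    intro n
    have h1 : Measurable fun y : ℝ => (⌈y * (n + 1)⌉ : ℤ) :=
      Int.measurable_ceil.comp (measurable_id.mul_const _)
    have h2 : Measurable fun k : ℤ => fr ((k : ℝ) / (n + 1)) := measurable_from_top
    exact h2.comp h1
  refine measurable_of_tendsto_metrizable hmeas (tendsto_pi_nhds.mpr fun y => ?_)
  have hnpos : ∀ n : ℕ, (0:ℝ) < (n:ℝ) + 1 := fun n => by positivity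
  have hu : ∀ n : ℕ, y ≤ (⌈y * (n + 1)⌉ : ℤ) / ((n:ℝ) + 1) := by
    intro n
    rw [le_div_iff₀ (hnpos n)]
    exact Int.le_ceil _
  have hu2 : ∀ n : ℕ, ((⌈y * (n + 1)⌉ : ℤ) : ℝ) / ((n:ℝ) + 1) ≤ y + 1 / ((n:ℝ) + 1) := by
    intro n
    rw [div_le_iff₀ (hnpos n)]
    have heq : (y + 1 / ((n:ℝ)+1)) * ((n:ℝ)+1) = y * ((n:ℝ)+1) + 1 := by field_simp
    rw [heq]
    linarith [Int.ceil_lt_add_one (y * ((n:ℝ)+1))]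
  have htend : Tendsto (fun n : ℕ => ((⌈y * (n + 1)⌉ : ℤ) : ℝ) / ((n:ℝ) + 1)) atTop (𝓝 y) := by
    refine tendsto_of_tendsto_of_tendsto_of_le_of_le tendsto_const_nhds ?_ hu hu2
    have : Tendsto (fun n : ℕ => 1 / ((n:ℝ) + 1)) atTop (𝓝 0) := tendsto_one_div_add_atTop_nhds_zero_nat
    simpa using tendsto_const_nhds.add this
  exact ((fr_rightCont hr y).comp
    (tendsto_nhdsWithin_of_tendsto_nhds_of_eventually_within _ htend
      (Eventually.of_forall fun n => hu n)))

/-- the set where `f` differs from its right limit is countable -/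
lemma countable_ne (hl : ∀ x : ℝ, Tendsto f (𝓝[<] x) (𝓝 (fl x)))
    (hr : ∀ x : ℝ, Tendsto f (𝓝[>] x) (𝓝 (fr x))) :
    Set.Countable {y : ℝ | f y ≠ fr y} := by
  have hsub : {y : ℝ | f y ≠ fr y} ⊆ ⋃ n : ℕ, {y : ℝ | 1 / ((n:ℝ)+1) ≤ |f y - fr y|} := by
    intro y hy
    obtain ⟨n, hn⟩ := exists_nat_one_div_lt (show (0:ℝ) < |f y - fr y| by
      simpa [sub_eq_zero, abs_pos] using hy)
    exact mem_iUnion.2 ⟨n, le_of_lt hn⟩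
  refine Set.Countable.mono hsub (Set.countable_iUnion fun n => ?_)
  set c : ℝ := 1 / ((n:ℝ)+1) with hc
  have hcpos : 0 < c := by positivity
  set Dn := {y : ℝ | c ≤ |f y - fr y|} with hDn
  -- each point has a punctured neighborhood avoiding Dn
  have hpunct : ∀ y : ℝ, ∃ δ > 0, ∀ z, z ≠ y → |z - y| < δ → z ∉ Dn := by
    intro y
    obtain ⟨b, hby, hbandr⟩ := band_right (hr y) (show 0 < c/3 by positivity)
    obtain ⟨a, hay, hbandl⟩ := band_left (hl y) (show 0 < c/3 by positivity)
    refine ⟨min (b - y) (y - a), by simp [hby, hay, sub_pos], fun z hzy hdz hzD => ?_⟩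
    have hd1 : |z - y| < b - y := lt_of_lt_of_le hdz (min_le_left _ _)
    have hd2 : |z - y| < y - a := lt_of_lt_of_le hdz (min_le_right _ _)
    have hza : a < z := by have := abs_lt.1 hd2; linarith [this.1]
    have hzb : z < b := by have := abs_lt.1 hd1; linarith [(abs_lt.1 hd1).2]
    rcases lt_or_gt_of_ne hzy with h | h
    · -- z < y : f near fl y on (a,y), fr z also
      have hfz : |f z - fl y| < c/3 := hbandl z ⟨hza, h⟩
      have hfrz1 : fr z ≤ fl y + c/3 := fr_le (hr z) h fun w hw =>
        le_of_lt (by have := hbandl w ⟨hza.trans hw.1, hw.2⟩; linarith [(abs_lt.1 this).2])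
      have hfrz2 : fl y - c/3 ≤ fr z := le_fr (hr z) h fun w hw =>
        le_of_lt (by have := hbandl w ⟨hza.trans hw.1, hw.2⟩; linarith [(abs_lt.1 this).1])
      have : |f z - fr z| < c := by
        have h1 := (abs_lt.1 hfz).1
        have h2 := (abs_lt.1 hfz).2
        rw [abs_lt]; constructor <;> linarith
      exact absurd hzD (by simp only [hDn, mem_setOf_eq, not_le]; exact this)
    · -- y < z
      have hfz : |f z - fr y| < c/3 := hbandr z ⟨h, hzb⟩
      have hfrz1 : fr z ≤ fr y + c/3 := fr_le (hr z) hzb fun w hw =>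
        le_of_lt (by have := hbandr w ⟨h.trans hw.1, hw.2⟩; linarith [(abs_lt.1 this).2])
      have hfrz2 : fr y - c/3 ≤ fr z := le_fr (hr z) hzb fun w hw =>
        le_of_lt (by have := hbandr w ⟨h.trans hw.1, hw.2⟩; linarith [(abs_lt.1 this).1])
      have : |f z - fr z| < c := by
        have h1 := (abs_lt.1 hfz).1
        have h2 := (abs_lt.1 hfz).2
        rw [abs_lt]; constructor <;> linarith
      exact absurd hzD (by simp only [hDn, mem_setOf_eq, not_le]; exact this)
  -- countability via rationals
  have hcov : Dn ⊆ ⋃ q : ℚ, {y ∈ Dn | ∃ δ > 0, (∀ z, z ≠ y → |z - y| < δ → z ∉ Dn) ∧ |y - (q:ℝ)| < δ/2} := by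
    intro y hy
    obtain ⟨δ, hδ, hprop⟩ := hpunct y
    obtain ⟨q, hq1, hq2⟩ := exists_rat_btwn (show y - δ/2 < y + δ/2 by linarith)
    refine mem_iUnion.2 ⟨q, hy, δ, hδ, hprop, ?_⟩
    rw [abs_lt]; constructor <;> linarith
  refine Set.Countable.mono hcov (Set.countable_iUnion fun q => Set.Subsingleton.countable ?_)
  rintro y ⟨hyD, δ, hδ, hprop, hyq⟩ y' ⟨hyD', δ', hδ', hprop', hyq'⟩
  by_contra hne
  have hdist : |y - y'| < δ/2 + δ'/2 := by
    have := abs_sub_le y (q:ℝ) y'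
    calc |y - y'| ≤ |y - (q:ℝ)| + |(q:ℝ) - y'| := abs_sub_le _ _ _
    _ < δ/2 + δ'/2 := by rw [abs_sub_comm (q:ℝ) y']; linarith
  rcases le_total δ' δ with hle | hle
  · exact hprop y' (Ne.symm hne) (by rw [abs_sub_comm]; linarith) hyD'
  · exact hprop' y hne (by linarith) hyD
lemma forward_pos (f fl fr : ℝ → ℝ) (M : ℝ)
    (hbd : ∀ x : ℝ, |f x| ≤ M)
    (hl : ∀ x : ℝ, Tendsto f (𝓝[<] x) (𝓝 (fl x)))
    (hr : ∀ x : ℝ, Tendsto f (𝓝[>] x) (𝓝 (fr x)))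
    (hnj : ∀ y : ℝ, (fl y * fr y = 0 ∨ (0 < fl y ∧ fr y < 0)) → f y = 0)
    (x₀ : ℝ) (h0 : 0 < fr x₀) :
    ∃ x : ℝ → ℝ, x 0 = x₀ ∧
      ∀ t : ℝ, 0 ≤ t → x t = x₀ + ∫ s in (0:ℝ)..t, f (x s) := by
  classical
  have hfrmeas : Measurable fr := fr_measurable hr
  have hfrM : ∀ y : ℝ, fr y ≤ M := fun y =>
    fr_le (hr y) (lt_add_one y) fun w _ => (abs_le.1 (hbd w)).2
  have hfrmM : ∀ y : ℝ, -M ≤ fr y := fun y =>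
    le_fr (hr y) (lt_add_one y) fun w _ => (abs_le.1 (hbd w)).1
  have hM0 : 0 < M := h0.trans_le (hfrM x₀)
  -- the good set
  set Q : Set ℝ := {y | x₀ ≤ y ∧ ∀ z ∈ Ioc x₀ y, 0 < fl z ∧ 0 < fr z} with hQdef
  have hQx₀ : x₀ ∈ Q := ⟨le_refl _, fun z hz => absurd hz.1 (not_lt.2 hz.2)⟩
  have hQdc : ∀ {y y' : ℝ}, y ∈ Q → x₀ ≤ y' → y' ≤ y → y' ∈ Q :=
    fun hy hy1 hy2 => ⟨hy1, fun z hz => hy.2 z ⟨hz.1, hz.2.trans hy2⟩⟩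
  have hfrQ : ∀ y ∈ Q, 0 < fr y := by
    intro y hy
    rcases eq_or_lt_of_le hy.1 with h | h
    · rwa [← h]
    · exact (hy.2 y ⟨h, le_refl _⟩).2
  -- one can always push a bit further inside Q
  have hpush : ∀ y ∈ Q, ∃ δ > 0, y + δ ∈ Q := by
    intro y hy
    obtain ⟨b, hby, hband⟩ := band_right (hr y) (half_pos (hfrQ y hy))
    have hfb : ∀ w ∈ Ioo y b, fr y / 2 ≤ f w := fun w hw =>
      le_of_lt (by have := (abs_lt.1 (hband w hw)).1; linarith)
    refine ⟨(b - y)/2, by linarith, le_trans hy.1 (by linarith), fun z hz => ?_⟩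
    rcases le_or_gt z y with hzy | hzy
    · exact hy.2 z ⟨hz.1, hzy⟩
    · have hzb : z < b := by linarith [hz.2]
      constructor
      · have : fr y / 2 ≤ fl z := le_fl (hl z) hzy fun w hw => hfb w ⟨hw.1, hw.2.trans hzb⟩
        linarith [hfrQ y hy]
      · have : fr y / 2 ≤ fr z := le_fr (hr z) hzb fun w hw => hfb w ⟨hzy.trans hw.1, hw.2⟩
        linarith [hfrQ y hy]
  -- uniform positive lower bound for fr on Icc x₀ b, b ∈ Q
  have hunif : ∀ b ∈ Q, ∃ c > 0, ∀ z ∈ Icc x₀ b, c ≤ fr z := by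
    intro b hb
    have hloc : ∀ y ∈ Icc x₀ b, ∃ U ∈ 𝓝 y, ∃ c > 0, ∀ z ∈ U ∩ Icc x₀ b, c ≤ fr z := by
      intro y hy
      have hfry : 0 < fr y := by
        rcases eq_or_lt_of_le hy.1 with h | h
        · rwa [← h]
        · exact (hb.2 y ⟨h, hy.2⟩).2
      obtain ⟨b₁, hb₁, hbandr⟩ := band_right (hr y) (half_pos hfry)
      have hfbr : ∀ w ∈ Ioo y b₁, fr y / 2 ≤ f w := fun w hw =>
        le_of_lt (by have := (abs_lt.1 (hbandr w hw)).1; linarith)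
      rcases eq_or_lt_of_le hy.1 with h | h
      · refine ⟨Ioo (y-1) b₁, Ioo_mem_nhds (by linarith) hb₁, fr y / 2, half_pos hfry, ?_⟩
        intro z hz
        rcases eq_or_lt_of_le (h ▸ hz.2.1 : y ≤ z) with h2 | h2
        · rw [← h2]; linarith
        · exact le_fr (hr z) hz.1.2 fun w hw => hfbr w ⟨h2.trans hw.1, hw.2⟩
      · have hfly : 0 < fl y := (hb.2 y ⟨h, hy.2⟩).1
        obtain ⟨a₁, ha₁, hbandl⟩ := band_left (hl y) (half_pos hfly)
        have hfbl : ∀ w ∈ Ioo a₁ y, fl y / 2 ≤ f w := fun w hw =>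
          le_of_lt (by have := (abs_lt.1 (hbandl w hw)).1; linarith)
        refine ⟨Ioo a₁ b₁, Ioo_mem_nhds ha₁ hb₁, min (fl y / 2) (fr y / 2),
          lt_min (half_pos hfly) (half_pos hfry), ?_⟩
        intro z hz
        rcases lt_trichotomy z y with h2 | h2 | h2
        · exact le_trans (min_le_left _ _)
            (le_fr (hr z) h2 fun w hw => hfbl w ⟨hz.1.1.trans hw.1, hw.2⟩)
        · rw [h2]; exact le_trans (min_le_right _ _) (by linarith)
        · exact le_trans (min_le_right _ _)
            (le_fr (hr z) hz.1.2 fun w hw => hfbr w ⟨h2.trans hw.1, hw.2⟩)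
    choose U hU c hc hbound using hloc
    obtain ⟨tf, htf⟩ := isCompact_Icc.elim_nhds_subcover' U hU
    by_cases hne : tf.Nonempty
    · refine ⟨tf.inf' hne (fun y => c y y.2), ?_, ?_⟩
      · rw [gt_iff_lt, Finset.lt_inf'_iff]
        exact fun y _ => hc y y.2
      · intro z hz
        have hmem := htf hz
        rw [mem_iUnion₂] at hmem
        obtain ⟨y, hyt, hyU⟩ := hmem
        exact le_trans (Finset.inf'_le _ hyt) (hbound y y.2 z ⟨hyU, hz⟩)
    · exfalso
      have hx : x₀ ∈ Icc x₀ b := ⟨le_refl _, hb.1⟩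
      have := htf hx
      simp [Finset.not_nonempty_iff_eq_empty.1 hne] at this
  -- integrability of fr⁻¹
  have hTint : ∀ b ∈ Q, IntegrableOn (fun u => (fr u)⁻¹) (Icc x₀ b) := by
    intro b hb
    obtain ⟨c, hc, hcb⟩ := hunif b hb
    refine Measure.integrableOn_of_bounded measure_Icc_lt_top.ne
      hfrmeas.inv.aestronglyMeasurable (M := c⁻¹) ?_
    rw [ae_restrict_iff' measurableSet_Icc]
    refine ae_of_all _ fun z hz => ?_
    have h1 := hcb z hz
    rw [Real.norm_eq_abs, abs_of_nonneg (inv_nonneg.2 (hc.le.trans h1))]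
    exact inv_anti₀ hc h1
  set T : ℝ → ℝ := fun y => ∫ u in x₀..y, (fr u)⁻¹ with hTdef
  have hT0 : T x₀ = 0 := intervalIntegral.integral_same
  have hTsub : ∀ b ∈ Q, ∀ y y' : ℝ, x₀ ≤ y → y ≤ y' → y' ≤ b →
      T y' - T y = ∫ u in y..y', (fr u)⁻¹ := by
    intro b hb y y' hy hyy' hyb
    have h1 : IntervalIntegrable (fun u => (fr u)⁻¹) volume x₀ y :=
      (intervalIntegrable_iff_integrableOn_Icc_of_le hy).2
        ((hTint b hb).mono_set (Icc_subset_Icc (le_refl _) (hyy'.trans hyb)))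
    have h2 : IntervalIntegrable (fun u => (fr u)⁻¹) volume y y' :=
      (intervalIntegrable_iff_integrableOn_Icc_of_le hyy').2
        ((hTint b hb).mono_set (Icc_subset_Icc hy hyb))
    have h3 := intervalIntegral.integral_add_adjacent_intervals h1 h2
    rw [hTdef]
    simp only
    rw [← h3]
    ring
  have hTgrow : ∀ b ∈ Q, ∀ y y' : ℝ, x₀ ≤ y → y ≤ y' → y' ≤ b →
      (y' - y) / M ≤ T y' - T y := by
    intro b hb y y' hy hyy' hyb
    rw [hTsub b hb y y' hy hyy' hyb]
    have hint : IntervalIntegrable (fun u => (fr u)⁻¹) volume y y' :=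
      (intervalIntegrable_iff_integrableOn_Icc_of_le hyy').2
        ((hTint b hb).mono_set (Icc_subset_Icc hy hyb))
    obtain ⟨c, hc, hcb⟩ := hunif b hb
    have h3 : ∀ u ∈ Icc y y', M⁻¹ ≤ (fr u)⁻¹ := by
      intro u hu
      have h4 := hcb u ⟨hy.trans hu.1, hu.2.trans hyb⟩
      exact inv_anti₀ (hc.trans_le h4) (hfrM u)
    have h5 := intervalIntegral.integral_mono_on hyy' intervalIntegrable_const hint h3
    rw [intervalIntegral.integral_const, smul_eq_mul] at h5
    calc (y' - y)/M = (y' - y) * M⁻¹ := by ring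
    _ ≤ _ := h5
  have hTcont : ∀ b ∈ Q, ContinuousOn T (Icc x₀ b) := by
    intro b hb
    have h1 : ContinuousOn (fun x => ∫ u in Icc x₀ x, (fr u)⁻¹) (Icc x₀ b) :=
      intervalIntegral.continuousOn_primitive_Icc (hTint b hb)
    refine h1.congr fun y hy => ?_
    rw [hTdef]
    simp only
    rw [intervalIntegral.integral_of_le hy.1, ← integral_Icc_eq_integral_Ioc]
  -- the solution candidate
  set X : ℝ → ℝ := fun t => sSup {y | y ∈ Q ∧ T y ≤ max t 0} with hXdef
  have hbddA : ∀ t : ℝ, BddAbove {y | y ∈ Q ∧ T y ≤ max t 0} := by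
    intro t
    refine ⟨x₀ + M * max t 0, fun y hy => ?_⟩
    have h1 := hTgrow y hy.1 x₀ y (le_refl _) hy.1.1 (le_refl _)
    rw [hT0, sub_zero] at h1
    have h2 : (y - x₀)/M ≤ max t 0 := h1.trans hy.2
    rw [div_le_iff₀ hM0] at h2
    linarith
  have hneA : ∀ t : ℝ, Set.Nonempty {y | y ∈ Q ∧ T y ≤ max t 0} :=
    fun t => ⟨x₀, hQx₀, by rw [hT0]; exact le_max_right _ _⟩
  have hXmono : Monotone X := by
    intro t t' htt
    exact csSup_le_csSup (hbddA t') (hneA t)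
      (fun y hy => ⟨hy.1, hy.2.trans (max_le_max htt (le_refl 0))⟩)
  have hX0 : X 0 = x₀ := by
    have hset : {y | y ∈ Q ∧ T y ≤ max 0 0} = {x₀} := by
      ext y
      simp only [mem_setOf_eq, mem_singleton_iff, max_self]
      constructor
      · rintro ⟨hyQ, hyT⟩
        by_contra hne
        have hlt : x₀ < y := lt_of_le_of_ne hyQ.1 (Ne.symm hne)
        have h1 := hTgrow y hyQ x₀ y (le_refl _) hyQ.1 (le_refl _)
        rw [hT0, sub_zero] at h1
        have h2 : 0 < T y := lt_of_lt_of_le (div_pos (by linarith) hM0) h1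
        linarith
      · rintro rfl
        exact ⟨hQx₀, by rw [hT0]⟩
    rw [hXdef]
    simp only [hset]
    exact csSup_singleton _
  -- dichotomy
  have hdich : ∀ t : ℝ, 0 ≤ t → (X t ∈ Q ∧ T (X t) = t) ∨ ((∀ b ∈ Q, T b ≤ t) ∧ X t = sSup Q) := by
    intro t ht
    by_cases hc : ∀ b ∈ Q, T b ≤ t
    · right
      refine ⟨hc, ?_⟩
      have hset : {y | y ∈ Q ∧ T y ≤ max t 0} = Q := by
        ext y; exact ⟨fun h => h.1, fun h => ⟨h, (hc y h).trans (le_max_left _ _)⟩⟩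
      rw [hXdef]; simp only [hset]
    · left
      push_neg at hc
      obtain ⟨b, hbQ, hbt⟩ := hc
      have hxb : x₀ ≤ b := hbQ.1
      have htmem : t ∈ Icc (T x₀) (T b) := by rw [hT0]; exact ⟨ht, hbt.le⟩
      obtain ⟨ys, hymem, hyT⟩ := intermediate_value_Icc hxb (hTcont b hbQ) htmem
      have hysQ : ys ∈ Q := hQdc hbQ hymem.1 hymem.2
      have hXts : X t = ys := by
        apply le_antisymm
        · apply csSup_le (hneA t)
          rintro z ⟨hzQ, hzT⟩
          by_contra hzy
          push_neg at hzy
          have hgrow := hTgrow z hzQ ys z hymem.1 hzy.le (le_refl _)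
          have hTz : t < T z := by
            rw [hyT] at hgrow
            have h6 : 0 < (z - ys)/M := div_pos (by linarith) hM0
            linarith
          rw [max_eq_left ht] at hzT
          linarith
        · apply le_csSup (hbddA t)
          exact ⟨hysQ, by rw [hyT]; exact le_max_left _ _⟩
      rw [hXts]; exact ⟨hysQ, hyT⟩
  -- at stall, sSup Q is not in Q and f vanishes there
  have hQbdd : ∀ s : ℝ, 0 ≤ s → (∀ b ∈ Q, T b ≤ s) → BddAbove Q := by
    intro s hs hb
    refine ⟨x₀ + M * s, fun y hy => ?_⟩
    have h1 := hTgrow y hy x₀ y (le_refl _) hy.1 (le_refl _)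
    rw [hT0, sub_zero] at h1
    have h2 : (y - x₀)/M ≤ s := h1.trans (hb y hy)
    rw [div_le_iff₀ hM0] at h2
    linarith
  have hQnosup : ∀ s : ℝ, 0 ≤ s → (∀ b ∈ Q, T b ≤ s) → sSup Q ∉ Q := by
    intro s hs hb he
    obtain ⟨δ, hδ, hmem⟩ := hpush _ he
    have := le_csSup (hQbdd s hs hb) hmem
    linarith
  have hfe : ∀ s : ℝ, 0 ≤ s → (∀ b ∈ Q, T b ≤ s) → f (sSup Q) = 0 := by
    intro s hs hb
    have henQ : sSup Q ∉ Q := hQnosup s hs hb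
    have hbdd : BddAbove Q := hQbdd s hs hb
    have hx₀e : x₀ ≤ sSup Q := le_csSup hbdd hQx₀
    have hxe : x₀ < sSup Q := by
      obtain ⟨δ, hδ, hmem⟩ := hpush x₀ hQx₀
      have := le_csSup hbdd hmem; linarith
    have hlt : ∀ w, x₀ < w → w < sSup Q → (0 < fl w ∧ 0 < fr w) := by
      intro w hw1 hw2
      obtain ⟨b', hbQ, hwb⟩ := exists_lt_of_lt_csSup ⟨x₀, hQx₀⟩ hw2
      exact hbQ.2 w ⟨hw1, hwb.le⟩
    have hbad : ¬ (0 < fl (sSup Q) ∧ 0 < fr (sSup Q)) := by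
      intro hcontra
      refine henQ ⟨hx₀e, fun z hz => ?_⟩
      rcases eq_or_lt_of_le hz.2 with h | h
      · rw [h]; exact hcontra
      · exact hlt z hz.1 h
    have hfl0 : 0 ≤ fl (sSup Q) := by
      by_contra hneg
      push_neg at hneg
      obtain ⟨a, hae, hband⟩ := band_left (hl (sSup Q)) (show 0 < -(fl (sSup Q))/2 by linarith)
      have ha'e : max a x₀ < sSup Q := max_lt hae hxe
      obtain ⟨w, hw1, hw2⟩ := exists_between ha'e
      have hfw : ∀ v ∈ Ioo w (sSup Q), f v ≤ fl (sSup Q) / 2 := by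
        intro v hv
        have h7 := (abs_lt.1 (hband v ⟨(le_max_left a x₀).trans_lt (hw1.trans hv.1), hv.2⟩)).2
        linarith
      have hfrw : fr w ≤ fl (sSup Q) / 2 := fr_le (hr w) hw2 hfw
      have h8 := (hlt w ((le_max_right a x₀).trans_lt hw1) hw2).2
      linarith
    rcases eq_or_lt_of_le hfl0 with h | h
    · exact hnj _ (Or.inl (by rw [← h]; ring))
    · rcases le_or_gt (fr (sSup Q)) 0 with h2 | h2
      · rcases eq_or_lt_of_le h2 with h3 | h3
        · exact hnj _ (Or.inl (by rw [h3, mul_zero]))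
        · exact hnj _ (Or.inr ⟨h, h3⟩)
      · exact absurd ⟨h, h2⟩ hbad
  have hstallX : ∀ s t : ℝ, 0 ≤ s → s ≤ t → (∀ b ∈ Q, T b ≤ s) → X t = X s := by
    intro s t hs hst hb
    have h1 : {y | y ∈ Q ∧ T y ≤ max t 0} = Q := by
      ext y; exact ⟨fun h => h.1, fun h => ⟨h, ((hb y h).trans hst).trans (le_max_left _ _)⟩⟩
    have h2 : {y | y ∈ Q ∧ T y ≤ max s 0} = Q := by
      ext y; exact ⟨fun h => h.1, fun h => ⟨h, (hb y h).trans (le_max_left _ _)⟩⟩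
    rw [hXdef]; simp only [h1, h2]
  -- quantitative Lipschitz bound
  have hXlip : ∀ s t : ℝ, 0 ≤ s → s ≤ t → X t - X s ≤ M * (t - s) := by
    intro s t hs hst
    have ht : 0 ≤ t := hs.trans hst
    have hMts : 0 ≤ M * (t - s) := mul_nonneg hM0.le (by linarith)
    rcases hdich s hs with ⟨hsQ, hsT⟩ | ⟨hstalls, _⟩
    · rcases hdich t ht with ⟨htQ, htT⟩ | ⟨hstall, htsup⟩
      · have hXst : X s ≤ X t := hXmono hst
        have h1 := hTgrow (X t) htQ (X s) (X t) hsQ.1 hXst (le_refl _)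
        rw [hsT, htT, div_le_iff₀ hM0] at h1
        linarith
      · rw [htsup]
        have hball : sSup Q ≤ X s + M * (t - s) := by
          apply csSup_le ⟨x₀, hQx₀⟩
          intro b' hbQ
          rcases le_or_gt b' (X s) with hbs | hbs
          · linarith
          · have h1 := hTgrow b' hbQ (X s) b' hsQ.1 hbs.le (le_refl _)
            rw [hsT, div_le_iff₀ hM0] at h1
            have h2 := hstall b' hbQ
            nlinarith
        linarith
    · rw [hstallX s t hs hst hstalls]
      linarith
  set F' : ℝ → ℝ := fun s => if X s ∈ Q then fr (X s) else 0 with hF'def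
  -- right derivative
  have hderiv : ∀ s : ℝ, 0 < s → HasDerivWithinAt X (F' s) (Ioi s) s := by
    intro s hs
    rcases hdich s hs.le with ⟨hsQ, hsT⟩ | ⟨hstalls, hssup⟩
    · -- moving case
      have hyx₀ : x₀ ≤ X s := hsQ.1
      have hF's : F' s = fr (X s) := by simp only [hF'def, if_pos hsQ]
      rw [hF's, hasDerivWithinAt_iff_tendsto_slope]
      have hset : Ioi s \ {s} = Ioi s := by simp
      rw [hset, Metric.tendsto_nhdsWithin_nhds]
      intro ε hε
      set εc := min (ε/2) (fr (X s) / 2) with hεc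
      have hεc0 : 0 < εc := lt_min (half_pos hε) (half_pos (hfrQ _ hsQ))
      have hεcfr : εc ≤ fr (X s) / 2 := min_le_right _ _
      have hεcε : εc ≤ ε / 2 := min_le_left _ _
      obtain ⟨b, hby, hband⟩ := band_right (hr (X s)) (half_pos hεc0)
      have hfrband : ∀ u ∈ Ico (X s) b, fr (X s) - εc ≤ fr u ∧ fr u ≤ fr (X s) + εc := by
        intro u hu
        rcases eq_or_lt_of_le hu.1 with h | h
        · rw [← h]; constructor <;> linarith
        · constructor
          · have h9 := le_fr (hr u) hu.2 fun w hw => le_of_lt (by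
              have := (abs_lt.1 (hband w ⟨h.trans hw.1, hw.2⟩)).1
              linarith : fr (X s) - εc/2 < f w)
            linarith
          · have h9 := fr_le (hr u) hu.2 fun w hw => le_of_lt (by
              have := (abs_lt.1 (hband w ⟨h.trans hw.1, hw.2⟩)).2
              linarith : f w < fr (X s) + εc/2)
            linarith
      have hmov : ∃ h₀ > 0, ∀ h : ℝ, 0 < h → h < h₀ →
          (X (s+h) ∈ Q ∧ T (X (s+h)) = s + h) := by
        by_contra hcon
        push_neg at hcon
        have hstall : ∀ b' ∈ Q, T b' ≤ s := by
          intro b' hb'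
          refine le_of_forall_pos_le_add fun δ hδ => ?_
          obtain ⟨h, hh0, hhδ, hnm⟩ := hcon δ hδ
          rcases hdich (s+h) (by linarith) with hmv | ⟨hstall2, _⟩
          · exact absurd hmv.2 (hnm hmv.1)
          · exact (hstall2 b' hb').trans (by linarith)
        have hsup : X s = sSup Q := by
          have hset2 : {y | y ∈ Q ∧ T y ≤ max s 0} = Q := by
            ext z; exact ⟨fun h => h.1, fun h => ⟨h, (hstall z h).trans (le_max_left _ _)⟩⟩
          rw [hXdef]; simp only [hset2]
        exact (hQnosup s hs.le hstall) (hsup ▸ hsQ)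
      obtain ⟨h₀, hh₀, hmoving⟩ := hmov
      have hδ0 : 0 < min h₀ ((b - X s)/M) := lt_min hh₀ (div_pos (by linarith) hM0)
      refine ⟨min h₀ ((b - X s)/M), hδ0, ?_⟩
      intro t' ht' hdist
      have hts : s < t' := ht'
      have hh0 : 0 < t' - s := by linarith
      have hhδ : t' - s < min h₀ ((b - X s)/M) := by
        rw [Real.dist_eq, abs_of_pos hh0] at hdist
        exact hdist
      have hsh : s + (t' - s) = t' := by ring
      obtain ⟨hzQ, hzT⟩ := hmoving (t' - s) hh0 (hhδ.trans_le (min_le_left _ _))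
      rw [hsh] at hzQ hzT
      have hyz : X s ≤ X t' := hXmono hts.le
      have hzb : X t' < b := by
        have h10 := hXlip s t' hs.le hts.le
        have h11 : t' - s < (b - X s)/M := hhδ.trans_le (min_le_right _ _)
        rw [lt_div_iff₀ hM0] at h11
        linarith
      have hkey : t' - s = ∫ u in (X s)..(X t'), (fr u)⁻¹ := by
        have h12 := hTsub (X t') hzQ (X s) (X t') hyx₀ hyz (le_refl _)
        rw [hsT, hzT] at h12
        linarith [h12]
      have hlo : 0 < fr (X s) - εc := by linarith [hfrQ _ hsQ]
      have hhi : 0 < fr (X s) + εc := by linarith [hfrQ _ hsQ]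
      have hint : IntervalIntegrable (fun u => (fr u)⁻¹) volume (X s) (X t') :=
        (intervalIntegrable_iff_integrableOn_Icc_of_le hyz).2
          ((hTint (X t') hzQ).mono_set (Icc_subset_Icc hyx₀ (le_refl _)))
      have hsubIco : Icc (X s) (X t') ⊆ Ico (X s) b := fun u hu => ⟨hu.1, lt_of_le_of_lt hu.2 hzb⟩
      have hup : ∫ u in (X s)..(X t'), (fr u)⁻¹ ≤ (X t' - X s) * (fr (X s) - εc)⁻¹ := by
        have h13 := intervalIntegral.integral_mono_on hyz hint intervalIntegrable_const
          (fun u hu => inv_anti₀ hlo (hfrband u (hsubIco hu)).1)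
        rw [intervalIntegral.integral_const, smul_eq_mul] at h13
        linarith
      have hdn : (X t' - X s) * (fr (X s) + εc)⁻¹ ≤ ∫ u in (X s)..(X t'), (fr u)⁻¹ := by
        have h14 : ∀ u ∈ Icc (X s) (X t'), (fr (X s) + εc)⁻¹ ≤ (fr u)⁻¹ := fun u hu =>
          inv_anti₀ (by linarith [(hfrband u (hsubIco hu)).1]) (hfrband u (hsubIco hu)).2
        have h15 := intervalIntegral.integral_mono_on hyz intervalIntegrable_const hint h14
        rw [intervalIntegral.integral_const, smul_eq_mul] at h15
        linarith
      have hzy1 : (t' - s) * (fr (X s) - εc) ≤ X t' - X s := by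
        have h16 : t' - s ≤ (X t' - X s) / (fr (X s) - εc) := by
          rw [div_eq_mul_inv]; linarith
        rw [le_div_iff₀ hlo] at h16
        linarith
      have hzy2 : X t' - X s ≤ (t' - s) * (fr (X s) + εc) := by
        have h17 : (X t' - X s) / (fr (X s) + εc) ≤ t' - s := by
          rw [div_eq_mul_inv]; linarith
        rw [div_le_iff₀ hhi] at h17
        linarith
      have hslope : slope X s t' = (X t' - X s) / (t' - s) := by
        rw [slope_def_field]
      rw [hslope, Real.dist_eq]
      have hd1 : fr (X s) - εc ≤ (X t' - X s) / (t' - s) := by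
        rw [le_div_iff₀ hh0, mul_comm]; linarith [hzy1]
      have hd2 : (X t' - X s) / (t' - s) ≤ fr (X s) + εc := by
        rw [div_le_iff₀ hh0, mul_comm]; linarith [hzy2]
      have habs : |(X t' - X s) / (t' - s) - fr (X s)| ≤ εc := by
        rw [abs_le]
        constructor <;> linarith
      linarith
    · -- stalled case
      have h1 : X s ∉ Q := by rw [hssup]; exact hQnosup s hs.le hstalls
      have hF's : F' s = 0 := by simp only [hF'def, if_neg h1]
      rw [hF's]
      have hconst : ∀ w ∈ Ioi s, X w = X s := fun w hw =>
        hstallX s w hs.le (le_of_lt hw) hstalls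
      exact (hasDerivWithinAt_const s (Ioi s) (X s)).congr hconst rfl
  -- measurability and integrability
  have hXmeas : Measurable X := hXmono.measurable
  have hQord : Q.OrdConnected := by
    constructor; intro a ha b hb z hz
    exact hQdc hb (ha.1.trans hz.1) hz.2
  have hF'meas : Measurable F' := by
    have h1 : Measurable fun s => fr (X s) := hfrmeas.comp hXmeas
    exact Measurable.ite (hXmeas hQord.measurableSet) h1 measurable_const
  have hF'bd : ∀ s, |F' s| ≤ M := by
    intro s
    by_cases h : X s ∈ Q
    · simp only [hF'def, if_pos h]; exact abs_le.2 ⟨hfrmM _, hfrM _⟩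
    · simp only [hF'def, if_neg h, abs_zero]; exact hM0.le
  have hF'int : ∀ t : ℝ, IntervalIntegrable F' volume 0 t := by
    intro t
    refine intervalIntegrable_iff.2 (Measure.integrableOn_of_bounded measure_Ioc_lt_top.ne
      hF'meas.aestronglyMeasurable (M := M) (ae_of_all _ fun s => ?_))
    simpa [Real.norm_eq_abs] using hF'bd s
  have hXcont : ∀ t : ℝ, 0 ≤ t → ContinuousOn X (Icc 0 t) := by
    intro t ht
    have hlip : LipschitzOnWith (Real.toNNReal M) X (Icc 0 t) := by
      rw [lipschitzOnWith_iff_dist_le_mul]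
      intro a ha b hb
      rw [Real.dist_eq, Real.dist_eq, Real.coe_toNNReal M hM0.le]
      rcases le_total a b with hab | hab
      · have h1 := hXlip a b ha.1 hab
        have h2 : X a ≤ X b := hXmono hab
        rw [abs_of_nonpos (by linarith), abs_of_nonpos (by linarith)]
        linarith
      · have h1 := hXlip b a hb.1 hab
        have h2 : X b ≤ X a := hXmono hab
        rw [abs_of_nonneg (by linarith), abs_of_nonneg (by linarith)]
        linarith
    exact hlip.continuousOn
  -- FTC
  have hFTC : ∀ t : ℝ, 0 ≤ t → ∫ s in (0:ℝ)..t, F' s = X t - x₀ := by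
    intro t ht
    rw [← hX0]
    exact intervalIntegral.integral_eq_sub_of_hasDeriv_right_of_le ht (hXcont t ht)
      (fun s hs => hderiv s hs.1) (hF'int t)
  -- a.e. agreement of f ∘ X with F'
  have hae : ∀ t : ℝ, 0 ≤ t → ∫ s in (0:ℝ)..t, f (X s) = ∫ s in (0:ℝ)..t, F' s := by
    intro t ht
    have hD : Set.Countable {y : ℝ | f y ≠ fr y} := countable_ne hl hr
    set Mov := {s : ℝ | 0 ≤ s ∧ X s ∈ Q ∧ T (X s) = s} with hMov
    have hinj : Set.InjOn X Mov := by
      intro a ha b hb hab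
      rw [← ha.2.2, ← hb.2.2, hab]
    set bad := {s : ℝ | 0 ≤ s ∧ f (X s) ≠ F' s} with hbaddef
    have hbadsub : bad ⊆ Mov ∩ X ⁻¹' {y | f y ≠ fr y} := by
      rintro s ⟨hs0, hsne⟩
      rcases hdich s hs0 with ⟨hsQ, hsT⟩ | ⟨hstalls, hssup⟩
      · refine ⟨⟨hs0, hsQ, hsT⟩, ?_⟩
        simp only [mem_preimage, mem_setOf_eq]
        intro heq
        exact hsne (by rw [heq, hF'def]; simp only [if_pos hsQ])
      · exfalso
        apply hsne
        have h1 : X s ∉ Q := by rw [hssup]; exact hQnosup s hs0 hstalls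
        have h2 : F' s = 0 := by simp only [hF'def, if_neg h1]
        rw [h2, hssup, hfe s hs0 hstalls]
    have hmaps : Set.MapsTo X (Mov ∩ X ⁻¹' {y : ℝ | f y ≠ fr y}) {y : ℝ | f y ≠ fr y} :=
      fun s hs => hs.2
    have hinj2 : Set.InjOn X (Mov ∩ X ⁻¹' {y : ℝ | f y ≠ fr y}) :=
      hinj.mono Set.inter_subset_left
    have hcnt : Set.Countable bad :=
      Set.Countable.mono hbadsub (hmaps.countable_of_injOn hinj2 hD)
    have hnull : volume bad = 0 := hcnt.measure_zero _
    apply intervalIntegral.integral_congr_ae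
    rw [ae_iff]
    refine measure_mono_null ?_ hnull
    intro x hx
    rw [mem_setOf_eq, Classical.not_imp] at hx
    have hxI : x ∈ Ioc 0 t := by rw [← Set.uIoc_of_le ht]; exact hx.1
    exact ⟨hxI.1.le, hx.2⟩
  refine ⟨X, hX0, fun t ht => ?_⟩
  rw [hae t ht, hFTC t ht]; ring


end Cara

open Cara in
/-- Under the assumptions (A1)-(A2), for every `x₀` there exists at least one global
Carathéodory solution of `ẋ = f(x)`, `x(0) = x₀`. -/
theorem caratheodory_solution_exists
    (f fl fr : ℝ → ℝ) (M : ℝ)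
    (hbd : ∀ x : ℝ, |f x| ≤ M)
    (hl : ∀ x : ℝ, Tendsto f (𝓝[<] x) (𝓝 (fl x)))
    (hr : ∀ x : ℝ, Tendsto f (𝓝[>] x) (𝓝 (fr x)))
    (hnj : ∀ y : ℝ, (fl y * fr y = 0 ∨ (0 < fl y ∧ fr y < 0)) → f y = 0)
    (x₀ : ℝ) :
    ∃ x : ℝ → ℝ, x 0 = x₀ ∧
      ∀ t : ℝ, 0 ≤ t → x t = x₀ + ∫ s in (0:ℝ)..t, f (x s) := by
  by_cases hf0 : f x₀ = 0
  · exact ⟨fun _ => x₀, rfl, fun t ht => by simp [hf0]⟩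
  have hfr0 : fr x₀ ≠ 0 := fun h => hf0 (hnj x₀ (Or.inl (by rw [h, mul_zero])))
  have hfl0 : fl x₀ ≠ 0 := fun h => hf0 (hnj x₀ (Or.inl (by rw [h, zero_mul])))
  rcases lt_or_gt_of_ne hfr0 with hfrneg | hfrpos
  · -- decreasing case, solve the reflected problem
    have hflneg : fl x₀ < 0 := by
      rcases lt_or_gt_of_ne hfl0 with h | h
      · exact h
      · exact absurd (hnj x₀ (Or.inr ⟨h, hfrneg⟩)) hf0
    have hnegIio : ∀ a : ℝ, Tendsto (fun z : ℝ => -z) (𝓝[<] a) (𝓝[>] (-a)) := by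
      intro a
      refine tendsto_nhdsWithin_of_tendsto_nhds_of_eventually_within _
        ((continuous_neg.tendsto a).mono_left nhdsWithin_le_nhds) ?_
      filter_upwards [self_mem_nhdsWithin] with z hz
      exact Set.mem_Ioi.2 (neg_lt_neg hz)
    have hnegIoi : ∀ a : ℝ, Tendsto (fun z : ℝ => -z) (𝓝[>] a) (𝓝[<] (-a)) := by
      intro a
      refine tendsto_nhdsWithin_of_tendsto_nhds_of_eventually_within _
        ((continuous_neg.tendsto a).mono_left nhdsWithin_le_nhds) ?_
      filter_upwards [self_mem_nhdsWithin] with z hz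
      exact Set.mem_Iio.2 (neg_lt_neg hz)
    obtain ⟨ysol, hy0, hyeq⟩ :=
      forward_pos (fun y => -f (-y)) (fun y => -fr (-y)) (fun y => -fl (-y)) M
        (fun y => by simpa [abs_neg] using hbd (-y))
        (fun y => by
          have h1 : Tendsto (fun z : ℝ => f (-z)) (𝓝[<] y) (𝓝 (fr (-y))) :=
            (hr (-y)).comp (hnegIio y)
          exact h1.neg)
        (fun y => by
          have h1 : Tendsto (fun z : ℝ => f (-z)) (𝓝[>] y) (𝓝 (fl (-y))) :=
            (hl (-y)).comp (hnegIoi y)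
          exact h1.neg)
        (fun y hy => by
          simp only [neg_eq_zero]
          apply hnj (-y)
          rcases hy with h | h
          · left
            have h' : -fr (-y) * -fl (-y) = 0 := h
            have h2 : fr (-y) * fl (-y) = 0 := by rwa [neg_mul_neg] at h'
            rw [mul_comm] at h2
            exact h2
          · right
            have h1 : 0 < -fr (-y) := h.1
            have h2 : -fl (-y) < 0 := h.2
            exact ⟨by linarith, by linarith⟩)
        (-x₀)
        (by simpa using hflneg)
    refine ⟨fun t => -(ysol t), by show -ysol 0 = x₀; rw [hy0]; ring, fun t ht => ?_⟩
    have heq := hyeq t ht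
    have h3 : (∫ s in (0:ℝ)..t, -f (-ysol s)) = -∫ s in (0:ℝ)..t, f (-ysol s) :=
      intervalIntegral.integral_neg
    show -ysol t = x₀ + ∫ s in (0:ℝ)..t, f (-ysol s)
    rw [heq, h3]
    ring
  · exact forward_pos f fl fr M hbd hl hr hnj x₀ hfrpos
end

section
/- Let a < 0 < b, and for σ > 0 let u_σ : [-1,1] → ℝ be the strictly increasing solution of (σ²/2)u'' + g_σ(y)u' = 0, u(-1) = -1, u(1) = 1, where g_σ = a/√σ on (-1,0) and b/√σ on (0,1). Then as σ → 0+, sup{u_σ(x) : x ∈ [-1, -√σ/3]} → -1 and inf{u_σ(x) : x ∈ [√σ/3, 1]} → 1. -/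
open Real Set Filter Topology

/-- The explicit strictly increasing solution `u_σ` of `(σ²/2)u'' + g_σ u' = 0` on
`[-1,1]` with `u(-1) = -1`, `u(1) = 1`, `g_σ = a/√σ` on `(-1,0)`, `b/√σ` on `(0,1)`. -/
noncomputable def uSigma (a b σ y : ℝ) : ℝ :=
  let α := 2 * a / σ ^ ((3:ℝ)/2)
  let β := 2 * b / σ ^ ((3:ℝ)/2)
  let D := b * (Real.exp α - 1) + a * (1 - Real.exp (-β))
  if y ≤ 0 then -1 + 2 * b * (Real.exp α - Real.exp (-(α * y))) / D
  else 1 + 2 * a * (Real.exp (-β) - Real.exp (-(β * y))) / D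

lemma left_bounds (a b : ℝ) (ha : a < 0) (hb : 0 < b) (σ : ℝ) (hσ : 0 < σ)
    (y : ℝ) (hy1 : -1 ≤ y) (hy2 : y ≤ -(Real.sqrt σ / 3)) :
    -1 ≤ uSigma a b σ y ∧
    uSigma a b σ y ≤ -1 + 2 * Real.exp (2*a/(3*σ)) / (1 - Real.exp (2*a/σ^((3:ℝ)/2))) := by
  have hp : (0:ℝ) < σ ^ ((3:ℝ)/2) := Real.rpow_pos_of_pos hσ _
  set α := 2 * a / σ ^ ((3:ℝ)/2) with hαdef
  set β := 2 * b / σ ^ ((3:ℝ)/2) with hβdef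
  have hα : α < 0 := div_neg_of_neg_of_pos (by linarith) hp
  have hβ : 0 < β := div_pos (by linarith) hp
  have he1 : Real.exp α < 1 := Real.exp_lt_one_iff.mpr hα
  have he2 : Real.exp (-β) < 1 := Real.exp_lt_one_iff.mpr (by linarith)
  set D := b * (Real.exp α - 1) + a * (1 - Real.exp (-β)) with hDdef
  have hD : D < 0 := by
    have : b * (Real.exp α - 1) < 0 := mul_neg_of_pos_of_neg hb (by linarith)
    have : a * (1 - Real.exp (-β)) < 0 := mul_neg_of_neg_of_pos ha (by linarith)
    nlinarith [mul_neg_of_pos_of_neg hb (show Real.exp α - 1 < 0 by linarith)]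
  have hy0 : y ≤ 0 := le_trans hy2 (neg_nonpos.mpr (by positivity))
  have hval : uSigma a b σ y = -1 + 2 * b * (Real.exp α - Real.exp (-(α * y))) / D := by
    simp only [uSigma, if_pos hy0, hαdef, hβdef, hDdef]
  -- numerator sign : α ≤ -(α*y)
  have hnum : Real.exp α ≤ Real.exp (-(α * y)) := by
    apply Real.exp_le_exp.mpr
    nlinarith [mul_nonpos_of_nonpos_of_nonneg hα.le (show (0:ℝ) ≤ 1 + y by linarith)]
  constructor
  · rw [hval]
    have h1 : 2 * b * (Real.exp α - Real.exp (-(α * y))) ≤ 0 :=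
      mul_nonpos_of_nonneg_of_nonpos (by positivity) (by linarith)
    have := div_nonneg_of_nonpos h1 hD.le
    linarith
  · rw [hval]
    have hE : Real.exp (-(α * y)) ≤ Real.exp (2*a/(3*σ)) := by
      apply Real.exp_le_exp.mpr
      have hmul : (-α) * y ≤ (-α) * (-(Real.sqrt σ / 3)) :=
        mul_le_mul_of_nonneg_left hy2 (by linarith)
      have hsq : Real.sqrt σ = σ ^ ((1:ℝ)/2) := Real.sqrt_eq_rpow σ
      have hkey : (-α) * (-(Real.sqrt σ / 3)) = 2*a/(3*σ) := by
        have h32 : σ ^ ((3:ℝ)/2) = σ * σ ^ ((1:ℝ)/2) := by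
          rw [show (3:ℝ)/2 = 1 + 1/2 by norm_num, Real.rpow_add hσ, Real.rpow_one]
        have hhalf : (0:ℝ) < σ ^ ((1:ℝ)/2) := Real.rpow_pos_of_pos hσ _
        rw [hαdef, hsq, h32]
        field_simp
      calc -(α * y) = (-α) * y := by ring
        _ ≤ _ := le_of_le_of_eq hmul hkey
    -- rewrite ratio with positive denominator
    have hDne : D ≠ 0 := hD.ne
    have hposdenom : 0 < -D := by linarith
    have hbound : 2 * b * (Real.exp α - Real.exp (-(α * y))) / D
        ≤ 2 * Real.exp (2*a/(3*σ)) / (1 - Real.exp α) := by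
      have hrw : 2 * b * (Real.exp α - Real.exp (-(α * y))) / D
          = 2 * b * (Real.exp (-(α * y)) - Real.exp α) / (-D) := by
        rw [div_neg, ← neg_div]; ring_nf
      rw [hrw]
      have hDge : b * (1 - Real.exp α) ≤ -D := by
        nlinarith [mul_nonpos_of_nonpos_of_nonneg ha.le (show (0:ℝ) ≤ 1 - Real.exp (-β) by linarith)]
      calc 2 * b * (Real.exp (-(α * y)) - Real.exp α) / (-D)
          ≤ 2 * b * Real.exp (2*a/(3*σ)) / (b * (1 - Real.exp α)) :=
            div_le_div₀ (by positivity) (by nlinarith [Real.exp_pos α])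
              (by nlinarith) hDge
        _ = 2 * Real.exp (2*a/(3*σ)) / (1 - Real.exp α) := by
            rw [mul_comm (2:ℝ) b, mul_assoc, mul_div_mul_left _ _ hb.ne']
    linarith

lemma right_bounds (a b : ℝ) (ha : a < 0) (hb : 0 < b) (σ : ℝ) (hσ : 0 < σ)
    (y : ℝ) (hy1 : Real.sqrt σ / 3 ≤ y) (hy2 : y ≤ 1) :
    1 - 2 * Real.exp ((-(2*b))/(3*σ)) / (1 - Real.exp ((-(2*b))/σ^((3:ℝ)/2)))
      ≤ uSigma a b σ y ∧ uSigma a b σ y ≤ 1 := by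
  have hp : (0:ℝ) < σ ^ ((3:ℝ)/2) := Real.rpow_pos_of_pos hσ _
  set α := 2 * a / σ ^ ((3:ℝ)/2) with hαdef
  set β := 2 * b / σ ^ ((3:ℝ)/2) with hβdef
  have hα : α < 0 := div_neg_of_neg_of_pos (by linarith) hp
  have hβ : 0 < β := div_pos (by linarith) hp
  have he1 : Real.exp α < 1 := Real.exp_lt_one_iff.mpr hα
  have he2 : Real.exp (-β) < 1 := Real.exp_lt_one_iff.mpr (by linarith)
  set D := b * (Real.exp α - 1) + a * (1 - Real.exp (-β)) with hDdef
  have hD : D < 0 := by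
    nlinarith [mul_neg_of_pos_of_neg hb (show Real.exp α - 1 < 0 by linarith),
      mul_neg_of_neg_of_pos ha (show (0:ℝ) < 1 - Real.exp (-β) by linarith)]
  have hy0 : ¬ y ≤ 0 := by
    have : 0 < Real.sqrt σ := Real.sqrt_pos.mpr hσ
    push_neg; linarith
  have hval : uSigma a b σ y = 1 + 2 * a * (Real.exp (-β) - Real.exp (-(β * y))) / D := by
    simp only [uSigma, if_neg hy0, hαdef, hβdef, hDdef]
  have hnum : Real.exp (-β) ≤ Real.exp (-(β * y)) := by
    apply Real.exp_le_exp.mpr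
    nlinarith
  have hnegb : Real.exp (-β) = Real.exp ((-(2*b))/σ^((3:ℝ)/2)) := by
    rw [hβdef, neg_div]
  constructor
  · rw [hval]
    have hE : Real.exp (-(β * y)) ≤ Real.exp ((-(2*b))/(3*σ)) := by
      apply Real.exp_le_exp.mpr
      have hmul : β * (Real.sqrt σ / 3) ≤ β * y := mul_le_mul_of_nonneg_left hy1 hβ.le
      have hsq : Real.sqrt σ = σ ^ ((1:ℝ)/2) := Real.sqrt_eq_rpow σ
      have hkey : β * (Real.sqrt σ / 3) = 2*b/(3*σ) := by
        have h32 : σ ^ ((3:ℝ)/2) = σ * σ ^ ((1:ℝ)/2) := by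
          rw [show (3:ℝ)/2 = 1 + 1/2 by norm_num, Real.rpow_add hσ, Real.rpow_one]
        have hhalf : (0:ℝ) < σ ^ ((1:ℝ)/2) := Real.rpow_pos_of_pos hσ _
        rw [hβdef, hsq, h32]
        field_simp
      have : 2*b/(3*σ) ≤ β * y := hkey ▸ hmul
      have heq : (-(2*b))/(3*σ) = -(2*b/(3*σ)) := by ring
      rw [heq]
      linarith
    have hDne : D ≠ 0 := hD.ne
    have hposdenom : 0 < -D := by linarith
    have hbound : 2 * (-a) * (Real.exp (-(β * y)) - Real.exp (-β)) / (-D)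
        ≤ 2 * Real.exp ((-(2*b))/(3*σ)) / (1 - Real.exp (-β)) := by
      have hDge : (-a) * (1 - Real.exp (-β)) ≤ -D := by
        nlinarith [mul_nonneg hb.le (show (0:ℝ) ≤ 1 - Real.exp α by linarith)]
      calc 2 * (-a) * (Real.exp (-(β * y)) - Real.exp (-β)) / (-D)
          ≤ 2 * (-a) * Real.exp ((-(2*b))/(3*σ)) / ((-a) * (1 - Real.exp (-β))) :=
            div_le_div₀ (mul_nonneg (by linarith) (Real.exp_pos _).le) (by nlinarith [Real.exp_pos (-β)])
              (by nlinarith) hDge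
        _ = 2 * Real.exp ((-(2*b))/(3*σ)) / (1 - Real.exp (-β)) := by
            rw [mul_comm (2:ℝ) (-a), mul_assoc, mul_div_mul_left _ _ (by linarith : (-a) ≠ 0)]
    have hrw : 2 * a * (Real.exp (-β) - Real.exp (-(β * y))) / D
        = -(2 * (-a) * (Real.exp (-(β * y)) - Real.exp (-β)) / (-D)) := by
      rw [div_neg, neg_neg]; ring_nf
    rw [hrw, ← hnegb]
    linarith
  · rw [hval]
    have h1 : 0 ≤ 2 * a * (Real.exp (-β) - Real.exp (-(β * y))) := by nlinarith
    have := div_nonpos_iff.mpr (Or.inl ⟨h1, hD.le⟩)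
    linarith

lemma tendsto_c_div (c : ℝ) (hc : c < 0) :
    Tendsto (fun σ : ℝ => c / σ) (𝓝[>] (0:ℝ)) atBot := by
  have h := (tendsto_const_mul_atBot_of_neg hc).mpr (tendsto_inv_nhdsGT_zero (𝕜 := ℝ))
  simpa [div_eq_mul_inv] using h

lemma tendsto_rpow32 : Tendsto (fun σ : ℝ => σ ^ ((3:ℝ)/2)) (𝓝[>] (0:ℝ)) (𝓝[>] (0:ℝ)) := by
  rw [tendsto_nhdsWithin_iff]
  constructor
  · have hc : ContinuousAt (fun x : ℝ => x ^ ((3:ℝ)/2)) 0 :=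
      Real.continuousAt_rpow_const 0 _ (Or.inr (by norm_num))
    have h : Tendsto (fun x : ℝ => x ^ ((3:ℝ)/2)) (𝓝[>] (0:ℝ)) (𝓝 ((0:ℝ) ^ ((3:ℝ)/2))) :=
      hc.tendsto.mono_left nhdsWithin_le_nhds
    simpa [Real.zero_rpow (show ((3:ℝ)/2) ≠ 0 by norm_num)] using h
  · filter_upwards [self_mem_nhdsWithin] with σ hσ
    exact Real.rpow_pos_of_pos hσ _

lemma tendsto_exp_scaled (c : ℝ) (hc : c < 0) :
    Tendsto (fun σ : ℝ => Real.exp (c / (3*σ))) (𝓝[>] (0:ℝ)) (𝓝 0) := by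
  apply Real.tendsto_exp_atBot.comp
  have h := tendsto_c_div (c/3) (by linarith)
  exact h.congr (fun σ => by ring)

lemma tendsto_exp_rpow (c : ℝ) (hc : c < 0) :
    Tendsto (fun σ : ℝ => Real.exp (c / σ ^ ((3:ℝ)/2))) (𝓝[>] (0:ℝ)) (𝓝 0) := by
  apply Real.tendsto_exp_atBot.comp
  exact (tendsto_c_div c hc).comp tendsto_rpow32

/-- As `σ → 0+`, `sup {u_σ(x) : x ∈ [-1, -√σ/3]} → -1` and
`inf {u_σ(x) : x ∈ [√σ/3, 1]} → 1`. -/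
theorem uSigma_limits
    (a b : ℝ) (ha : a < 0) (hb : 0 < b) :
    Tendsto (fun σ : ℝ => sSup (uSigma a b σ '' Icc (-1:ℝ) (-(Real.sqrt σ / 3))))
      (𝓝[>] 0) (𝓝 (-1)) ∧
    Tendsto (fun σ : ℝ => sInf (uSigma a b σ '' Icc (Real.sqrt σ / 3) 1))
      (𝓝[>] 0) (𝓝 1) := by
  have hmem : Ioc (0:ℝ) 9 ∈ 𝓝[>] (0:ℝ) := Ioc_mem_nhdsGT_of_mem ⟨le_refl 0, by norm_num⟩
  have hsqrt3 : ∀ σ ∈ Ioc (0:ℝ) 9, Real.sqrt σ ≤ 3 := by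
    intro σ hσ
    have : Real.sqrt σ ≤ Real.sqrt 9 := Real.sqrt_le_sqrt hσ.2
    have h9 : Real.sqrt 9 = 3 := by
      rw [show (9:ℝ) = 3^2 by norm_num, Real.sqrt_sq (by norm_num : (0:ℝ) ≤ 3)]
    linarith [h9 ▸ this]
  constructor
  · -- sup part
    have hf : Tendsto (fun σ : ℝ =>
        -1 + 2 * Real.exp (2*a/(3*σ)) / (1 - Real.exp (2*a/σ^((3:ℝ)/2))))
        (𝓝[>] (0:ℝ)) (𝓝 (-1)) := by
      have h1 : Tendsto (fun σ : ℝ => Real.exp (2*a/(3*σ))) (𝓝[>] (0:ℝ)) (𝓝 0) :=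
        tendsto_exp_scaled (2*a) (by linarith)
      have h2 : Tendsto (fun σ : ℝ => Real.exp (2*a/σ^((3:ℝ)/2))) (𝓝[>] (0:ℝ)) (𝓝 0) :=
        tendsto_exp_rpow (2*a) (by linarith)
      have h3 : Tendsto (fun σ : ℝ =>
          -1 + 2 * Real.exp (2*a/(3*σ)) / (1 - Real.exp (2*a/σ^((3:ℝ)/2))))
          (𝓝[>] (0:ℝ)) (𝓝 (-1 + 2*(0:ℝ)/(1-0))) :=
        tendsto_const_nhds.add ((tendsto_const_nhds.mul h1).div
          (tendsto_const_nhds.sub h2) (by norm_num))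
      norm_num at h3
      exact h3
    refine tendsto_of_tendsto_of_tendsto_of_le_of_le' tendsto_const_nhds hf ?_ ?_
    · filter_upwards [hmem] with σ hσ
      have hmem1 : (-1:ℝ) ∈ Icc (-1:ℝ) (-(Real.sqrt σ/3)) :=
        ⟨le_refl _, by have := hsqrt3 σ hσ; linarith⟩
      have hbdd : BddAbove (uSigma a b σ '' Icc (-1:ℝ) (-(Real.sqrt σ/3))) := by
        refine ⟨-1 + 2 * Real.exp (2*a/(3*σ)) / (1 - Real.exp (2*a/σ^((3:ℝ)/2))), ?_⟩
        rintro x ⟨y, hy, rfl⟩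
        exact (left_bounds a b ha hb σ hσ.1 y hy.1 hy.2).2
      exact le_trans (left_bounds a b ha hb σ hσ.1 (-1) le_rfl hmem1.2).1
        (le_csSup hbdd (mem_image_of_mem _ hmem1))
    · filter_upwards [hmem] with σ hσ
      have hmem1 : (-1:ℝ) ∈ Icc (-1:ℝ) (-(Real.sqrt σ/3)) :=
        ⟨le_refl _, by have := hsqrt3 σ hσ; linarith⟩
      refine csSup_le ⟨_, mem_image_of_mem _ hmem1⟩ ?_
      rintro x ⟨y, hy, rfl⟩
      exact (left_bounds a b ha hb σ hσ.1 y hy.1 hy.2).2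
  · -- inf part
    have hg : Tendsto (fun σ : ℝ =>
        1 - 2 * Real.exp ((-(2*b))/(3*σ)) / (1 - Real.exp ((-(2*b))/σ^((3:ℝ)/2))))
        (𝓝[>] (0:ℝ)) (𝓝 1) := by
      have h1 : Tendsto (fun σ : ℝ => Real.exp ((-(2*b))/(3*σ))) (𝓝[>] (0:ℝ)) (𝓝 0) :=
        tendsto_exp_scaled (-(2*b)) (by linarith)
      have h2 : Tendsto (fun σ : ℝ => Real.exp ((-(2*b))/σ^((3:ℝ)/2))) (𝓝[>] (0:ℝ)) (𝓝 0) :=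
        tendsto_exp_rpow (-(2*b)) (by linarith)
      have h3 : Tendsto (fun σ : ℝ =>
          1 - 2 * Real.exp ((-(2*b))/(3*σ)) / (1 - Real.exp ((-(2*b))/σ^((3:ℝ)/2))))
          (𝓝[>] (0:ℝ)) (𝓝 (1 - 2*(0:ℝ)/(1-0))) :=
        tendsto_const_nhds.sub ((tendsto_const_nhds.mul h1).div
          (tendsto_const_nhds.sub h2) (by norm_num))
      norm_num at h3
      exact h3
    refine tendsto_of_tendsto_of_tendsto_of_le_of_le' hg tendsto_const_nhds ?_ ?_
    · filter_upwards [hmem] with σ hσ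
      have hmem1 : (1:ℝ) ∈ Icc (Real.sqrt σ/3) (1:ℝ) :=
        ⟨by have := hsqrt3 σ hσ; linarith, le_refl _⟩
      refine le_csInf ⟨_, mem_image_of_mem _ hmem1⟩ ?_
      rintro x ⟨y, hy, rfl⟩
      exact (right_bounds a b ha hb σ hσ.1 y hy.1 hy.2).1
    · filter_upwards [hmem] with σ hσ
      have hmem1 : (1:ℝ) ∈ Icc (Real.sqrt σ/3) (1:ℝ) :=
        ⟨by have := hsqrt3 σ hσ; linarith, le_refl _⟩
      have hbdd : BddBelow (uSigma a b σ '' Icc (Real.sqrt σ/3) (1:ℝ)) := by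
        refine ⟨1 - 2 * Real.exp ((-(2*b))/(3*σ)) / (1 - Real.exp ((-(2*b))/σ^((3:ℝ)/2))), ?_⟩
        rintro x ⟨y, hy, rfl⟩
        exact (right_bounds a b ha hb σ hσ.1 y hy.1 hy.2).1
      exact le_trans (csInf_le hbdd (mem_image_of_mem _ hmem1))
        (right_bounds a b ha hb σ hσ.1 1 hmem1.1 le_rfl).2
end

section
/- Let a < 0 < b and for σ > 0 small let u_σ : [-1,1] → [-1,1] be the strictly increasing continuous solution as above with u_σ(-1) = -1, u_σ(1) = 1. For any θ ∈ (0,1), for all sufficiently small σ > 0 there exists a unique ζ_σ ∈ [-√σ, √σ] such that u_σ(ζ_σ) = 2θ - 1. -/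
open Real Set Filter Topology

section Aux

variable {a b σ : ℝ}

lemma uSigma_D_neg (ha : a < 0) (hb : 0 < b) (hσ : 0 < σ) :
    b * (Real.exp (2 * a / σ ^ ((3:ℝ)/2)) - 1)
      + a * (1 - Real.exp (-(2 * b / σ ^ ((3:ℝ)/2)))) < 0 := by
  have hpow : (0:ℝ) < σ ^ ((3:ℝ)/2) := Real.rpow_pos_of_pos hσ _
  have hα : 2 * a / σ ^ ((3:ℝ)/2) < 0 := div_neg_of_neg_of_pos (by linarith) hpow
  have hβ : -(2 * b / σ ^ ((3:ℝ)/2)) < 0 := by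
    have : 0 < 2 * b / σ ^ ((3:ℝ)/2) := div_pos (by linarith) hpow
    linarith
  have h1 : Real.exp (2 * a / σ ^ ((3:ℝ)/2)) < 1 := Real.exp_lt_one_iff.mpr hα
  have h2 : Real.exp (-(2 * b / σ ^ ((3:ℝ)/2))) < 1 := Real.exp_lt_one_iff.mpr hβ
  nlinarith

lemma uSigma_strictMono (ha : a < 0) (hb : 0 < b) (hσ : 0 < σ) :
    StrictMono (uSigma a b σ) := by
  have hpow : (0:ℝ) < σ ^ ((3:ℝ)/2) := Real.rpow_pos_of_pos hσ _
  set α := 2 * a / σ ^ ((3:ℝ)/2) with hαdef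
  set β := 2 * b / σ ^ ((3:ℝ)/2) with hβdef
  set D := b * (Real.exp α - 1) + a * (1 - Real.exp (-β)) with hDdef
  have hα : α < 0 := div_neg_of_neg_of_pos (by linarith) hpow
  have hβ : 0 < β := div_pos (by linarith) hpow
  have hD : D < 0 := uSigma_D_neg ha hb hσ
  have hDinv : D⁻¹ < 0 := inv_neg''.mpr hD
  -- first branch strictly increasing
  have hf : ∀ y₁ y₂ : ℝ, y₁ < y₂ →
      -1 + 2 * b * (Real.exp α - Real.exp (-(α * y₁))) / D
        < -1 + 2 * b * (Real.exp α - Real.exp (-(α * y₂))) / D := by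
    intro y₁ y₂ h
    have he : Real.exp (-(α * y₁)) < Real.exp (-(α * y₂)) := by
      apply Real.exp_lt_exp.mpr; nlinarith
    have hnum : 2 * b * (Real.exp α - Real.exp (-(α * y₂)))
        < 2 * b * (Real.exp α - Real.exp (-(α * y₁))) := by nlinarith
    have := mul_lt_mul_of_neg_right hnum hDinv
    rw [div_eq_mul_inv, div_eq_mul_inv]
    linarith
  -- second branch strictly increasing
  have hg : ∀ y₁ y₂ : ℝ, y₁ < y₂ →
      1 + 2 * a * (Real.exp (-β) - Real.exp (-(β * y₁))) / D
        < 1 + 2 * a * (Real.exp (-β) - Real.exp (-(β * y₂))) / D := by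
    intro y₁ y₂ h
    have he : Real.exp (-(β * y₂)) < Real.exp (-(β * y₁)) := by
      apply Real.exp_lt_exp.mpr; nlinarith
    have hnum : 2 * a * (Real.exp (-β) - Real.exp (-(β * y₂)))
        < 2 * a * (Real.exp (-β) - Real.exp (-(β * y₁))) := by nlinarith
    have := mul_lt_mul_of_neg_right hnum hDinv
    rw [div_eq_mul_inv, div_eq_mul_inv]
    linarith
  -- matching at 0
  have hmatch : -1 + 2 * b * (Real.exp α - Real.exp (-(α * 0))) / D
      = 1 + 2 * a * (Real.exp (-β) - Real.exp (-(β * 0))) / D := by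
    have hD0 : D ≠ 0 := ne_of_lt hD
    rw [mul_zero, mul_zero, neg_zero, Real.exp_zero]
    field_simp
    rw [hDdef]; ring
  intro y₁ y₂ h
  unfold uSigma
  simp only [← hαdef, ← hβdef, ← hDdef]
  by_cases h2 : y₂ ≤ 0
  · rw [if_pos (h.le.trans h2), if_pos h2]
    exact hf _ _ h
  · push_neg at h2
    rw [if_neg (not_le.mpr h2)]
    by_cases h1 : y₁ ≤ 0
    · rw [if_pos h1]
      have step2 : 1 + 2 * a * (Real.exp (-β) - Real.exp (-(β * 0))) / D
          < 1 + 2 * a * (Real.exp (-β) - Real.exp (-(β * y₂))) / D := hg _ _ h2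
      rcases eq_or_lt_of_le h1 with rfl | h1'
      · rw [hmatch]; exact step2
      · exact lt_trans (lt_of_lt_of_le (hf _ _ h1') (le_of_eq hmatch)) step2
    · push_neg at h1
      rw [if_neg (not_le.mpr h1)]
      exact hg _ _ h

lemma uSigma_continuous (ha : a < 0) (hb : 0 < b) (hσ : 0 < σ) :
    Continuous (uSigma a b σ) := by
  have hpow : (0:ℝ) < σ ^ ((3:ℝ)/2) := Real.rpow_pos_of_pos hσ _
  set α := 2 * a / σ ^ ((3:ℝ)/2) with hαdef
  set β := 2 * b / σ ^ ((3:ℝ)/2) with hβdef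
  set D := b * (Real.exp α - 1) + a * (1 - Real.exp (-β)) with hDdef
  have hD : D < 0 := uSigma_D_neg ha hb hσ
  have hD0 : D ≠ 0 := ne_of_lt hD
  have : uSigma a b σ = fun y =>
      if y ≤ 0 then -1 + 2 * b * (Real.exp α - Real.exp (-(α * y))) / D
      else 1 + 2 * a * (Real.exp (-β) - Real.exp (-(β * y))) / D := by
    funext y; unfold uSigma; simp only [← hαdef, ← hβdef, ← hDdef]
  rw [this]
  apply Continuous.if_le
  · fun_prop
  · fun_prop
  · exact continuous_id
  · exact continuous_const
  · intro y hy
    subst hy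
    rw [mul_zero, mul_zero, neg_zero, Real.exp_zero]
    field_simp
    rw [hDdef]; ring

lemma tendsto_exp_div_rpow {c p : ℝ} (hc : c < 0) (hp : 0 < p) :
    Tendsto (fun σ : ℝ => Real.exp (c / σ ^ p)) (𝓝[>] (0:ℝ)) (𝓝 0) := by
  have h1 : Tendsto (fun σ : ℝ => σ ^ p) (𝓝[>] (0:ℝ)) (𝓝[>] (0:ℝ)) := by
    rw [tendsto_nhdsWithin_iff]
    constructor
    · have := (Real.continuousAt_rpow_const 0 p (Or.inr hp.le)).tendsto
      rw [Real.zero_rpow (ne_of_gt hp)] at this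
      exact this.mono_left nhdsWithin_le_nhds
    · filter_upwards [self_mem_nhdsWithin] with x hx
      exact Real.rpow_pos_of_pos hx _
  have h2 : Tendsto (fun σ : ℝ => (σ ^ p)⁻¹) (𝓝[>] (0:ℝ)) atTop :=
    tendsto_inv_nhdsGT_zero.comp h1
  have h3 : Tendsto (fun σ : ℝ => c / σ ^ p) (𝓝[>] (0:ℝ)) atBot := by
    simp only [div_eq_mul_inv]
    exact (tendsto_const_mul_atBot_of_neg hc).mpr h2
  exact Real.tendsto_exp_atBot.comp h3

end Aux

/-- For every `θ ∈ (0,1)`, for all sufficiently small `σ > 0` there is a unique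
`ζ ∈ [-√σ, √σ]` with `u_σ(ζ) = 2θ - 1`. -/
theorem uSigma_intermediate_point
    (a b : ℝ) (ha : a < 0) (hb : 0 < b) (θ : ℝ) (hθ : θ ∈ Ioo (0:ℝ) 1) :
    ∃ σ₀ > 0, ∀ σ : ℝ, 0 < σ → σ < σ₀ →
      ∃! ζ : ℝ, ζ ∈ Icc (-Real.sqrt σ) (Real.sqrt σ) ∧
        uSigma a b σ ζ = 2 * θ - 1 := by
  set t := 2 * θ - 1 with htdef
  have ht1 : -1 < t := by simp only [htdef]; linarith [hθ.1]
  have ht2 : t < 1 := by simp only [htdef]; linarith [hθ.2]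
  -- limits of the basic exponentials
  have hE1 : Tendsto (fun σ : ℝ => Real.exp (2 * a / σ ^ ((3:ℝ)/2)))
      (𝓝[>] (0:ℝ)) (𝓝 0) := tendsto_exp_div_rpow (by linarith) (by norm_num)
  have hE2 : Tendsto (fun σ : ℝ => Real.exp (-(2 * b / σ ^ ((3:ℝ)/2))))
      (𝓝[>] (0:ℝ)) (𝓝 0) := by
    simpa only [neg_div] using
      tendsto_exp_div_rpow (c := -(2*b)) (by linarith) (p := (3:ℝ)/2) (by norm_num)
  have hE3 : Tendsto (fun σ : ℝ => Real.exp (2 * a / σ))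
      (𝓝[>] (0:ℝ)) (𝓝 0) := by
    have := tendsto_exp_div_rpow (c := 2*a) (by linarith) (p := (1:ℝ)) (by norm_num)
    simpa only [Real.rpow_one] using this
  have hE4 : Tendsto (fun σ : ℝ => Real.exp (-(2 * b / σ)))
      (𝓝[>] (0:ℝ)) (𝓝 0) := by
    have := tendsto_exp_div_rpow (c := -(2*b)) (by linarith) (p := (1:ℝ)) (by norm_num)
    simpa only [Real.rpow_one, neg_div] using this
  have hDlim : Tendsto (fun σ : ℝ => b * (Real.exp (2 * a / σ ^ ((3:ℝ)/2)) - 1)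
      + a * (1 - Real.exp (-(2 * b / σ ^ ((3:ℝ)/2))))) (𝓝[>] (0:ℝ))
      (𝓝 (b * ((0:ℝ) - 1) + a * (1 - 0))) :=
    (tendsto_const_nhds.mul (hE1.sub tendsto_const_nhds)).add
      (tendsto_const_nhds.mul (tendsto_const_nhds.sub hE2))
  have hDne : b * ((0:ℝ) - 1) + a * (1 - 0) ≠ 0 := by
    intro h; nlinarith
  -- the key algebraic identity for the argument ±√σ
  have hkey : ∀ σ : ℝ, 0 < σ →
      2 * a / σ ^ ((3:ℝ)/2) * Real.sqrt σ = 2 * a / σ ∧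
      2 * b / σ ^ ((3:ℝ)/2) * Real.sqrt σ = 2 * b / σ := by
    intro σ hσ
    have h32 : σ ^ ((3:ℝ)/2) = σ * σ ^ ((1:ℝ)/2) := by
      rw [show (3:ℝ)/2 = 1 + 1/2 by norm_num, Real.rpow_add hσ, Real.rpow_one]
    have hhalf : (0:ℝ) < σ ^ ((1:ℝ)/2) := Real.rpow_pos_of_pos hσ _
    rw [Real.sqrt_eq_rpow, h32]
    constructor <;> field_simp
  -- value at -√σ
  have hF : Tendsto (fun σ : ℝ => uSigma a b σ (-Real.sqrt σ)) (𝓝[>] (0:ℝ)) (𝓝 (-1)) := by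
    have heq : (fun σ : ℝ => -1 + 2 * b * (Real.exp (2 * a / σ ^ ((3:ℝ)/2))
          - Real.exp (2 * a / σ)) / (b * (Real.exp (2 * a / σ ^ ((3:ℝ)/2)) - 1)
          + a * (1 - Real.exp (-(2 * b / σ ^ ((3:ℝ)/2))))))
        =ᶠ[𝓝[>] (0:ℝ)] (fun σ : ℝ => uSigma a b σ (-Real.sqrt σ)) := by
      filter_upwards [self_mem_nhdsWithin] with σ hσ
      have hσ' : (0:ℝ) < σ := hσ
      unfold uSigma
      rw [if_pos (by simp)]
      simp only [mul_neg, neg_neg, (hkey σ hσ').1]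
    have := (tendsto_const_nhds.add
      ((tendsto_const_nhds.mul (hE1.sub hE3)).div hDlim hDne)).congr' heq
    simpa using this
  -- value at √σ
  have hG : Tendsto (fun σ : ℝ => uSigma a b σ (Real.sqrt σ)) (𝓝[>] (0:ℝ)) (𝓝 1) := by
    have heq : (fun σ : ℝ => 1 + 2 * a * (Real.exp (-(2 * b / σ ^ ((3:ℝ)/2)))
          - Real.exp (-(2 * b / σ))) / (b * (Real.exp (2 * a / σ ^ ((3:ℝ)/2)) - 1)
          + a * (1 - Real.exp (-(2 * b / σ ^ ((3:ℝ)/2))))))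
        =ᶠ[𝓝[>] (0:ℝ)] (fun σ : ℝ => uSigma a b σ (Real.sqrt σ)) := by
      filter_upwards [self_mem_nhdsWithin] with σ hσ
      have hσ' : (0:ℝ) < σ := hσ
      unfold uSigma
      rw [if_neg (not_le.mpr (Real.sqrt_pos.mpr hσ'))]
      simp only [(hkey σ hσ').2]
    have := (tendsto_const_nhds.add
      ((tendsto_const_nhds.mul (hE2.sub hE4)).div hDlim hDne)).congr' heq
    simpa using this
  -- combine to an eventual statement
  have hev : ∀ᶠ σ in 𝓝[>] (0:ℝ), uSigma a b σ (-Real.sqrt σ) < t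
      ∧ t < uSigma a b σ (Real.sqrt σ) :=
    (hF.eventually_lt_const ht1).and (hG.eventually_const_lt ht2)
  rw [eventually_iff, mem_nhdsGT_iff_exists_Ioo_subset] at hev
  obtain ⟨σ₀, hσ₀, hsub⟩ := hev
  refine ⟨σ₀, hσ₀, ?_⟩
  intro σ hσpos hσlt
  obtain ⟨hlt1, hlt2⟩ : uSigma a b σ (-Real.sqrt σ) < t
      ∧ t < uSigma a b σ (Real.sqrt σ) := hsub ⟨hσpos, hσlt⟩
  have hle : -Real.sqrt σ ≤ Real.sqrt σ := by
    have := Real.sqrt_nonneg σ; linarith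
  have hsm := uSigma_strictMono (a := a) (b := b) (σ := σ) ha hb hσpos
  have hivt := intermediate_value_Icc hle
    ((uSigma_continuous (a := a) (b := b) (σ := σ) ha hb hσpos).continuousOn)
  obtain ⟨ζ, hζmem, hζeq⟩ := hivt ⟨hlt1.le, hlt2.le⟩
  exact ⟨ζ, ⟨hζmem, hζeq⟩, fun y hy => hsm.injective (hy.2.trans hζeq.symm)⟩
end

section
/- Fix λ > 0 and s > 0, and define σ² /2 = (e^{2s}-1)² λ /(4s² e^{2s}), η = s·(e^s + e^{-s})/(e^s - e^{-s})·σ², and γ = -η/σ² = -s·(e^{2s}+1)/(e^{2s}-1). Then the function w(y) = (e^{(γ+s)y} - e^{(γ-s)y})/(e^{γ+s} - e^{γ-s}) satisfies the eigenvalue problem (σ²/2)w'' + η w' = -λ w on [0,1], with w(0) = 0, w'(1) = 0 and w(1) = 1, and w is increasing on [0,1]. -/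
open Real Set

/-- The eigenfunction `w(y) = (e^{(γ+s)y} - e^{(γ-s)y})/(e^{γ+s} - e^{γ-s})`. -/
noncomputable def wFun (γ s y : ℝ) : ℝ :=
  (Real.exp ((γ + s) * y) - Real.exp ((γ - s) * y)) /
    (Real.exp (γ + s) - Real.exp (γ - s))

/-- Fix `λ, s > 0` and set `σ²/2 = (e^{2s}-1)²λ/(4s²e^{2s})`,
`η = s(e^s+e^{-s})/(e^s-e^{-s})·σ²`, `γ = -η/σ²`.  Then `γ ± s` are the roots of
`(σ²/2)r² + ηr + λ = 0`, `γ = -s(e^{2s}+1)/(e^{2s}-1)`, and `w` solves the eigenvalue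
problem `(σ²/2)w'' + ηw' = -λw` on `[0,1]` with `w(0) = 0`, `w'(1) = 0`, `w(1) = 1`,
and `w` is increasing on `[0,1]`. -/
theorem eigenfunction_construction
    (lam s : ℝ) (hlam : 0 < lam) (hs : 0 < s)
    (σsq η γ : ℝ)
    (hσsq : σsq / 2 = (Real.exp (2*s) - 1)^2 * lam / (4 * s^2 * Real.exp (2*s)))
    (hη : η = s * (Real.exp s + Real.exp (-s)) / (Real.exp s - Real.exp (-s)) * σsq)
    (hγ : γ = -η / σsq) :
    γ = -(s * (Real.exp (2*s) + 1) / (Real.exp (2*s) - 1)) ∧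
    σsq / 2 * (γ + s)^2 + η * (γ + s) + lam = 0 ∧
    σsq / 2 * (γ - s)^2 + η * (γ - s) + lam = 0 ∧
    (∀ y ∈ Icc (0:ℝ) 1,
      σsq / 2 * deriv (deriv (wFun γ s)) y + η * deriv (wFun γ s) y
        = -(lam * wFun γ s y)) ∧
    wFun γ s 0 = 0 ∧ deriv (wFun γ s) 1 = 0 ∧ wFun γ s 1 = 1 ∧
    MonotoneOn (wFun γ s) (Icc (0:ℝ) 1) := by
  have hE : 1 < Real.exp (2*s) := by
    have := Real.exp_lt_exp.mpr (show (0:ℝ) < 2*s by linarith)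
    simpa using this
  set E := Real.exp (2*s) with hEdef
  have hE1 : (0:ℝ) < E - 1 := by linarith
  have hEpos : (0:ℝ) < E := by linarith
  have hes : Real.exp s * Real.exp s = E := by rw [← Real.exp_add, hEdef]; ring_nf
  have hesi : Real.exp s * Real.exp (-s) = 1 := by rw [← Real.exp_add]; simp
  have hsinh : (0:ℝ) < Real.exp s - Real.exp (-s) := by
    have := Real.exp_lt_exp.mpr (show -s < s by linarith)
    linarith
  have hσ : 0 < σsq := by
    have h2 : σsq = 2 * ((E - 1)^2 * lam / (4 * s^2 * E)) := by rw [← hσsq]; ring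
    rw [h2]; positivity
  have hσne : σsq ≠ 0 := ne_of_gt hσ
  -- key identity between cosh/sinh quotients
  have hEe : Real.exp (-s) * E = Real.exp s := by
    rw [hEdef, ← Real.exp_add]; ring_nf
  have hq : s * (Real.exp s + Real.exp (-s)) / (Real.exp s - Real.exp (-s))
      = s * (E + 1) / (E - 1) := by
    rw [div_eq_div_iff (ne_of_gt hsinh) (ne_of_gt hE1)]
    linear_combination (2*s) * hEe
  have hγval : γ = -(s * (E + 1) / (E - 1)) := by
    rw [hγ, hη, hq]; field_simp
  have ha : γ + s = -(2*s)/(E-1) := by rw [hγval]; field_simp; ring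
  have hb : γ - s = -(2*s*E)/(E-1) := by rw [hγval]; field_simp; ring
  have hab : γ - s = (γ + s) * E := by rw [ha, hb]; field_simp
  have hηγ : η = -γ * σsq := by
    rw [hγ]; field_simp
  have hσval : σsq = (E - 1)^2 * lam / (2 * s^2 * E) := by
    rw [show (E - 1)^2 * lam / (2 * s^2 * E) = 2 * ((E - 1)^2 * lam / (4 * s^2 * E)) by ring,
      ← hσsq]; ring
  have key : σsq * (γ^2 - s^2) = 2 * lam := by
    rw [hσval, hγval]; field_simp; ring
  have rootA : σsq / 2 * (γ + s)^2 + η * (γ + s) + lam = 0 := by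
    rw [hηγ]; linear_combination (-(1:ℝ)/2) * key
  have rootB : σsq / 2 * (γ - s)^2 + η * (γ - s) + lam = 0 := by
    rw [hηγ]; linear_combination (-(1:ℝ)/2) * key
  -- denominator
  have hD : (0:ℝ) < Real.exp (γ + s) - Real.exp (γ - s) := by
    have := Real.exp_lt_exp.mpr (show γ - s < γ + s by linarith)
    linarith
  have hDne : Real.exp (γ + s) - Real.exp (γ - s) ≠ 0 := ne_of_gt hD
  -- derivatives
  have hderiv : ∀ y, HasDerivAt (wFun γ s)
      (((γ+s) * Real.exp ((γ+s)*y) - (γ-s) * Real.exp ((γ-s)*y)) /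
        (Real.exp (γ + s) - Real.exp (γ - s))) y := by
    intro y
    have h1 : HasDerivAt (fun y => Real.exp ((γ+s)*y)) ((γ+s) * Real.exp ((γ+s)*y)) y := by
      simpa [mul_comm] using (((hasDerivAt_id y).const_mul (γ+s)).exp)
    have h2 : HasDerivAt (fun y => Real.exp ((γ-s)*y)) ((γ-s) * Real.exp ((γ-s)*y)) y := by
      simpa [mul_comm] using (((hasDerivAt_id y).const_mul (γ-s)).exp)
    exact (h1.sub h2).div_const _
  have hd1 : deriv (wFun γ s) = fun y =>
      ((γ+s) * Real.exp ((γ+s)*y) - (γ-s) * Real.exp ((γ-s)*y)) /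
        (Real.exp (γ + s) - Real.exp (γ - s)) :=
    funext fun y => (hderiv y).deriv
  have hderiv2 : ∀ y, HasDerivAt (deriv (wFun γ s))
      (((γ+s)^2 * Real.exp ((γ+s)*y) - (γ-s)^2 * Real.exp ((γ-s)*y)) /
        (Real.exp (γ + s) - Real.exp (γ - s))) y := by
    intro y
    rw [hd1]
    have h1 : HasDerivAt (fun y => (γ+s) * Real.exp ((γ+s)*y))
        ((γ+s)^2 * Real.exp ((γ+s)*y)) y := by
      have := (((hasDerivAt_id y).const_mul (γ+s)).exp).const_mul (γ+s)
      simpa [mul_comm, pow_two, mul_assoc, mul_left_comm] using this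
    have h2 : HasDerivAt (fun y => (γ-s) * Real.exp ((γ-s)*y))
        ((γ-s)^2 * Real.exp ((γ-s)*y)) y := by
      have := (((hasDerivAt_id y).const_mul (γ-s)).exp).const_mul (γ-s)
      simpa [mul_comm, pow_two, mul_assoc, mul_left_comm] using this
    exact (h1.sub h2).div_const _
  have hd2 : ∀ y, deriv (deriv (wFun γ s)) y =
      ((γ+s)^2 * Real.exp ((γ+s)*y) - (γ-s)^2 * Real.exp ((γ-s)*y)) /
        (Real.exp (γ + s) - Real.exp (γ - s)) :=
    fun y => (hderiv2 y).deriv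
  refine ⟨hγval, rootA, rootB, ?_, ?_, ?_, ?_, ?_⟩
  · -- ODE
    intro y _
    rw [hd2, hd1, wFun]
    set D := Real.exp (γ + s) - Real.exp (γ - s)
    linear_combination (Real.exp ((γ+s)*y)/D) * rootA - (Real.exp ((γ-s)*y)/D) * rootB
  · simp [wFun]
  · -- w'(1) = 0
    rw [hd1]
    simp only [mul_one]
    have hexpE : E * Real.exp (γ - s) = Real.exp (γ + s) := by
      rw [hEdef, ← Real.exp_add]; ring_nf
    have hnum : (γ+s) * Real.exp (γ+s) - (γ-s) * Real.exp (γ-s) = 0 := by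
      linear_combination (-(γ+s)) * hexpE - Real.exp (γ - s) * hab
    rw [hnum, zero_div]
  · rw [wFun]; simp only [mul_one]; exact div_self hDne
  · -- monotone
    have hdiff : Differentiable ℝ (wFun γ s) := fun y => (hderiv y).differentiableAt
    apply monotoneOn_of_deriv_nonneg (convex_Icc 0 1)
    · exact hdiff.continuous.continuousOn
    · exact hdiff.differentiableOn
    · intro x hx
      rw [interior_Icc] at hx
      rw [hd1]
      apply div_nonneg _ hD.le
      have hxle : Real.exp (2*s*x) ≤ E := by
        rw [hEdef]
        exact Real.exp_le_exp.mpr (by nlinarith [hx.2])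
      have hexp_split : Real.exp ((γ+s)*x) = Real.exp ((γ-s)*x) * Real.exp (2*s*x) := by
        rw [← Real.exp_add]; ring_nf
      have haneg : γ + s < 0 := by
        rw [ha]
        exact div_neg_of_neg_of_pos (by linarith) hE1
      have hrew : (γ+s) * Real.exp ((γ+s)*x) - (γ-s) * Real.exp ((γ-s)*x)
          = (-(γ+s)) * Real.exp ((γ-s)*x) * (E - Real.exp (2*s*x)) := by
        linear_combination (γ+s) * hexp_split - Real.exp ((γ-s)*x) * hab
      rw [hrew]
      exact mul_nonneg (mul_nonneg (by linarith) (Real.exp_pos _).le) (by linarith)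
end

section
/- With notation as in the upper-solution construction: if γ = -s(e^{2s}+1)/(e^{2s}-1) = -s_δ(e^{2s_δ(1+2δ)}+1)/(e^{2s_δ(1+2δ)}-1) with s, s_δ, δ > 0, then s ≤ s_δ ≤ s(1 + 2/(e^{2s}-1)) ≤ s + 1; in particular for s ≥ 1 and 0 < δ ≤ 1/2 one has s ≤ s_δ ≤ 2s and γ + s_δ = -2s_δ/(e^{2s_δ(1+2δ)}-1) ≤ -2s e^{-8s}. -/
open Real



lemma phi_hasDerivAt (x : ℝ) (hx : 0 < x) :
    HasDerivAt (fun t => t * (Real.exp (2*t) + 1) / (Real.exp (2*t) - 1))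
      ((((Real.exp (2*x) + 1) + x * (2 * Real.exp (2*x))) * (Real.exp (2*x) - 1)
        - x * (Real.exp (2*x) + 1) * (2 * Real.exp (2*x))) / (Real.exp (2*x) - 1)^2) x := by
  have hE : 1 < Real.exp (2*x) := by
    rw [Real.one_lt_exp_iff]; positivity
  have hexp : HasDerivAt (fun t : ℝ => Real.exp (2*t)) (2 * Real.exp (2*x)) x := by
    have h1 : HasDerivAt (fun t : ℝ => 2*t) 2 x := by
      simpa using (hasDerivAt_id x).const_mul 2
    simpa [mul_comm] using h1.exp
  have hu : HasDerivAt (fun t : ℝ => t * (Real.exp (2*t) + 1))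
      ((Real.exp (2*x) + 1) + x * (2 * Real.exp (2*x))) x := by
    have := (hasDerivAt_id' x).mul (hexp.add_const 1)
    exact this.congr_deriv (by ring)
  have hv : HasDerivAt (fun t : ℝ => Real.exp (2*t) - 1) (2 * Real.exp (2*x)) x :=
    hexp.sub_const 1
  exact hu.div hv (by linarith)

lemma phi_strictMono : StrictMonoOn (fun t => t * (Real.exp (2*t) + 1) / (Real.exp (2*t) - 1))
    (Set.Ioi 0) := by
  apply strictMonoOn_of_deriv_pos (convex_Ioi 0)
  · intro x hx
    exact (phi_hasDerivAt x hx).differentiableAt.continuousAt.continuousWithinAt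
  · intro x hx
    rw [interior_Ioi] at hx
    have hx' : 0 < x := hx
    rw [(phi_hasDerivAt x hx').deriv]
    have hE : 1 < Real.exp (2*x) := by
      rw [Real.one_lt_exp_iff]; positivity
    have hsinh : 2*x < Real.sinh (2*x) := Real.self_lt_sinh_iff.mpr (by positivity)
    rw [Real.sinh_eq] at hsinh
    have hEn : Real.exp (-(2*x)) = 1 / Real.exp (2*x) := by
      rw [Real.exp_neg]; ring
    rw [hEn] at hsinh
    have h4 : 4*x < Real.exp (2*x) - 1/Real.exp (2*x) := by linarith
    have h5 := mul_lt_mul_of_pos_right h4 (Real.exp_pos (2*x))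
    have h6 : (1/Real.exp (2*x)) * Real.exp (2*x) = 1 := by
      field_simp
    apply div_pos
    · nlinarith [Real.exp_pos (2*x)]
    · exact pow_pos (by linarith) 2

/-- If `γ = -s(e^{2s}+1)/(e^{2s}-1) = -s_δ(e^{2s_δ(1+2δ)}+1)/(e^{2s_δ(1+2δ)}-1)` with
`s, s_δ, δ > 0`, then `s ≤ s_δ ≤ s(1 + 2/(e^{2s}-1)) ≤ s + 1`; in particular for
`s ≥ 1` and `0 < δ ≤ 1/2` one has `s ≤ s_δ ≤ 2s` and
`γ + s_δ = -2s_δ/(e^{2s_δ(1+2δ)}-1) ≤ -2se^{-8s}`. -/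
theorem sDelta_bounds
    (s δ sδ : ℝ) (hs : 0 < s) (hδ : 0 < δ) (hsδ : 0 < sδ)
    (heq : s * (Real.exp (2*s) + 1) / (Real.exp (2*s) - 1)
      = sδ * (Real.exp (2 * sδ * (1 + 2*δ)) + 1) / (Real.exp (2 * sδ * (1 + 2*δ)) - 1)) :
    s ≤ sδ ∧
    sδ ≤ s * (1 + 2 / (Real.exp (2*s) - 1)) ∧
    s * (1 + 2 / (Real.exp (2*s) - 1)) ≤ s + 1 ∧
    (1 ≤ s → δ ≤ 1/2 →
      sδ ≤ 2 * s ∧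
      -(s * (Real.exp (2*s) + 1) / (Real.exp (2*s) - 1)) + sδ
        = -(2 * sδ) / (Real.exp (2 * sδ * (1 + 2*δ)) - 1) ∧
      -(s * (Real.exp (2*s) + 1) / (Real.exp (2*s) - 1)) + sδ
        ≤ -(2 * s * Real.exp (-(8 * s)))) := by
  set E := Real.exp (2*s) with hEdef
  set F := Real.exp (2 * sδ * (1 + 2*δ)) with hFdef
  have hE : 1 < E := by rw [hEdef, Real.one_lt_exp_iff]; positivity
  have hF : 1 < F := by rw [hFdef, Real.one_lt_exp_iff]; positivity
  have hE1 : (0:ℝ) < E - 1 := by linarith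
  have hF1 : (0:ℝ) < F - 1 := by linarith
  -- s ≤ sδ
  have h1 : s ≤ sδ := by
    by_contra h
    push_neg at h
    set G := Real.exp (2*sδ) with hGdef
    have hG : 1 < G := by rw [hGdef, Real.one_lt_exp_iff]; positivity
    have hG1 : (0:ℝ) < G - 1 := by linarith
    have hGF : G ≤ F := by
      rw [hGdef, hFdef]
      apply Real.exp_le_exp.mpr
      nlinarith
    have hA : sδ * (F + 1) / (F - 1) ≤ sδ * (G + 1) / (G - 1) := by
      rw [div_le_div_iff₀ hF1 hG1]
      nlinarith [mul_le_mul_of_nonneg_left hGF hsδ.le]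
    have hB : sδ * (G + 1) / (G - 1) < s * (E + 1) / (E - 1) := by
      have := phi_strictMono (Set.mem_Ioi.mpr hsδ) (Set.mem_Ioi.mpr hs) h
      simpa [hGdef, hEdef] using this
    linarith [heq.le]
  -- the rewrite of s(1+2/(E-1))
  have hphi : s * (1 + 2 / (E - 1)) = s * (E + 1) / (E - 1) := by
    field_simp
    ring_nf
  have h2 : sδ ≤ s * (1 + 2 / (E - 1)) := by
    rw [hphi, heq]
    rw [le_div_iff₀ hF1]
    nlinarith
  have h2s : 2*s + 1 ≤ E := by
    have := Real.add_one_le_exp (2*s)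
    rw [← hEdef] at this
    linarith
  have h3 : s * (1 + 2 / (E - 1)) ≤ s + 1 := by
    rw [hphi, div_le_iff₀ hE1]
    nlinarith
  refine ⟨h1, h2, h3, fun hs1 hδ2 => ?_⟩
  have hE3 : (3:ℝ) ≤ E := by linarith
  have h4 : sδ ≤ 2 * s := by
    have hdiv : 2 / (E - 1) ≤ 1 := by
      rw [div_le_one hE1]; linarith
    nlinarith
  have heq2 : -(s * (E + 1) / (E - 1)) + sδ = -(2 * sδ) / (F - 1) := by
    rw [heq]
    field_simp
    ring
  refine ⟨h4, heq2, ?_⟩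
  rw [heq2]
  have hF8 : F ≤ Real.exp (8*s) := by
    rw [hFdef]
    apply Real.exp_le_exp.mpr
    nlinarith
  have key : 2 * s * Real.exp (-(8*s)) ≤ 2 * sδ / (F - 1) := by
    rw [Real.exp_neg, ← div_eq_mul_inv, div_le_div_iff₀ (Real.exp_pos _) hF1]
    nlinarith [Real.exp_pos (8*s)]
  rw [neg_div]
  linarith
end
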